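/- arXiv:2009.00287 — 10 statements merged into one kernel-verified Lean document; each statement's English description precedes it below -/
import Mathlib

section
/- For every integer n ≥ 3 and all integers a ≥ b ≥ 1, the cycle C_n is (a, b, a−b)-choosable; that is, every (a−b)-separating a-list assignment L of C_n admits an (L,b)-coloring. Consequently sep(C_n, a, b) ≥ a − b. -/
open SimpleGraph Finset

/-- An `(L,b)`-coloring of `G`: each vertex `v` receives a set `φ v ⊆ L v` with
`|φ v| = b`, and adjacent vertices receive disjoint sets. -/
def IsLbColoring {V : Type*} (G : SimpleGraph V) (L : V → Finset ℕ) (b : ℕ)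
    (φ : V → Finset ℕ) : Prop :=
  (∀ v, φ v ⊆ L v ∧ (φ v).card = b) ∧ ∀ u v, G.Adj u v → φ u ∩ φ v = ∅

/-- `G` is `(a,b,c)`-choosable: every `c`-separating `a`-list assignment admits an
`(L,b)`-coloring. -/
def Choosable {V : Type*} (G : SimpleGraph V) (a b c : ℕ) : Prop :=
  ∀ L : V → Finset ℕ, (∀ v, (L v).card = a) →
    (∀ u v, G.Adj u v → (L u ∩ L v).card ≤ c) →
    ∃ φ, IsLbColoring G L b φ

/-- `G` is `(a,b,c)`-free-choosable: for every `c`-separating `a`-list assignment,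
any precoloring of one vertex by a `b`-subset of its list extends to an `(L,b)`-coloring. -/
def FreeChoosable {V : Type*} (G : SimpleGraph V) (a b c : ℕ) : Prop :=
  ∀ L : V → Finset ℕ, (∀ v, (L v).card = a) →
    (∀ u v, G.Adj u v → (L u ∩ L v).card ≤ c) →
    ∀ (v₀ : V) (C : Finset ℕ), C ⊆ L v₀ → C.card = b →
      ∃ φ, IsLbColoring G L b φ ∧ φ v₀ = C

/-- The separation number `sep(G,a,b)`: the largest `c ≤ a` such that `G` is
`(a,b,c)`-choosable. -/
noncomputable def sep {V : Type*} (G : SimpleGraph V) (a b : ℕ) : ℕ :=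
  sSup {c | c ≤ a ∧ Choosable G a b c}

/-- The free-separation number `fsep(G,a,b)`: the largest `c ≤ a` such that `G` is
`(a,b,c)`-free-choosable. -/
noncomputable def fsep {V : Type*} (G : SimpleGraph V) (a b : ℕ) : ℕ :=
  sSup {c | c ≤ a ∧ FreeChoosable G a b c}

/-- Choose a `b`-element subset of `s` (if `s` is large enough; otherwise `s` itself). -/
noncomputable def pickSub (b : ℕ) (s : Finset ℕ) : Finset ℕ :=
  if h : b ≤ s.card then (Finset.exists_subset_card_eq h).choose else s

lemma pickSub_subset (b : ℕ) (s : Finset ℕ) : pickSub b s ⊆ s := by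
  unfold pickSub
  split
  · exact (Finset.exists_subset_card_eq ‹_›).choose_spec.1
  · exact subset_rfl

lemma pickSub_card {b : ℕ} {s : Finset ℕ} (h : b ≤ s.card) : (pickSub b s).card = b := by
  unfold pickSub
  rw [dif_pos h]
  exact (Finset.exists_subset_card_eq h).choose_spec.2

lemma sdiff_card_ge {a b : ℕ} {s t : Finset ℕ} (hs : s.card = a)
    (hst : (s ∩ t).card ≤ a - b) (hba : b ≤ a) : b ≤ (s \ t).card := by
  have := Finset.card_sdiff_add_card_inter s t
  omega

lemma cycle_choosable_aux (n a b : ℕ) (hn : 3 ≤ n) (hb : 1 ≤ b) (hba : b ≤ a) :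
    Choosable (cycleGraph n) a b (a - b) := by
  intro L hcard hsep
  -- lists as a function on ℕ
  set L' : ℕ → Finset ℕ := fun i => if h : i < n then L ⟨i, h⟩ else ∅ with hL'
  -- adjacency of consecutive vertices
  have hadj : ∀ i : ℕ, ∀ hi : i + 1 < n,
      (cycleGraph n).Adj ⟨i, by omega⟩ ⟨i + 1, hi⟩ := by
    intro i hi
    rw [cycleGraph_adj']
    right
    rw [Fin.sub_def]
    simp only
    have : n - i + (i + 1) = n + 1 := by omega
    rw [this, Nat.add_mod_left, Nat.mod_eq_of_lt (by omega)]
  have hadj' : (cycleGraph n).Adj ⟨n - 1, by omega⟩ ⟨0, by omega⟩ := by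
    rw [cycleGraph_adj']
    right
    rw [Fin.sub_def]
    simp only
    have : n - (n - 1) + 0 = 1 := by omega
    rw [this, Nat.mod_eq_of_lt (by omega)]
  -- the greedy choice
  set f : ℕ → Finset ℕ := fun i =>
    Nat.rec (pickSub b (L' 0 \ L' (n - 1)))
      (fun i prev => pickSub b (L' (i + 1) \ prev)) i with hf
  have hf0 : f 0 = pickSub b (L' 0 \ L' (n - 1)) := rfl
  have hfs : ∀ i, f (i + 1) = pickSub b (L' (i + 1) \ f i) := fun i => rfl
  have hL'card : ∀ i, i < n → (L' i).card = a := by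
    intro i hi
    simp only [hL', dif_pos hi]
    exact hcard _
  -- key invariant
  have key : ∀ i, i < n → f i ⊆ L' i ∧ (f i).card = b := by
    intro i
    induction i with
    | zero =>
      intro _
      have hsep0 : (L' 0 ∩ L' (n - 1)).card ≤ a - b := by
        simp only [hL', dif_pos (show 0 < n by omega), dif_pos (show n - 1 < n by omega)]
        have := hsep _ _ hadj'
        rwa [Finset.inter_comm] at this
      have hcard0 : b ≤ (L' 0 \ L' (n - 1)).card :=
        sdiff_card_ge (hL'card 0 (by omega)) hsep0 hba
      rw [hf0]
      exact ⟨(pickSub_subset _ _).trans sdiff_subset, pickSub_card hcard0⟩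
    | succ i ih =>
      intro hi
      obtain ⟨hsub, hcardi⟩ := ih (by omega)
      have hsepi : (L' (i + 1) ∩ L' i).card ≤ a - b := by
        simp only [hL', dif_pos hi, dif_pos (show i < n by omega)]
        have := hsep _ _ (hadj i hi)
        rwa [Finset.inter_comm] at this
      have hinter : (L' (i + 1) ∩ f i).card ≤ a - b :=
        le_trans (Finset.card_le_card (by gcongr)) hsepi
      have hcard1 : b ≤ (L' (i + 1) \ f i).card :=
        sdiff_card_ge (hL'card _ hi) hinter hba
      rw [hfs]
      exact ⟨(pickSub_subset _ _).trans sdiff_subset, pickSub_card hcard1⟩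
  -- disjointness facts
  have hdis : ∀ i, i + 1 < n → f (i + 1) ∩ f i = ∅ := by
    intro i hi
    rw [hfs]
    rw [Finset.eq_empty_iff_forall_notMem]
    intro x hx
    rw [Finset.mem_inter] at hx
    have := pickSub_subset b (L' (i + 1) \ f i) hx.1
    exact (Finset.mem_sdiff.mp this).2 hx.2
  have hdis0 : f 0 ∩ f (n - 1) = ∅ := by
    rw [Finset.eq_empty_iff_forall_notMem]
    intro x hx
    rw [Finset.mem_inter] at hx
    have h1 : x ∈ L' 0 \ L' (n - 1) := pickSub_subset _ _ (hf0 ▸ hx.1)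
    have h2 : x ∈ L' (n - 1) := (key (n - 1) (by omega)).1 hx.2
    exact (Finset.mem_sdiff.mp h1).2 h2
  refine ⟨fun v => f v.val, ⟨?_, ?_⟩⟩
  · intro v
    obtain ⟨h1, h2⟩ := key v.val v.isLt
    refine ⟨?_, h2⟩
    have : L' v.val = L v := by
      simp only [hL', dif_pos v.isLt]
    rwa [this] at h1
  · intro u v huv
    show f u.val ∩ f v.val = ∅
    rw [cycleGraph_adj'] at huv
    have hu := u.isLt
    have hv := v.isLt
    rcases huv with h | h
    · -- (u - v).val = 1
      rw [Fin.sub_def] at h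
      simp only at h
      -- (n - v.val + u.val) % n = 1
      have hvu : (v.val + 1) % n = u.val := by
        have h3 : v.val ≤ n := le_of_lt hv
        rcases Nat.lt_or_ge (v.val + 1) n with h4 | h4
        · rw [Nat.mod_eq_of_lt h4]
          -- n - v + u ≡ 1 [MOD n], with u, v < n
          rcases Nat.lt_or_ge (n - v.val + u.val) n with h5 | h5
          · rw [Nat.mod_eq_of_lt h5] at h; omega
          · have h6 : n - v.val + u.val - n < n := by omega
            rw [Nat.mod_eq_sub_mod h5, Nat.mod_eq_of_lt h6] at h
            omega
        · have hveq : v.val = n - 1 := by omega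
          have : (v.val + 1) % n = 0 := by
            rw [hveq]; have : n - 1 + 1 = n := by omega
            rw [this, Nat.mod_self]
          rw [this]
          -- here n - v = 1, so (1 + u) % n = 1, so u = 0
          rw [hveq] at h
          have h7 : n - (n - 1) = 1 := by omega
          rw [h7] at h
          rcases Nat.lt_or_ge (1 + u.val) n with h5 | h5
          · rw [Nat.mod_eq_of_lt h5] at h; omega
          · have h6 : 1 + u.val - n < n := by omega
            rw [Nat.mod_eq_sub_mod h5, Nat.mod_eq_of_lt h6] at h
            omega
      -- u = v + 1 (mod n): either u.val = v.val + 1, or v.val = n-1, u.val = 0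
      rcases Nat.lt_or_ge (v.val + 1) n with h4 | h4
      · rw [Nat.mod_eq_of_lt h4] at hvu
        rw [← hvu]
        exact hdis v.val (hvu ▸ h4)
      · have hveq : v.val = n - 1 := by omega
        have hueq : u.val = 0 := by
          rw [hveq] at hvu
          have h8 : n - 1 + 1 = n := by omega
          rw [h8, Nat.mod_self] at hvu
          omega
        rw [hueq, hveq]
        exact hdis0
    · -- (v - u).val = 1, symmetric
      rw [Fin.sub_def] at h
      simp only at h
      rw [Finset.inter_comm]
      have hvu : (u.val + 1) % n = v.val := by
        rcases Nat.lt_or_ge (u.val + 1) n with h4 | h4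
        · rw [Nat.mod_eq_of_lt h4]
          rcases Nat.lt_or_ge (n - u.val + v.val) n with h5 | h5
          · rw [Nat.mod_eq_of_lt h5] at h; omega
          · have h6 : n - u.val + v.val - n < n := by omega
            rw [Nat.mod_eq_sub_mod h5, Nat.mod_eq_of_lt h6] at h
            omega
        · have hueq : u.val = n - 1 := by omega
          have : (u.val + 1) % n = 0 := by
            rw [hueq]; have : n - 1 + 1 = n := by omega
            rw [this, Nat.mod_self]
          rw [this]
          rw [hueq] at h
          have h7 : n - (n - 1) = 1 := by omega
          rw [h7] at h
          rcases Nat.lt_or_ge (1 + v.val) n with h5 | h5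
          · rw [Nat.mod_eq_of_lt h5] at h; omega
          · have h6 : 1 + v.val - n < n := by omega
            rw [Nat.mod_eq_sub_mod h5, Nat.mod_eq_of_lt h6] at h
            omega
      rcases Nat.lt_or_ge (u.val + 1) n with h4 | h4
      · rw [Nat.mod_eq_of_lt h4] at hvu
        rw [← hvu]
        exact hdis u.val (hvu ▸ h4)
      · have hueq : u.val = n - 1 := by omega
        have hveq : v.val = 0 := by
          rw [hueq] at hvu
          have h8 : n - 1 + 1 = n := by omega
          rw [h8, Nat.mod_self] at hvu
          omega
        rw [hueq, hveq]
        exact hdis0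

theorem cycle_choosable_a_sub_b (n a b : ℕ) (hn : 3 ≤ n) (hb : 1 ≤ b) (hba : b ≤ a) :
    Choosable (cycleGraph n) a b (a - b) ∧ a - b ≤ sep (cycleGraph n) a b := by
  have hch := cycle_choosable_aux n a b hn hb hba
  refine ⟨hch, ?_⟩
  apply le_csSup
  · exact ⟨a, fun c hc => hc.1⟩
  · exact ⟨Nat.sub_le a b, hch⟩
end

section
/- For every integer n ≥ 3, every b ≥ 1 and every k with 0 ≤ k < b, the cycle C_n is not (b+k, b, k+1)-choosable: there exists a (k+1)-separating (b+k)-list assignment L of C_n admitting no (L,b)-coloring. Consequently sep(C_n, b+k, b) ≤ k. -/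
open SimpleGraph Finset

namespace CycleSepAux

open Finset

def Tb (k i : ℕ) : Finset ℕ := (Finset.range k).image fun j => Nat.pair i j + 1

def Pb (k p i : ℕ) : Finset ℕ := (Finset.range p).image fun j => Nat.pair i (k + j) + 1

lemma mem_Tb {k i x : ℕ} : x ∈ Tb k i ↔ ∃ j < k, Nat.pair i j + 1 = x := by simp [Tb]

lemma mem_Pb {k p i x : ℕ} : x ∈ Pb k p i ↔ ∃ j < p, Nat.pair i (k + j) + 1 = x := by simp [Pb]

lemma Tb_ne_zero {k i x : ℕ} (h : x ∈ Tb k i) : x ≠ 0 := by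
  obtain ⟨j, -, rfl⟩ := mem_Tb.1 h; omega

lemma Pb_ne_zero {k p i x : ℕ} (h : x ∈ Pb k p i) : x ≠ 0 := by
  obtain ⟨j, -, rfl⟩ := mem_Pb.1 h; omega

lemma Tb_eq_of_mem {k i i' x : ℕ} (h : x ∈ Tb k i) (h' : x ∈ Tb k i') : i = i' := by
  obtain ⟨j, hj, rfl⟩ := mem_Tb.1 h
  obtain ⟨j', hj', hx⟩ := mem_Tb.1 h'
  have he : Nat.pair i' j' = Nat.pair i j := by omega
  exact (Nat.pair_eq_pair.1 he).1.symm

lemma notMem_Pb_of_mem_Tb {k p i i' x : ℕ} (h : x ∈ Tb k i) : x ∉ Pb k p i' := by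
  intro h'
  obtain ⟨j, hj, rfl⟩ := mem_Tb.1 h
  obtain ⟨j', hj', hx⟩ := mem_Pb.1 h'
  have he : Nat.pair i' (k + j') = Nat.pair i j := by omega
  have := (Nat.pair_eq_pair.1 he).2
  omega

lemma Pb_eq_of_mem {k p i i' x : ℕ} (h : x ∈ Pb k p i) (h' : x ∈ Pb k p i') : i = i' := by
  obtain ⟨j, hj, rfl⟩ := mem_Pb.1 h
  obtain ⟨j', hj', hx⟩ := mem_Pb.1 h'
  have he : Nat.pair i' (k + j') = Nat.pair i (k + j) := by omega
  exact (Nat.pair_eq_pair.1 he).1.symm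

lemma card_Tb (k i : ℕ) : (Tb k i).card = k := by
  have hinj : Function.Injective fun j => Nat.pair i j + 1 := by
    intro a a' h
    simp only at h
    have he : Nat.pair i a = Nat.pair i a' := by omega
    exact (Nat.pair_eq_pair.1 he).2
  rw [Tb, Finset.card_image_of_injective _ hinj, Finset.card_range]

lemma card_Pb (k p i : ℕ) : (Pb k p i).card = p := by
  have hinj : Function.Injective fun j => Nat.pair i (k + j) + 1 := by
    intro a a' h
    simp only at h
    have he : Nat.pair i (k + a) = Nat.pair i (k + a') := by omega
    have := (Nat.pair_eq_pair.1 he).2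
    omega
  rw [Pb, Finset.card_image_of_injective _ hinj, Finset.card_range]

lemma cycle_aux (m b k : ℕ) (hk : k < b) :
    ¬ Choosable (SimpleGraph.cycleGraph (m + 3)) (b + k) b (k + 1) := by
  classical
  intro hch
  set p := b - k - 1 with hp
  have v1 : (1 : Fin (m + 3)).val = 1 := Fin.val_one _
  have hone : (1 : Fin (m + 3)) ≠ 0 := by
    intro h
    have := congrArg Fin.val h
    rw [v1, Fin.val_zero] at this
    omega
  have htwo : (1 : Fin (m + 3)) + 1 ≠ 0 := by
    intro h
    have h2 : ((1 : Fin (m + 3)) + 1).val = 0 := by rw [h, Fin.val_zero]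
    rw [Fin.val_add, v1, Nat.mod_eq_of_lt (by omega)] at h2
    omega
  have hadj : ∀ u : Fin (m + 3), (SimpleGraph.cycleGraph (m + 3)).Adj u (u + 1) := by
    intro u
    rw [SimpleGraph.cycleGraph_adj']
    right
    rw [add_sub_cancel_left, v1]
  have hadjc : ∀ u v : Fin (m + 3), (SimpleGraph.cycleGraph (m + 3)).Adj u v →
      u = v + 1 ∨ v = u + 1 := by
    intro u v h
    rw [SimpleGraph.cycleGraph_adj'] at h
    rcases h with h | h
    · left
      have he : u - v = 1 := Fin.ext (by rw [v1]; exact h)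
      have h3 := sub_eq_iff_eq_add.mp he
      rw [add_comm 1 v] at h3
      exact h3
    · right
      have he : v - u = 1 := Fin.ext (by rw [v1]; exact h)
      have h3 := sub_eq_iff_eq_add.mp he
      rw [add_comm 1 u] at h3
      exact h3
  have hd1 : ∀ u : Fin (m + 3), (u - 1).val ≠ u.val := by
    intro u h
    exact hone (sub_eq_self.mp (Fin.ext h : u - 1 = u))
  have hd2 : ∀ u : Fin (m + 3), u.val ≠ (u + 1).val := by
    intro u h
    exact hone (left_eq_add.mp (Fin.ext h : u = u + 1))
  have hd3 : ∀ u : Fin (m + 3), (u - 1).val ≠ (u + 1).val := by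
    intro u h
    have h' : u - 1 = u + 1 := Fin.ext h
    have h2 : u = u + 1 + 1 := by rw [← h', sub_add_cancel]
    rw [add_assoc] at h2
    exact htwo (left_eq_add.mp h2)
  set S : Fin (m + 3) → Finset ℕ := fun i => insert 0 (Tb k i.val) with hS
  set P : Fin (m + 3) → Finset ℕ := fun i => Pb k p i.val with hP
  set L : Fin (m + 3) → Finset ℕ := fun i => (S (i - 1) ∪ S i) ∪ P i with hL
  have disjTT : ∀ u v : Fin (m + 3), u.val ≠ v.val → Disjoint (Tb k u.val) (Tb k v.val) := by
    intro u v h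
    rw [Finset.disjoint_left]
    intro x hx hx'
    exact h (Tb_eq_of_mem hx hx')
  have disjTP : ∀ i i' : ℕ, Disjoint (Tb k i) (Pb k p i') := by
    intro i i'
    rw [Finset.disjoint_left]
    intro x hx hx'
    exact notMem_Pb_of_mem_Tb hx hx'
  have hcardL : ∀ i, (L i).card = b + k := by
    intro i
    have h0 : (0 : ℕ) ∉ (Tb k (i - 1).val ∪ Tb k i.val) ∪ Pb k p i.val := by
      intro h
      rcases Finset.mem_union.1 h with h | h
      · rcases Finset.mem_union.1 h with h | h
        · exact Tb_ne_zero h rfl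
        · exact Tb_ne_zero h rfl
      · exact Pb_ne_zero h rfl
    have e : L i = insert 0 ((Tb k (i - 1).val ∪ Tb k i.val) ∪ Pb k p i.val) := by
      simp only [hL, hS, hP]
      ext x
      simp only [Finset.mem_union, Finset.mem_insert]
      tauto
    rw [e, Finset.card_insert_of_notMem h0,
      Finset.card_union_of_disjoint (Finset.disjoint_union_left.mpr ⟨disjTP _ _, disjTP _ _⟩),
      Finset.card_union_of_disjoint (disjTT _ _ (hd1 i)), card_Tb, card_Tb, card_Pb]
    omega
  have hsub1 : ∀ u : Fin (m + 3), L u ∩ L (u + 1) ⊆ S u := by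
    intro u x hx
    obtain ⟨h1, h2⟩ := Finset.mem_inter.1 hx
    simp only [hL, hS, hP] at h1 h2
    rw [add_sub_cancel_right] at h2
    simp only [hS, Finset.mem_insert]
    by_cases hx0 : x = 0
    · exact Or.inl hx0
    have h1' : x ∈ Tb k (u - 1).val ∨ x ∈ Tb k u.val ∨ x ∈ Pb k p u.val := by
      rcases Finset.mem_union.1 h1 with h | h
      · rcases Finset.mem_union.1 h with h | h
        · rcases Finset.mem_insert.1 h with h | h
          · exact absurd h hx0
          · exact Or.inl h
        · rcases Finset.mem_insert.1 h with h | h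
          · exact absurd h hx0
          · exact Or.inr (Or.inl h)
      · exact Or.inr (Or.inr h)
    have h2' : x ∈ Tb k u.val ∨ x ∈ Tb k (u + 1).val ∨ x ∈ Pb k p (u + 1).val := by
      rcases Finset.mem_union.1 h2 with h | h
      · rcases Finset.mem_union.1 h with h | h
        · rcases Finset.mem_insert.1 h with h | h
          · exact absurd h hx0
          · exact Or.inl h
        · rcases Finset.mem_insert.1 h with h | h
          · exact absurd h hx0
          · exact Or.inr (Or.inl h)
      · exact Or.inr (Or.inr h)
    rcases h1' with h | h | h
    · rcases h2' with g | g | g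
      · exact absurd (Tb_eq_of_mem h g) (hd1 u)
      · exact absurd (Tb_eq_of_mem h g) (hd3 u)
      · exact absurd g (notMem_Pb_of_mem_Tb h)
    · exact Or.inr h
    · rcases h2' with g | g | g
      · exact absurd h (notMem_Pb_of_mem_Tb g)
      · exact absurd h (notMem_Pb_of_mem_Tb g)
      · exact absurd (Pb_eq_of_mem h g) (hd2 u)
  have hsepL : ∀ u v, (SimpleGraph.cycleGraph (m + 3)).Adj u v → (L u ∩ L v).card ≤ k + 1 := by
    have key : ∀ u, (L u ∩ L (u + 1)).card ≤ k + 1 := by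
      intro u
      refine le_trans (Finset.card_le_card (hsub1 u)) ?_
      simp only [hS]
      refine le_trans (Finset.card_insert_le _ _) ?_
      rw [card_Tb]
    intro u v h
    rcases hadjc u v h with h' | h'
    · subst h'
      rw [Finset.inter_comm]
      exact key v
    · subst h'
      exact key u
  obtain ⟨φ, hmem, hdisj⟩ := hch L hcardL hsepL
  set c : Fin (m + 3) → ℕ := fun i => (φ i ∩ ({0} : Finset ℕ)).card with hc
  have hceq : ∀ j, c j = (φ j ∩ ({0} : Finset ℕ)).card := fun _ => rfl
  have hcle : ∀ i, c i ≤ 1 := by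
    intro i
    rw [hceq]
    exact le_trans (Finset.card_le_card Finset.inter_subset_right) (by simp)
  have hA : ∀ i, k + 1 + c i ≤ (φ i ∩ S (i - 1)).card + (φ i ∩ S i).card := by
    intro i
    have hcu := Finset.card_union_add_card_inter (φ i ∩ S (i - 1)) (φ i ∩ S i)
    rw [← Finset.inter_union_distrib_left] at hcu
    have h2 : c i ≤ ((φ i ∩ S (i - 1)) ∩ (φ i ∩ S i)).card := by
      rw [hceq]
      apply Finset.card_le_card
      intro x hx
      obtain ⟨hx1, hx2⟩ := Finset.mem_inter.1 hx
      rw [Finset.mem_singleton] at hx2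
      subst hx2
      refine Finset.mem_inter.2 ⟨Finset.mem_inter.2 ⟨hx1, ?_⟩, Finset.mem_inter.2 ⟨hx1, ?_⟩⟩ <;>
        · simp only [hS]
          exact Finset.mem_insert_self _ _
    have h1 : k + 1 ≤ (φ i ∩ (S (i - 1) ∪ S i)).card := by
      have hsubL : φ i ⊆ L i := (hmem i).1
      have hsplit : φ i ⊆ (φ i ∩ (S (i - 1) ∪ S i)) ∪ (φ i ∩ P i) := by
        intro x hx
        have hxL := hsubL hx
        simp only [hL] at hxL
        rcases Finset.mem_union.1 hxL with h | h
        · exact Finset.mem_union_left _ (Finset.mem_inter.2 ⟨hx, h⟩)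
        · exact Finset.mem_union_right _ (Finset.mem_inter.2 ⟨hx, h⟩)
      have hble : b ≤ (φ i ∩ (S (i - 1) ∪ S i)).card + (φ i ∩ P i).card := by
        calc b = (φ i).card := ((hmem i).2).symm
          _ ≤ ((φ i ∩ (S (i - 1) ∪ S i)) ∪ (φ i ∩ P i)).card := Finset.card_le_card hsplit
          _ ≤ _ := Finset.card_union_le _ _
      have hPle : (φ i ∩ P i).card ≤ p := by
        simp only [hP]
        exact le_trans (Finset.card_le_card Finset.inter_subset_right)
          (le_of_eq (card_Pb _ _ _))
      omega
    omega
  have hB : ∀ i : Fin (m + 3),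
      (φ i ∩ S i).card + (φ (i + 1) ∩ S i).card ≤ k + c i + c (i + 1) := by
    intro i
    have hdj : Disjoint (φ i ∩ S i) (φ (i + 1) ∩ S i) := by
      rw [Finset.disjoint_left]
      intro x hx hx'
      have hmm : x ∈ φ i ∩ φ (i + 1) :=
        Finset.mem_inter.2 ⟨(Finset.mem_inter.1 hx).1, (Finset.mem_inter.1 hx').1⟩
      rw [hdisj i (i + 1) (hadj i)] at hmm
      exact Finset.notMem_empty x hmm
    rw [← Finset.card_union_of_disjoint hdj]
    by_cases h0 : (0 : ℕ) ∈ φ i ∨ (0 : ℕ) ∈ φ (i + 1)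
    · have hU : (φ i ∩ S i) ∪ (φ (i + 1) ∩ S i) ⊆ S i :=
        Finset.union_subset Finset.inter_subset_right Finset.inter_subset_right
      have hle : ((φ i ∩ S i) ∪ (φ (i + 1) ∩ S i)).card ≤ k + 1 := by
        refine le_trans (Finset.card_le_card hU) ?_
        simp only [hS]
        refine le_trans (Finset.card_insert_le _ _) ?_
        rw [card_Tb]
      have hc1 : 1 ≤ c i + c (i + 1) := by
        rcases h0 with h | h
        · have hm : (0 : ℕ) ∈ φ i ∩ ({0} : Finset ℕ) :=
            Finset.mem_inter.2 ⟨h, Finset.mem_singleton_self 0⟩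
          have := Finset.card_pos.2 ⟨0, hm⟩
          rw [hceq i, hceq (i + 1)]
          omega
        · have hm : (0 : ℕ) ∈ φ (i + 1) ∩ ({0} : Finset ℕ) :=
            Finset.mem_inter.2 ⟨h, Finset.mem_singleton_self 0⟩
          have := Finset.card_pos.2 ⟨0, hm⟩
          rw [hceq i, hceq (i + 1)]
          omega
      omega
    · push_neg at h0
      have hU : (φ i ∩ S i) ∪ (φ (i + 1) ∩ S i) ⊆ Tb k i.val := by
        intro x hx
        rcases Finset.mem_union.1 hx with h | h
        · obtain ⟨ha, hb2⟩ := Finset.mem_inter.1 h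
          simp only [hS, Finset.mem_insert] at hb2
          rcases hb2 with rfl | hb2
          · exact absurd ha h0.1
          · exact hb2
        · obtain ⟨ha, hb2⟩ := Finset.mem_inter.1 h
          simp only [hS, Finset.mem_insert] at hb2
          rcases hb2 with rfl | hb2
          · exact absurd ha h0.2
          · exact hb2
      have hle := le_trans (Finset.card_le_card hU) (le_of_eq (card_Tb k i.val))
      omega
  -- sums
  have hsum1 : ∑ i : Fin (m + 3), (φ i ∩ S (i - 1)).card
      = ∑ i : Fin (m + 3), (φ (i + 1) ∩ S i).card := by
    have he := Equiv.sum_comp (Equiv.subRight (1 : Fin (m + 3)))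
      (fun j => (φ (j + 1) ∩ S j).card)
    simp only [Equiv.subRight_apply] at he
    rw [← he]
    apply Finset.sum_congr rfl
    intro i _
    rw [sub_add_cancel]
  have efg : ∑ i : Fin (m + 3), c (i + 1) = ∑ i : Fin (m + 3), c i := by
    have he := Equiv.sum_comp (Equiv.addRight (1 : Fin (m + 3))) c
    simpa using he
  have big1 : ∑ i : Fin (m + 3), (k + 1 + c i)
      ≤ ∑ i : Fin (m + 3), ((φ i ∩ S (i - 1)).card + (φ i ∩ S i).card) :=
    Finset.sum_le_sum fun i _ => hA i
  have big2 : ∑ i : Fin (m + 3), ((φ i ∩ S i).card + (φ (i + 1) ∩ S i).card)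
      ≤ ∑ i : Fin (m + 3), (k + c i + c (i + 1)) :=
    Finset.sum_le_sum fun i _ => hB i
  have econst : ∑ _i : Fin (m + 3), (1 : ℕ) = m + 3 := by
    rw [Finset.sum_const, Finset.card_univ, Fintype.card_fin, smul_eq_mul, mul_one]
  have eA : ∑ i : Fin (m + 3), ((φ i ∩ S (i - 1)).card + (φ i ∩ S i).card)
      = (∑ i : Fin (m + 3), (φ (i + 1) ∩ S i).card) + ∑ i : Fin (m + 3), (φ i ∩ S i).card := by
    rw [Finset.sum_add_distrib, hsum1]
  have eB : ∑ i : Fin (m + 3), ((φ i ∩ S i).card + (φ (i + 1) ∩ S i).card)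
      = (∑ i : Fin (m + 3), (φ i ∩ S i).card) + ∑ i : Fin (m + 3), (φ (i + 1) ∩ S i).card :=
    Finset.sum_add_distrib
  have eC : ∑ i : Fin (m + 3), (k + 1 + c i)
      = (∑ _i : Fin (m + 3), k) + (m + 3) + ∑ i : Fin (m + 3), c i := by
    rw [Finset.sum_add_distrib, Finset.sum_add_distrib, econst]
  have eD : ∑ i : Fin (m + 3), (k + c i + c (i + 1))
      = (∑ _i : Fin (m + 3), k) + (∑ i : Fin (m + 3), c i) + ∑ i : Fin (m + 3), c i := by
    rw [Finset.sum_add_distrib, Finset.sum_add_distrib, efg]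
  rw [eC, eA] at big1
  rw [eB, eD] at big2
  have hn3 : m + 3 ≤ ∑ i : Fin (m + 3), c i := by omega
  have hallc : ∀ j : Fin (m + 3), c j = 1 := by
    by_contra hcon
    push_neg at hcon
    obtain ⟨j, hj⟩ := hcon
    have hj0 : c j = 0 := by have := hcle j; omega
    have hsplit : ∑ x : Fin (m + 3), c x = c j + ∑ x ∈ Finset.univ.erase j, c x :=
      (Finset.add_sum_erase Finset.univ c (Finset.mem_univ j)).symm
    have hb2 : ∑ x ∈ Finset.univ.erase j, c x ≤ m + 3 - 1 := by
      have h := Finset.sum_le_card_nsmul (Finset.univ.erase j) c 1 fun x _ => hcle x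
      rwa [smul_eq_mul, mul_one, Finset.card_erase_of_mem (Finset.mem_univ j),
        Finset.card_univ, Fintype.card_fin] at h
    omega
  have h0mem : ∀ j : Fin (m + 3), (0 : ℕ) ∈ φ j := by
    intro j
    have h1 := hallc j
    rw [hceq] at h1
    have hne : (φ j ∩ ({0} : Finset ℕ)).Nonempty := Finset.card_pos.1 (by omega)
    obtain ⟨x, hx⟩ := hne
    obtain ⟨hx1, hx2⟩ := Finset.mem_inter.1 hx
    rw [Finset.mem_singleton] at hx2
    subst hx2
    exact hx1
  have hadj01 := hadj 0
  rw [zero_add] at hadj01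
  have hdempty := hdisj 0 1 hadj01
  have hfin : (0 : ℕ) ∈ φ 0 ∩ φ 1 := Finset.mem_inter.2 ⟨h0mem 0, h0mem 1⟩
  rw [hdempty] at hfin
  exact Finset.notMem_empty _ hfin

end CycleSepAux

theorem cycle_not_choosable (n b k : ℕ) (hn : 3 ≤ n) (hb : 1 ≤ b) (hk : k < b) :
    ¬ Choosable (cycleGraph n) (b + k) b (k + 1) ∧
      sep (cycleGraph n) (b + k) b ≤ k := by
  obtain ⟨m, rfl⟩ : ∃ m, n = m + 3 := ⟨n - 3, by omega⟩
  have hnc := CycleSepAux.cycle_aux m b k hk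
  refine ⟨hnc, ?_⟩
  apply csSup_le'
  rintro x ⟨hxa, hxc⟩
  by_contra hxk
  push_neg at hxk
  exact hnc fun L hL hs => hxc L hL fun u v ha => le_trans (hs u v ha) (by omega)
end

section
/- For all integers n ≥ 3, k ≥ 1, b ≥ 1 and a ≥ c ≥ 0: if the cycle C_n is (a,b,c)-choosable, then C_n is (a+2k, b+k, c+k)-choosable. -/
open SimpleGraph Finset

theorem cycle_choosable_lift (n a b c k : ℕ) (hn : 3 ≤ n) (hk : 1 ≤ k) (hb : 1 ≤ b)
    (hca : c ≤ a) (h : Choosable (cycleGraph n) a b c) :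
    Choosable (cycleGraph n) (a + 2 * k) (b + k) (c + k) := by
  intro L hLc hLs
  haveI : NeZero n := ⟨by omega⟩
  have hone : (1 : Fin n).val = 1 := by
    rw [Fin.val_one']; exact Nat.mod_eq_of_lt (by omega)
  have hadj : ∀ i : Fin n, (cycleGraph n).Adj i (i + 1) := by
    intro i
    rw [cycleGraph_adj']
    right
    rw [add_sub_cancel_left]
    exact hone
  have adjCases : ∀ u v : Fin n, (cycleGraph n).Adj u v → v = u + 1 ∨ u = v + 1 := by
    intro u v huv
    rw [cycleGraph_adj'] at huv
    rcases huv with h1 | h1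
    · right
      have h2 : u - v = 1 := Fin.ext (by rw [hone]; exact h1)
      rw [sub_eq_iff_eq_add] at h2
      exact h2.trans (add_comm 1 v)
    · left
      have h2 : v - u = 1 := Fin.ext (by rw [hone]; exact h1)
      rw [sub_eq_iff_eq_add] at h2
      exact h2.trans (add_comm 1 u)
  have hI : ∀ i : Fin n, (L i ∩ L (i + 1)).card ≤ c + k := fun i => hLs i (i + 1) (hadj i)
  -- reserve sets `P i ⊆ L i \ L (i+1)` of size `k`
  have hPex : ∀ i : Fin n, ∃ P ⊆ L i \ L (i + 1), P.card = k := by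
    intro i
    refine Finset.exists_subset_card_eq ?_
    have h1 : (L i \ L (i + 1)).card = (L i).card - (L i ∩ L (i + 1)).card := by
      rw [← Finset.sdiff_inter_self_left (L i) (L (i+1)),
        Finset.card_sdiff_of_subset Finset.inter_subset_left]
    rw [h1, hLc i]
    have := hI i
    omega
  choose P hPsub hPcard using hPex
  have hPL : ∀ i : Fin n, P i ⊆ L i := fun i => (hPsub i).trans Finset.sdiff_subset
  have hPnot : ∀ i : Fin n, ∀ x ∈ P i, x ∉ L (i + 1) := by
    intro i x hx
    exact (Finset.mem_sdiff.mp (hPsub i hx)).2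
  -- covering sets `Q i` eating the excess of each edge intersection
  have hQex : ∀ i : Fin n, ∃ Q ⊆ (L i ∩ L (i + 1)) \ P (i + 1),
      Q.card = ((L i ∩ L (i + 1)) \ P (i + 1)).card - c :=
    fun i => Finset.exists_subset_card_eq (Nat.sub_le _ _)
  choose Q hQsub hQcard using hQex
  -- deleted sets
  set D : Fin n → Finset ℕ := fun i => P i ∪ (P (i + 1) ∩ L i) ∪ Q i with hD
  have hcardIP : ∀ i : Fin n,
      ((L i ∩ L (i+1)) ∩ P (i+1)).card = (P (i+1) ∩ L i).card := by
    intro i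
    congr 1
    ext x
    simp only [Finset.mem_inter]
    constructor
    · rintro ⟨⟨h1, _⟩, h3⟩; exact ⟨h3, h1⟩
    · rintro ⟨h1, h2⟩; exact ⟨⟨h2, hPL (i+1) h1⟩, h1⟩
  have hJcard : ∀ i : Fin n,
      ((L i ∩ L (i+1)) \ P (i+1)).card
        = (L i ∩ L (i+1)).card - (P (i+1) ∩ L i).card := by
    intro i
    have h1 := Finset.card_inter_add_card_sdiff (L i ∩ L (i+1)) (P (i+1))
    rw [hcardIP i] at h1
    omega
  have hHle : ∀ i : Fin n, (P (i+1) ∩ L i).card ≤ k := by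
    intro i
    calc (P (i+1) ∩ L i).card ≤ (P (i+1)).card :=
          Finset.card_le_card Finset.inter_subset_left
      _ = k := hPcard (i+1)
  have hDcard : ∀ i : Fin n, (D i).card ≤ 2 * k := by
    intro i
    have h1 : (D i).card ≤ (P i).card + (P (i+1) ∩ L i).card + (Q i).card := by
      calc (D i).card ≤ (P i ∪ (P (i+1) ∩ L i)).card + (Q i).card :=
            Finset.card_union_le _ _
        _ ≤ (P i).card + (P (i+1) ∩ L i).card + (Q i).card :=
            Nat.add_le_add_right (Finset.card_union_le _ _) _
    rw [hPcard i, hQcard i, hJcard i] at h1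
    have h2 := hHle i
    have h3 := hI i
    omega
  -- reduced lists of size `a`
  have hL'ex : ∀ i : Fin n, ∃ L' ⊆ L i \ D i, L'.card = a := by
    intro i
    refine Finset.exists_subset_card_eq ?_
    have h1 := Finset.le_card_sdiff (D i) (L i)
    rw [hLc i] at h1
    have := hDcard i
    omega
  choose L' hL'sub hL'card using hL'ex
  have hsep' : ∀ i : Fin n, (L' i ∩ L' (i+1)).card ≤ c := by
    intro i
    have hsub : L' i ∩ L' (i+1) ⊆ ((L i ∩ L (i+1)) \ P (i+1)) \ Q i := by
      intro x hx
      rcases Finset.mem_inter.mp hx with ⟨hx1, hx2⟩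
      have hx1' := Finset.mem_sdiff.mp (hL'sub i hx1)
      have hx2' := Finset.mem_sdiff.mp (hL'sub (i+1) hx2)
      refine Finset.mem_sdiff.mpr ⟨Finset.mem_sdiff.mpr
        ⟨Finset.mem_inter.mpr ⟨hx1'.1, hx2'.1⟩, ?_⟩, ?_⟩
      · intro hxP
        exact hx2'.2 (Finset.mem_union.mpr (Or.inl (Finset.mem_union.mpr (Or.inl hxP))))
      · intro hxQ
        exact hx1'.2 (Finset.mem_union.mpr (Or.inr hxQ))
    have h1 : (L' i ∩ L' (i+1)).card ≤ (((L i ∩ L (i+1)) \ P (i+1)) \ Q i).card :=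
      Finset.card_le_card hsub
    have h2 : (((L i ∩ L (i+1)) \ P (i+1)) \ Q i).card
        = ((L i ∩ L (i+1)) \ P (i+1)).card - (Q i).card :=
      Finset.card_sdiff_of_subset (hQsub i)
    rw [h2, hQcard i] at h1
    omega
  have hsepfull : ∀ u v : Fin n, (cycleGraph n).Adj u v → (L' u ∩ L' v).card ≤ c := by
    intro u v huv
    rcases adjCases u v huv with rfl | rfl
    · exact hsep' u
    · rw [Finset.inter_comm]; exact hsep' v
  obtain ⟨φ, hφ⟩ := h L' hL'card hsepfull
  refine ⟨fun i => φ i ∪ P i, ?_, ?_⟩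
  · intro v
    have hφv := hφ.1 v
    have hφL : φ v ⊆ L v \ D v := hφv.1.trans (hL'sub v)
    constructor
    · exact Finset.union_subset (hφL.trans Finset.sdiff_subset) (hPL v)
    · rw [Finset.card_union_of_disjoint, hφv.2, hPcard v]
      refine Finset.disjoint_left.mpr ?_
      intro x hx hxP
      exact (Finset.mem_sdiff.mp (hφL hx)).2
        (Finset.mem_union.mpr (Or.inl (Finset.mem_union.mpr (Or.inl hxP))))
  · have key : ∀ i : Fin n, (φ i ∪ P i) ∩ (φ (i+1) ∪ P (i+1)) = ∅ := by
      intro i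
      rw [Finset.eq_empty_iff_forall_notMem]
      intro x hx
      rcases Finset.mem_inter.mp hx with ⟨hx1, hx2⟩
      have hφi : φ i ⊆ L i \ D i := (hφ.1 i).1.trans (hL'sub i)
      have hφi1 : φ (i+1) ⊆ L (i+1) \ D (i+1) := (hφ.1 (i+1)).1.trans (hL'sub (i+1))
      rcases Finset.mem_union.mp hx1 with h1 | h1
      · rcases Finset.mem_union.mp hx2 with h2 | h2
        · have h3 := hφ.2 i (i+1) (hadj i)
          exact Finset.eq_empty_iff_forall_notMem.mp h3 x (Finset.mem_inter.mpr ⟨h1, h2⟩)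
        · have hxL : x ∈ L i := (Finset.mem_sdiff.mp (hφi h1)).1
          exact (Finset.mem_sdiff.mp (hφi h1)).2
            (Finset.mem_union.mpr (Or.inl (Finset.mem_union.mpr
              (Or.inr (Finset.mem_inter.mpr ⟨h2, hxL⟩)))))
      · have hxnot : x ∉ L (i+1) := hPnot i x h1
        rcases Finset.mem_union.mp hx2 with h2 | h2
        · exact hxnot (Finset.mem_sdiff.mp (hφi1 h2)).1
        · exact hxnot (hPL (i+1) h2)
    intro u v huv
    rcases adjCases u v huv with rfl | rfl
    · exact key u
    · rw [Finset.inter_comm]; exact key v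
end

section
/- For all integers p ≥ 1 and a ≥ b ≥ 1, the separation number of the even cycle C_{2p+2} is: sep(C_{2p+2}, a, b) = a − b if b ≤ a < 2b, and sep(C_{2p+2}, a, b) = a if a ≥ 2b. -/
open SimpleGraph Finset

/-!
Orient the cycle by `i ↦ i + 1`. If neighbouring lists share at most `a - b` colours, every
vertex `i` can simply take `b` colours of `L i \ L (i + 1)`. If `a ≥ 2b`, the separation does not
matter: every subset of an even cycle has a kernel for this orientation, so colours can be handed
out one at a time to kernels (Galvin's kernel method).

For `a < 2b`, give vertex `i` the colour `0`, `b - 1` colours of a block `i` and `a - b` colours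
of the block `i + 1`. Every colour other than `0` then lies only in the lists of two neighbours,
so a colouring uses it at most once; there are only `n (b - 1)` such colours, whereas the `n`
vertices need `n b` colours and at most `n - 1` of them can use `0`.
-/

section General

variable {V : Type*} {G : SimpleGraph V} {a b c c' : ℕ}

lemma Choosable.mono (h : Choosable G a b c') (hc : c ≤ c') : Choosable G a b c :=
  fun L hcard hsep => h L hcard fun u v huv => (hsep u v huv).trans hc

def IsArcColoring (s : V → V) (L : V → Finset ℕ) (g : V → ℕ) (φ : V → Finset ℕ) : Prop :=
  (∀ v, φ v ⊆ L v ∧ (φ v).card = g v) ∧ ∀ v, Disjoint (φ v) (φ (s v))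

lemma IsArcColoring.isLbColoring {s : V → V} (hs : ∀ u v, G.Adj u v ↔ v = s u ∨ u = s v)
    {L φ : V → Finset ℕ} (hφ : IsArcColoring s L (fun _ => b) φ) : IsLbColoring G L b φ := by
  refine ⟨hφ.1, fun u v huv => ?_⟩
  rcases (hs u v).1 huv with rfl | rfl
  · exact disjoint_iff_inter_eq_empty.mp (hφ.2 u)
  · exact disjoint_iff_inter_eq_empty.mp (hφ.2 v).symm

lemma choosable_sub_of_adj_iff {s : V → V} (hs : ∀ u v, G.Adj u v ↔ v = s u ∨ u = s v)
    (hba : b ≤ a) : Choosable G a b (a - b) := by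
  intro L hcard hsep
  have hfree (v : V) : b ≤ (L v \ L (s v)).card := by
    have := hsep v (s v) ((hs v (s v)).2 (Or.inl rfl))
    have := card_sdiff_add_card_inter (L v) (L (s v))
    have := hcard v
    omega
  choose φ hφ using fun v => exists_subset_card_eq (hfree v)
  refine ⟨φ, IsArcColoring.isLbColoring hs ⟨fun v => ⟨(hφ v).1.trans sdiff_subset, (hφ v).2⟩,
    fun v => ?_⟩⟩
  exact disjoint_of_subset_left (hφ v).1
    (disjoint_sdiff_self_left.mono_right ((hφ (s v)).1.trans sdiff_subset))

end General

section Kernel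

variable {V : Type*} [DecidableEq V] {s : V → V}

/-- `K` is a kernel (an independent, absorbing set) of the digraph with arcs `v → s v` on `A`. -/
def IsKernel (s : V → V) (A K : Finset V) : Prop :=
  K ⊆ A ∧ (∀ v ∈ K, s v ∉ K) ∧ ∀ v ∈ A, v ∉ K → s v ∈ K

lemma exists_isKernel_of_forall_exists_iterate_notMem (A : Finset V)
    (h : ∀ v, ∃ t, s^[t] v ∉ A) : ∃ K, IsKernel s A K := by
  -- the kernel consists of the vertices that leave `A` after an odd number of steps
  let τ v := Nat.find (h v)
  have hτ_pos (v : V) : 0 < τ v ↔ v ∈ A := by simp [τ]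
  have hτ_succ (v : V) (hv : v ∈ A) : τ v = τ (s v) + 1 :=
    Nat.find_comp_succ (h v) (h (s v)) (by simpa using hv)
  refine ⟨A.filter (fun v => Odd (τ v)), filter_subset _ _, fun v hv hsv => ?_, fun v hv hvK => ?_⟩
  · rw [mem_filter] at hv hsv
    have := hτ_succ v hv.1
    grind
  · have := hτ_succ v hv
    have := (hτ_pos v).2 hv
    simp only [mem_filter, hv, true_and, Nat.odd_iff] at hvK
    exact mem_filter.2 ⟨(hτ_pos _).1 (by omega), Nat.odd_iff.2 (by omega)⟩

variable {g : V → ℕ} {L : V → Finset ℕ} {x : ℕ} {A K : Finset V}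

lemma card_add_card_le_of_isKernel (hA : ∀ v, v ∈ A ↔ x ∈ L v ∧ g v ≠ 0) (hK : IsKernel s A K)
    (hL : ∀ v, g v + g (s v) ≤ (L v).card) (v : V) :
    (if v ∈ K then g v - 1 else g v) + (if s v ∈ K then g (s v) - 1 else g (s v)) ≤
      (if v ∈ A then (L v).erase x else L v).card := by
  obtain ⟨hKA, hKind, hKabs⟩ := hK
  have hLv := hL v
  by_cases hvA : v ∈ A
  · obtain ⟨hxv, hgv⟩ := (hA v).1 hvA
    rw [if_pos hvA, card_erase_of_mem hxv]
    by_cases hvK : v ∈ K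
    · rw [if_pos hvK, if_neg (hKind v hvK)]
      omega
    · have hsv := hKabs v hvA hvK
      have := ((hA (s v)).1 (hKA hsv)).2
      rw [if_neg hvK, if_pos hsv]
      omega
  · rw [if_neg (fun h => hvA (hKA h)), if_neg hvA]
    split_ifs <;> omega

lemma IsArcColoring.insert_of_isKernel (hA : ∀ v, v ∈ A ↔ x ∈ L v ∧ g v ≠ 0)
    (hK : IsKernel s A K) {φ : V → Finset ℕ}
    (hφ : IsArcColoring s (fun v => if v ∈ A then (L v).erase x else L v)
      (fun v => if v ∈ K then g v - 1 else g v) φ) :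
    IsArcColoring s L g (fun v => if v ∈ K then insert x (φ v) else φ v) := by
  obtain ⟨hKA, hKind, hKabs⟩ := hK
  obtain ⟨hφL, hφdisj⟩ := hφ
  -- `x` was removed from the lists that contain it, except where nothing is to be coloured
  have hx (v : V) : x ∉ φ v := by
    intro hxv
    obtain ⟨hsub, hcard⟩ := hφL v
    dsimp only at hsub hcard
    by_cases hvA : v ∈ A
    · simpa [hvA] using hsub hxv
    · rw [if_neg hvA] at hsub
      rw [if_neg (fun h => hvA (hKA h))] at hcard
      exact hvA ((hA v).2 ⟨hsub hxv, by rw [← hcard]; exact (card_pos.2 ⟨x, hxv⟩).ne'⟩)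
  refine ⟨fun v => ?_, fun v => ?_⟩
  · obtain ⟨hsub, hcard⟩ := hφL v
    dsimp only at hsub hcard
    by_cases hvK : v ∈ K
    · obtain ⟨hxv, hgv⟩ := (hA v).1 (hKA hvK)
      simp only [if_pos hvK, if_pos (hKA hvK)] at hsub hcard ⊢
      exact ⟨insert_subset hxv (hsub.trans (erase_subset _ _)),
        by rw [card_insert_of_notMem (hx v), hcard]; omega⟩
    · simp only [if_neg hvK] at hcard ⊢
      exact ⟨hsub.trans (by split_ifs <;> simp [erase_subset]), hcard⟩
  · by_cases hvK : v ∈ K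
    · simpa [hvK, hKind v hvK, hx (s v)] using hφdisj v
    · by_cases hsvK : s v ∈ K
      · simpa [hvK, hsvK, hx v] using hφdisj v
      · simpa [hvK, hsvK] using hφdisj v

lemma exists_isArcColoring_of_forall_isKernel [Fintype V]
    (hker : ∀ A : Finset V, ∃ K, IsKernel s A K) (g : V → ℕ) (L : V → Finset ℕ)
    (hL : ∀ v, g v + g (s v) ≤ (L v).card) : ∃ φ, IsArcColoring s L g φ := by
  induction hN : ∑ v, g v using Nat.strong_induction_on generalizing g L with
  | _ N ih =>
    by_cases hg : ∀ v, g v = 0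
    · exact ⟨fun _ => ∅, fun v => by simp [hg v], fun v => by simp⟩
    push Not at hg
    obtain ⟨v₀, hv₀⟩ := hg
    obtain ⟨x, hx⟩ : (L v₀).Nonempty := card_pos.1 (by have := hL v₀; omega)
    -- colour a kernel of the vertices that still need the colour `x` with `x`, and recurse
    obtain ⟨K, hK⟩ := hker (univ.filter fun v => x ∈ L v ∧ g v ≠ 0)
    have hA (v : V) : v ∈ univ.filter (fun v => x ∈ L v ∧ g v ≠ 0) ↔ x ∈ L v ∧ g v ≠ 0 := by simp
    have hK_nonempty : K.Nonempty := by
      by_cases hv₀K : v₀ ∈ K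
      · exact ⟨v₀, hv₀K⟩
      · exact ⟨s v₀, hK.2.2 v₀ ((hA v₀).2 ⟨hx, hv₀⟩) hv₀K⟩
    have hsum_lt : ∑ v, (if v ∈ K then g v - 1 else g v) < N := by
      obtain ⟨k, hk⟩ := hK_nonempty
      have := ((hA k).1 (hK.1 hk)).2
      rw [← hN]
      refine sum_lt_sum (fun v _ => by split_ifs <;> omega) ⟨k, mem_univ k, ?_⟩
      rw [if_pos hk]
      omega
    obtain ⟨φ, hφ⟩ := ih _ hsum_lt _ _ (card_add_card_le_of_isKernel hA hK hL) rfl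
    exact ⟨_, hφ.insert_of_isKernel hA hK⟩

end Kernel

section Cycle

variable {m a b : ℕ}

lemma cycleGraph_adj_iff_eq_add_one {u v : Fin (m + 2)} :
    (cycleGraph (m + 2)).Adj u v ↔ v = u + 1 ∨ u = v + 1 := by
  rw [cycleGraph_adj, sub_eq_iff_eq_add', sub_eq_iff_eq_add', or_comm]

lemma choosable_cycleGraph_sub (hba : b ≤ a) : Choosable (cycleGraph (m + 2)) a b (a - b) :=
  choosable_sub_of_adj_iff (fun _ _ => cycleGraph_adj_iff_eq_add_one) hba

open Fin.NatCast in
lemma exists_isKernel_cycle (hm : Even m) (A : Finset (Fin (m + 2))) :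
    ∃ K, IsKernel (· + 1) A K := by
  by_cases hA : ∃ g, g ∉ A
  · obtain ⟨g, hg⟩ := hA
    refine exists_isKernel_of_forall_exists_iterate_notMem A fun v => ⟨(g - v).val, ?_⟩
    rwa [add_right_iterate_apply, nsmul_one, Fin.cast_val_eq_self, add_sub_cancel]
  · -- on the whole even cycle, a colour class of a proper 2-colouring is a kernel
    push Not at hA
    let c := cycleGraph.bicoloring_of_even (m + 2) (hm.add even_two)
    have hc (v : Fin (m + 2)) : c (v + 1) ≠ c v :=
      c.valid (cycleGraph_adj_iff_eq_add_one.2 (Or.inr rfl))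
    refine ⟨univ.filter (c · = true), fun v _ => hA v, fun v hv => ?_, fun v _ hv => ?_⟩ <;>
      simp only [mem_filter, mem_univ, true_and] at hv ⊢ <;> grind

lemma choosable_cycleGraph_of_two_mul_le (hm : Even m) (hab : 2 * b ≤ a) (c : ℕ) :
    Choosable (cycleGraph (m + 2)) a b c := by
  intro L hL _
  obtain ⟨φ, hφ⟩ := exists_isArcColoring_of_forall_isKernel (exists_isKernel_cycle hm)
    (fun _ => b) L fun v => by rw [hL v]; omega
  exact ⟨φ, hφ.isLbColoring fun _ _ => cycleGraph_adj_iff_eq_add_one⟩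

end Cycle

section TightLists

variable {m a b d : ℕ}

-- the `+ 1` keeps `0` free for the colour shared by all lists
def blockColor (j : Fin (m + 2)) (t : ℕ) : ℕ := Nat.pair j t + 1

lemma blockColor_inj {j j' : Fin (m + 2)} {t t' : ℕ} :
    blockColor j t = blockColor j' t' ↔ j = j' ∧ t = t' := by
  simp [blockColor, Fin.val_inj]

lemma blockColor_ne_zero (j : Fin (m + 2)) (t : ℕ) : blockColor j t ≠ 0 :=
  Nat.succ_ne_zero _

def tightList (b d : ℕ) (i : Fin (m + 2)) : Finset ℕ :=
  insert 0 ((range (b - 1)).image (blockColor i) ∪ (range d).image (blockColor (i + 1)))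

lemma exists_blockColor_of_mem_tightList {x : ℕ} {i : Fin (m + 2)} (hx : x ∈ tightList b d i)
    (hx0 : x ≠ 0) : ∃ j t, blockColor j t = x ∧ (j = i ∧ t < b - 1 ∨ j = i + 1 ∧ t < d) := by
  simp only [tightList, mem_insert, hx0, false_or, mem_union, mem_image, mem_range] at hx
  grind

lemma card_tightList (hb : 1 ≤ b) (i : Fin (m + 2)) : (tightList b d i).card = b + d := by
  have hinj (j : Fin (m + 2)) : Function.Injective (blockColor j) :=
    fun t t' h => (blockColor_inj.1 h).2
  have hdisj : Disjoint ((range (b - 1)).image (blockColor i))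
      ((range d).image (blockColor (i + 1))) := by
    simp [Finset.disjoint_left, blockColor_inj]
  rw [tightList, card_insert_of_notMem (by simp [blockColor_ne_zero]),
    card_union_of_disjoint hdisj, card_image_of_injective _ (hinj _),
    card_image_of_injective _ (hinj _), card_range, card_range]
  omega

lemma card_tightList_inter_succ_le (hm : 1 ≤ m) (i : Fin (m + 2)) :
    (tightList b d i ∩ tightList b d (i + 1)).card ≤ d + 1 := by
  have hii : i + 1 + 1 ≠ i := by
    rw [add_assoc, Ne, add_eq_left, Fin.ext_iff, Fin.val_add, Fin.val_one, Fin.val_zero,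
      Nat.mod_eq_of_lt (by omega)]
    omega
  calc _ ≤ (insert 0 ((range d).image (blockColor (i + 1)))).card := by
        refine card_le_card fun x hx => ?_
        rw [mem_inter] at hx
        by_cases hx0 : x = 0
        · simp [hx0]
        obtain ⟨j, t, rfl, ⟨rfl, -⟩ | ⟨rfl, ht⟩⟩ := exists_blockColor_of_mem_tightList hx.1 hx0
        · obtain ⟨j', t', hjt, hj'⟩ := exists_blockColor_of_mem_tightList hx.2 hx0
          rw [blockColor_inj] at hjt
          grind
        · exact mem_insert_of_mem (mem_image_of_mem _ (mem_range.2 ht))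
    _ ≤ d + 1 := (card_insert_le _ _).trans (by simpa using card_image_le (s := range d))

lemma cycleGraph_adj_of_mem_tightList {x : ℕ} {u v : Fin (m + 2)} (hu : x ∈ tightList b d u)
    (hv : x ∈ tightList b d v) (hx0 : x ≠ 0) (huv : u ≠ v) : (cycleGraph (m + 2)).Adj u v := by
  obtain ⟨j, t, rfl, hj⟩ := exists_blockColor_of_mem_tightList hu hx0
  obtain ⟨j', t', hjt, hj'⟩ := exists_blockColor_of_mem_tightList hv hx0
  rw [blockColor_inj] at hjt
  rw [cycleGraph_adj_iff_eq_add_one]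
  grind

lemma sum_card_erase_zero_le {φ : Fin (m + 2) → Finset ℕ}
    (hφ : IsLbColoring (cycleGraph (m + 2)) (tightList b d) b φ) (hd : d ≤ b - 1) :
    ∑ i, ((φ i).erase 0).card ≤ (m + 2) * (b - 1) := by
  obtain ⟨hφL, hφadj⟩ := hφ
  have hdisj : (Set.univ : Set (Fin (m + 2))).PairwiseDisjoint fun i => (φ i).erase 0 := by
    intro u _ v _ huv
    refine Finset.disjoint_left.2 fun x hxu hxv => ?_
    have hx0 := ne_of_mem_erase hxu
    replace hxu := mem_of_mem_erase hxu
    replace hxv := mem_of_mem_erase hxv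
    have hadj := cycleGraph_adj_of_mem_tightList ((hφL u).1 hxu) ((hφL v).1 hxv) hx0 huv
    simpa [hφadj u v hadj] using mem_inter.2 ⟨hxu, hxv⟩
  set R := (univ : Finset (Fin (m + 2))).biUnion fun j => (range (b - 1)).image (blockColor j)
  have hsub (i : Fin (m + 2)) : (φ i).erase 0 ⊆ R := by
    intro x hx
    obtain ⟨j, t, rfl, hj⟩ :=
      exists_blockColor_of_mem_tightList ((hφL i).1 (mem_of_mem_erase hx)) (ne_of_mem_erase hx)
    exact mem_biUnion.2 ⟨j, mem_univ j, mem_image_of_mem _ (mem_range.2 (by omega))⟩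
  rw [← card_biUnion (by rwa [coe_univ])]
  calc _ ≤ R.card :=
        card_le_card (biUnion_subset.2 fun i _ => hsub i)
    _ ≤ (m + 2) * (b - 1) := by
        simpa using card_biUnion_le_card_mul (univ : Finset (Fin (m + 2))) _ (b - 1)
          fun j _ => card_image_le.trans (card_range _).le

lemma not_choosable_cycleGraph (hm : 1 ≤ m) (hb : 1 ≤ b) (hba : b ≤ a) (hab : a < 2 * b) :
    ¬Choosable (cycleGraph (m + 2)) a b (a - b + 1) := by
  intro h
  obtain ⟨φ, hφ⟩ := h (tightList b (a - b)) (fun i => by rw [card_tightList hb]; omega)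
    fun u v huv => by
      rcases cycleGraph_adj_iff_eq_add_one.1 huv with rfl | rfl
      · exact card_tightList_inter_succ_le hm u
      · rw [inter_comm]; exact card_tightList_inter_succ_le hm v
  -- only `0` may be used twice, and some vertex does not use it
  obtain ⟨k, hk⟩ : ∃ k, 0 ∉ φ k := by
    by_contra! h0
    simpa [hφ.2 0 1 (cycleGraph_adj_iff_eq_add_one.2 (Or.inl (zero_add 1).symm))] using
      mem_inter.2 ⟨h0 0, h0 1⟩
  have hlower : (m + 2) * (b - 1) < ∑ i, ((φ i).erase 0).card := by
    calc (m + 2) * (b - 1) = ∑ _i : Fin (m + 2), (b - 1) := by simp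
      _ < _ := sum_lt_sum (fun i _ => (hφ.1 i).2 ▸ pred_card_le_card_erase)
          ⟨k, mem_univ k, by rw [erase_eq_of_notMem hk, (hφ.1 k).2]; omega⟩
  have := sum_card_erase_zero_le hφ (by omega)
  omega

end TightLists

theorem sep_even_cycle (p a b : ℕ) (hp : 1 ≤ p) (hb : 1 ≤ b) (hba : b ≤ a) :
    (a < 2 * b → sep (cycleGraph (2 * p + 2)) a b = a - b) ∧
    (2 * b ≤ a → sep (cycleGraph (2 * p + 2)) a b = a) := by
  refine ⟨fun hab => IsGreatest.csSup_eq ⟨⟨Nat.sub_le a b, choosable_cycleGraph_sub hba⟩, ?_⟩,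
    fun hab => IsGreatest.csSup_eq
      ⟨⟨le_rfl, choosable_cycleGraph_of_two_mul_le (even_two_mul p) hab a⟩, fun c hc => hc.1⟩⟩
  rintro c ⟨-, hc⟩
  by_contra! hlt
  exact not_choosable_cycleGraph (by omega) hb hba hab (hc.mono hlt)
end

section
/- For all integers p ≥ 1 and a ≥ b ≥ 1, the separation number of the odd cycle C_{2p+1} is: sep(C_{2p+1}, a, b) = a − b if b ≤ a < 2b; sep(C_{2p+1}, a, b) = b + (p+1)(a−2b) if 2b ≤ a and p(a−2b) ≤ b; and sep(C_{2p+1}, a, b) = a if pa ≥ (2p+1)b. -/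
open SimpleGraph Finset

/-!
If `c + b ≤ a`, every vertex `v` of a cycle can take `b` colours of `L v \ L (v + 1)`. For
`a = 2b + d` only the closing edge `(2p, 0)` of `C_{2p+1}` needs the separation `b + (p + 1) d`:
colour vertex `0` using at most `pd` colours of `L (2p)`, then walk along the path `1, …, 2p`,
describing backwards which `b`-sets at the current vertex still extend; this freedom grows by `d`
every two steps, which is exactly what vertex `2p` needs.

Conversely, take lists made of a kernel of `k` colours common to all vertices, `s` colours shared
by each edge and `r` colours private to each vertex; they are `(k + s)`-separating. In a colouring
a kernel colour occupies an independent set, hence at most `p` vertices, and every other colour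
at most one vertex, so `(2p + 1) b ≤ p k + (2p + 1)(s + r)`. The choices `k = 1, s = a - b` and
`k = (2p + 1) d + 2, s = b - pd - 1, r = 0` violate this one above the claimed separation numbers.
-/

lemma Choosable.of_le {V : Type*} {G : SimpleGraph V} {a b c c' : ℕ} (hc : Choosable G a b c)
    (h : c' ≤ c) : Choosable G a b c' :=
  fun L hL hsep => hc L hL fun u v huv => (hsep u v huv).trans h

lemma sep_eq_of_choosable {V : Type*} {G : SimpleGraph V} {a b m : ℕ} (hma : m ≤ a)
    (hm : Choosable G a b m) (hmax : m < a → ¬ Choosable G a b (m + 1)) : sep G a b = m := by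
  refine IsGreatest.csSup_eq ⟨⟨hma, hm⟩, fun c ⟨hca, hc⟩ => ?_⟩
  by_contra! hmc
  exact hmax (hmc.trans_le hca) (hc.of_le hmc)

section PathColoring

variable {α : Type*}

def IsPathColoring (L : ℕ → Finset α) (b k : ℕ) (φ : ℕ → Finset α) : Prop :=
  (∀ i ≤ k, φ i ⊆ L i ∧ #(φ i) = b) ∧ ∀ i < k, Disjoint (φ i) (φ (i + 1))

lemma IsPathColoring.update {L : ℕ → Finset α} {b k : ℕ} {φ : ℕ → Finset α}
    (hφ : IsPathColoring L b k φ) {β : Finset α} (hβ : β ⊆ L (k + 1)) (hβb : #β = b)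
    (hdisj : Disjoint (φ k) β) :
    IsPathColoring L b (k + 1) (Function.update φ (k + 1) β) := by
  refine ⟨fun i hi => ?_, fun i hi => ?_⟩
  · rcases Nat.lt_or_eq_of_le hi with hi | rfl
    · rw [Function.update_of_ne (by omega)]
      exact hφ.1 i (by omega)
    · rw [Function.update_self]
      exact ⟨hβ, hβb⟩
  · rcases Nat.lt_or_eq_of_le (Nat.le_of_lt_succ hi) with hi | rfl
    · rw [Function.update_of_ne (by omega), Function.update_of_ne (by omega)]
      exact hφ.2 i hi
    · rw [Function.update_of_ne (by omega), Function.update_self]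
      exact hdisj

variable [DecidableEq α]

lemma Finset.exists_subset_card_eq_card_inter_le {S T : Finset α} {b m : ℕ} (hS : b ≤ #S)
    (h : b ≤ #(S \ T) + m) : ∃ β ⊆ S, #β = b ∧ #(β ∩ T) ≤ m := by
  obtain ⟨β₀, hβ₀, hβ₀card⟩ := exists_subset_card_eq (min_le_right b #(S \ T))
  obtain ⟨β, hβ₀β, hβS, hβcard⟩ :=
    exists_subsuperset_card_eq (hβ₀.trans sdiff_subset) (hβ₀card.trans_le (min_le_left _ _)) hS
  refine ⟨β, hβS, hβcard, ?_⟩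
  have hβT : β ∩ T ⊆ β \ β₀ := fun x hx =>
    mem_sdiff.2 ⟨(mem_inter.1 hx).1, fun h₀ => (mem_sdiff.1 (hβ₀ h₀)).2 (mem_inter.1 hx).2⟩
  have := card_le_card hβT
  rw [card_sdiff_of_subset hβ₀β] at this
  omega

variable {L : ℕ → Finset α} {b d : ℕ}

theorem exists_pathColoring_of_card_inter_le (hL : ∀ i, #(L i) = 2 * b + d) {C : Finset α}
    (hC : C ⊆ L 0) (hCb : #C = b) (k : ℕ) :
    ∃ Y ⊆ L (k + 1), ∃ m, k / 2 * d ≤ m ∧ #Y + (k + 1) / 2 * d ≤ m + b + d ∧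
      ∀ β ⊆ L (k + 1), #β = b → #(β ∩ Y) ≤ m →
        ∃ φ, IsPathColoring L b (k + 1) φ ∧ φ 0 = C ∧ φ (k + 1) = β := by
  induction k with
  | zero =>
    refine ⟨C ∩ L 1, inter_subset_right, 0, by simp, ?_, fun β hβ hβb hβY => ?_⟩
    · have := card_le_card (inter_subset_left : C ∩ L 1 ⊆ C)
      omega
    · have hCβ : Disjoint C β := by
        rw [Finset.disjoint_left]
        intro x hxC hxβ
        have : x ∈ β ∩ (C ∩ L 1) := mem_inter.2 ⟨hxβ, mem_inter.2 ⟨hxC, hβ hxβ⟩⟩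
        rw [card_eq_zero.1 (Nat.le_zero.1 hβY)] at this
        simp at this
      have hC₀ : IsPathColoring L b 0 (fun _ => C) :=
        ⟨fun _ hi => Nat.le_zero.1 hi ▸ ⟨hC, hCb⟩, fun _ hi => absurd hi (Nat.not_lt_zero _)⟩
      exact ⟨_, hC₀.update hβ hβb hCβ, Function.update_of_ne (by omega) _ _,
        Function.update_self ..⟩
  | succ k ih =>
    obtain ⟨Y, hY, m, hm, hYm, hext⟩ := ih
    have hY' : #(L (k + 1) \ Y) = 2 * b + d - #Y := by rw [card_sdiff_of_subset hY, hL]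
    have hYL := card_le_card hY
    rw [hL] at hYL
    refine ⟨(L (k + 1) \ Y) ∩ L (k + 2), inter_subset_right, m + b + d - #Y, by omega, ?_,
      fun β hβ hβb hβY => ?_⟩
    · have := card_le_card (inter_subset_left : (L (k + 1) \ Y) ∩ L (k + 2) ⊆ _)
      rw [show (k + 1 + 1) / 2 = k / 2 + 1 by omega, add_one_mul]
      omega
    obtain ⟨ψ, hψ, hψb, hψY⟩ :
        ∃ ψ ⊆ L (k + 1) \ β, #ψ = b ∧ #(ψ ∩ Y) ≤ m := by
      apply exists_subset_card_eq_card_inter_le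
      · have := le_card_sdiff β (L (k + 1))
        rw [hL] at this
        omega
      · have hsplit := card_sdiff_add_card_inter (L (k + 1) \ Y) β
        have hβY' : #((L (k + 1) \ Y) ∩ β) ≤ #(β ∩ ((L (k + 1) \ Y) ∩ L (k + 2))) :=
          card_le_card fun x hx => by
            simp only [mem_inter] at hx ⊢
            exact ⟨hx.2, hx.1, hβ hx.2⟩
        rw [sdiff_right_comm]
        omega
    obtain ⟨φ, hφ, hφ0, hφk⟩ := hext ψ (hψ.trans sdiff_subset) hψb hψY
    refine ⟨_, hφ.update hβ hβb ?_, by rw [Function.update_of_ne (by omega), hφ0],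
      Function.update_self ..⟩
    rw [hφk]
    exact disjoint_of_subset_left hψ sdiff_disjoint

theorem exists_closed_pathColoring {p : ℕ} (hp : 1 ≤ p) (hL : ∀ i, #(L i) = 2 * b + d)
    (hclose : #(L (2 * p) ∩ L 0) ≤ b + (p + 1) * d) :
    ∃ φ, IsPathColoring L b (2 * p) φ ∧ Disjoint (φ (2 * p)) (φ 0) := by
  rw [add_one_mul] at hclose
  obtain ⟨C, hC, hCb, hCL⟩ : ∃ C ⊆ L 0, #C = b ∧ #(C ∩ L (2 * p)) ≤ p * d := by
    apply exists_subset_card_eq_card_inter_le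
    · rw [hL]
      omega
    · have := card_sdiff_add_card_inter (L 0) (L (2 * p))
      rw [inter_comm, hL] at this
      omega
  obtain ⟨Y, hY, m, -, hYm, hext⟩ := exists_pathColoring_of_card_inter_le hL hC hCb (2 * p - 1)
  rw [Nat.sub_add_cancel (by omega)] at hY hYm hext
  rw [show 2 * p / 2 = p by omega] at hYm
  obtain ⟨β, hβ, hβb, hβY⟩ : ∃ β ⊆ L (2 * p) \ C, #β = b ∧ #(β ∩ Y) ≤ m := by
    have hLC : #(L (2 * p) \ C) + #(C ∩ L (2 * p)) = 2 * b + d := by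
      rw [card_sdiff, hL,
        Nat.sub_add_cancel (card_le_card inter_subset_right |>.trans (hL _).le)]
    have hCLb := card_le_card (inter_subset_left : C ∩ L (2 * p) ⊆ C)
    apply exists_subset_card_eq_card_inter_le
    · omega
    · have := le_card_sdiff Y (L (2 * p) \ C)
      omega
  obtain ⟨φ, hφ, hφ0, hφk⟩ := hext β (hβ.trans sdiff_subset) hβb hβY
  exact ⟨φ, hφ, by rw [hφk, hφ0]; exact disjoint_of_subset_left hβ sdiff_disjoint⟩

end PathColoring

section CycleGraph

variable {n : ℕ}

lemma cycleGraph_adj_iff (hn : 1 ≤ n) {u v : Fin (n + 1)} :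
    (cycleGraph (n + 1)).Adj u v ↔ u = v + 1 ∨ v = u + 1 := by
  obtain ⟨n, rfl⟩ : ∃ n', n = n' + 1 := ⟨n - 1, by omega⟩
  rw [cycleGraph_adj, sub_eq_iff_eq_add, sub_eq_iff_eq_add, add_comm 1 v, add_comm 1 u]

lemma cycleGraph_adj_add_one (hn : 1 ≤ n) (v : Fin (n + 1)) :
    (cycleGraph (n + 1)).Adj v (v + 1) :=
  (cycleGraph_adj_iff hn).2 (Or.inr rfl)

lemma isLbColoring_cycleGraph_iff (hn : 1 ≤ n) {L φ : Fin (n + 1) → Finset ℕ} {b : ℕ} :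
    IsLbColoring (cycleGraph (n + 1)) L b φ ↔
      (∀ v, φ v ⊆ L v ∧ #(φ v) = b) ∧ ∀ v, Disjoint (φ v) (φ (v + 1)) := by
  simp only [IsLbColoring, ← disjoint_iff_inter_eq_empty]
  refine and_congr_right fun _ =>
    ⟨fun h v => h v _ (cycleGraph_adj_add_one hn v), fun h u v huv => ?_⟩
  rcases (cycleGraph_adj_iff hn).1 huv with rfl | rfl
  · exact (h v).symm
  · exact h u

lemma choosable_cycleGraph_of_add_le (hn : 1 ≤ n) {a b c : ℕ} (h : c + b ≤ a) :
    Choosable (cycleGraph (n + 1)) a b c := by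
  intro L hL hc
  have hfree : ∀ v, ∃ β ⊆ L v \ L (v + 1), #β = b := fun v => by
    apply exists_subset_card_eq
    have := card_sdiff_add_card_inter (L v) (L (v + 1))
    have := hc v (v + 1) (cycleGraph_adj_add_one hn v)
    rw [hL] at *
    omega
  choose φ hφ hφb using hfree
  refine ⟨φ, (isLbColoring_cycleGraph_iff hn).2 ⟨fun v => ⟨(hφ v).trans sdiff_subset, hφb v⟩,
    fun v => ?_⟩⟩
  exact sdiff_disjoint.mono (hφ v) ((hφ (v + 1)).trans sdiff_subset)

open scoped Fin.NatCast in
lemma choosable_cycleGraph_of_closedPath (hn : 1 ≤ n) {a b c : ℕ}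
    (h : ∀ L : ℕ → Finset ℕ, (∀ i, #(L i) = a) → #(L n ∩ L 0) ≤ c →
      ∃ φ, IsPathColoring L b n φ ∧ Disjoint (φ n) (φ 0)) :
    Choosable (cycleGraph (n + 1)) a b c := by
  intro L hL hc
  have hlast : (cycleGraph (n + 1)).Adj (Fin.last n) 0 := by
    simpa using cycleGraph_adj_add_one hn (Fin.last n)
  obtain ⟨φ, ⟨hφL, hφ⟩, hclose⟩ := h (fun i : ℕ => L (i : Fin (n + 1))) (fun i => hL _)
    (by simpa [Fin.natCast_eq_last] using hc _ _ hlast)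
  refine ⟨fun v => φ v, (isLbColoring_cycleGraph_iff hn).2
    ⟨fun v => by simpa using hφL v (Nat.le_of_lt_succ v.isLt), fun v => ?_⟩⟩
  rcases eq_or_ne v (Fin.last n) with rfl | hv
  · simpa using hclose
  · rw [Fin.val_add_one_of_lt (Fin.lt_last_iff_ne_last.2 hv)]
    exact hφ v (Fin.val_lt_last hv)

theorem choosable_cycleGraph_two_mul_add_one {p : ℕ} (hp : 1 ≤ p) (b d : ℕ) :
    Choosable (cycleGraph (2 * p + 1)) (2 * b + d) b (b + (p + 1) * d) :=
  choosable_cycleGraph_of_closedPath (by omega) fun _ hL hclose =>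
    exists_closed_pathColoring hp hL hclose

end CycleGraph

section Obstruction

def colorBlock (i m : ℕ) : Finset ℕ := (range m).image (Nat.pair i)

lemma mem_colorBlock {i m x : ℕ} : x ∈ colorBlock i m ↔ x.unpair.1 = i ∧ x.unpair.2 < m := by
  constructor
  · simp only [colorBlock, mem_image, mem_range]
    rintro ⟨t, ht, rfl⟩
    simpa using ht
  · rintro ⟨h₁, h₂⟩
    exact mem_image.2 ⟨x.unpair.2, mem_range.2 h₂, by rw [← h₁, Nat.pair_unpair]⟩

lemma card_colorBlock (i m : ℕ) : #(colorBlock i m) = m := by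
  rw [colorBlock, card_image_of_injective _ fun _ _ h => (Nat.pair_eq_pair.1 h).2, card_range]

lemma disjoint_colorBlock {i j : ℕ} (h : i ≠ j) (m m' : ℕ) :
    Disjoint (colorBlock i m) (colorBlock j m') :=
  Finset.disjoint_left.2 fun _ hi hj =>
    h ((mem_colorBlock.1 hi).1.symm.trans (mem_colorBlock.1 hj).1)

variable {n : ℕ}

/-- The colour `Nat.pair i t` lies in block `i`: block `0` is a kernel of `k` colours common to all
lists, block `v + 1` holds the `s` colours shared by `v` and `v + 1`, and block `n + 2 + v` the
`r` colours private to `v`. -/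
def blockLists (n k s r : ℕ) (v : Fin (n + 1)) : Finset ℕ :=
  colorBlock 0 k ∪ colorBlock ((v - 1 : Fin (n + 1)) + 1) s ∪ colorBlock (v + 1) s ∪
    colorBlock (n + 2 + v) r

lemma Fin.val_sub_one_ne_val (hn : 1 ≤ n) (v : Fin (n + 1)) :
    ((v - 1 : Fin (n + 1)) : ℕ) ≠ v := by
  rw [Fin.coe_sub_one]
  split_ifs with h
  · rw [h, Fin.val_zero]
    omega
  · have : (v : ℕ) ≠ 0 := fun h' => h (Fin.ext h')
    omega

lemma card_blockLists (hn : 1 ≤ n) (k s r : ℕ) (v : Fin (n + 1)) :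
    #(blockLists n k s r v) = k + 2 * s + r := by
  have := Fin.val_sub_one_ne_val hn v
  have := v.isLt
  rw [blockLists, card_union_of_disjoint, card_union_of_disjoint, card_union_of_disjoint]
  · simp only [card_colorBlock]
    ring
  all_goals try simp only [disjoint_union_left]
  all_goals repeat' apply And.intro
  all_goals exact disjoint_colorBlock (by omega) _ _

lemma Fin.val_sub_one_ne_val_add_one (hn : 2 ≤ n) (v : Fin (n + 1)) :
    ((v - 1 : Fin (n + 1)) : ℕ) ≠ (v + 1 : Fin (n + 1)) := by
  have := v.isLt
  have hlast : v = Fin.last n ↔ (v : ℕ) = n := by rw [Fin.ext_iff, Fin.val_last]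
  have hzero : v = 0 ↔ (v : ℕ) = 0 := by rw [Fin.ext_iff, Fin.val_zero]
  rw [Fin.coe_sub_one, Fin.val_add_one]
  split_ifs <;> omega

lemma card_blockLists_inter_le (hn : 2 ≤ n) (k s r : ℕ) (v : Fin (n + 1)) :
    #(blockLists n k s r v ∩ blockLists n k s r (v + 1)) ≤ k + s := by
  have := Fin.val_sub_one_ne_val (by omega) v
  have := Fin.val_sub_one_ne_val_add_one hn v
  have := Fin.val_injective.ne (cycleGraph_adj_add_one (by omega) v).ne
  have := v.isLt
  have := (v - 1).isLt
  have := (v + 1).isLt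
  calc _ ≤ #(colorBlock 0 k ∪ colorBlock (v + 1) s) := card_le_card fun x hx => by
        simp only [blockLists, add_sub_cancel_right, mem_inter, mem_union,
          mem_colorBlock] at hx ⊢
        generalize ((v + 1 : Fin (n + 1)) : ℕ) = w at *
        generalize ((v - 1 : Fin (n + 1)) : ℕ) = u at *
        omega
    _ ≤ k + s := (card_union_le _ _).trans (by simp only [card_colorBlock, le_refl])

lemma card_le_half_of_forall_add_one_notMem {S : Finset (Fin (n + 1))}
    (hS : ∀ v ∈ S, v + 1 ∉ S) : #S ≤ (n + 1) / 2 := by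
  have hdisj : Disjoint S (S.map (addRightEmbedding 1)) := by
    rw [Finset.disjoint_right]
    rintro _ hv
    obtain ⟨u, hu, rfl⟩ := mem_map.1 hv
    exact hS u hu
  have := card_le_univ (S ∪ S.map (addRightEmbedding 1))
  rw [card_union_of_disjoint hdisj, card_map, Fintype.card_fin] at this
  omega

lemma sum_card_inter_le_mul_half {α : Type*} [DecidableEq α] {φ : Fin (n + 1) → Finset α}
    (hφ : ∀ v, Disjoint (φ v) (φ (v + 1))) (K : Finset α) :
    ∑ v, #(φ v ∩ K) ≤ #K * ((n + 1) / 2) := by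
  calc ∑ v, #(φ v ∩ K) = ∑ x ∈ K, #{v | x ∈ φ v} := by
        simpa [bipartiteAbove, bipartiteBelow, filter_mem_eq_inter, inter_comm] using
          sum_card_bipartiteAbove_eq_sum_card_bipartiteBelow (fun v x => x ∈ φ v) (s := univ)
            (t := K)
    _ ≤ ∑ _x ∈ K, (n + 1) / 2 := sum_le_sum fun x _ =>
        card_le_half_of_forall_add_one_notMem fun v hv hv₁ =>
          Finset.disjoint_left.1 (hφ v) (mem_filter.1 hv).2 (mem_filter.1 hv₁).2
    _ = #K * ((n + 1) / 2) := by rw [sum_const, smul_eq_mul]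

lemma card_inter_add_card_inter_le {α : Type*} [DecidableEq α] {s t : Finset α}
    (h : Disjoint s t) (E : Finset α) : #(s ∩ E) + #(t ∩ E) ≤ #E := by
  rw [← card_union_of_disjoint (h.mono inter_subset_left inter_subset_left),
    ← union_inter_distrib_right]
  exact card_le_card inter_subset_right

lemma mul_le_of_isLbColoring_blockLists (hn : 1 ≤ n) {k s r b : ℕ}
    {φ : Fin (n + 1) → Finset ℕ} (hφ : IsLbColoring (cycleGraph (n + 1)) (blockLists n k s r) b φ) :
    (n + 1) * b ≤ k * ((n + 1) / 2) + (n + 1) * (s + r) := by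
  obtain ⟨hφL, hdisj⟩ := (isLbColoring_cycleGraph_iff hn).1 hφ
  set K := colorBlock 0 k
  set E : Fin (n + 1) → Finset ℕ := fun i => colorBlock (i + 1) s with hE
  have hvertex : ∀ v, b ≤ #(φ v ∩ K) + #(φ v ∩ E (v - 1)) + #(φ v ∩ E v) + r := fun v => by
    calc b = #(φ v) := (hφL v).2.symm
      _ ≤ #(φ v ∩ K ∪ φ v ∩ E (v - 1) ∪ φ v ∩ E v ∪ colorBlock (n + 2 + v) r) :=
          card_le_card fun x hx => by
            have := (hφL v).1 hx
            simp only [blockLists, mem_union, mem_inter] at this ⊢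
            tauto
      _ ≤ _ := by
          refine (card_union_le _ _).trans ?_
          rw [card_colorBlock]
          gcongr
          refine (card_union_le _ _).trans ?_
          gcongr
          exact card_union_le _ _
  have hshift : ∑ v, #(φ v ∩ E (v - 1)) = ∑ v, #(φ (v + 1) ∩ E v) :=
    Fintype.sum_equiv (Equiv.subRight 1) _ _ fun v => by simp
  have hedges : ∑ v, #(φ v ∩ E (v - 1)) + ∑ v, #(φ v ∩ E v) ≤ (n + 1) * s := by
    rw [hshift, ← sum_add_distrib]
    calc _ ≤ ∑ v : Fin (n + 1), s := sum_le_sum fun v _ => by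
          rw [add_comm]
          simpa [hE, card_colorBlock] using card_inter_add_card_inter_le (hdisj v) (E v)
      _ = (n + 1) * s := by simp
  have hkernel := sum_card_inter_le_mul_half hdisj K
  rw [card_colorBlock] at hkernel
  calc (n + 1) * b = ∑ v : Fin (n + 1), b := by simp
    _ ≤ ∑ v, (#(φ v ∩ K) + #(φ v ∩ E (v - 1)) + #(φ v ∩ E v) + r) :=
        sum_le_sum fun v _ => hvertex v
    _ ≤ k * ((n + 1) / 2) + (n + 1) * (s + r) := by
        rw [sum_add_distrib, sum_add_distrib, sum_add_distrib, sum_const, card_univ,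
          Fintype.card_fin, smul_eq_mul, mul_add]
        omega

theorem mul_le_of_choosable_cycleGraph (hn : 2 ≤ n) {k s r b : ℕ}
    (h : Choosable (cycleGraph (n + 1)) (k + 2 * s + r) b (k + s)) :
    (n + 1) * b ≤ k * ((n + 1) / 2) + (n + 1) * (s + r) := by
  obtain ⟨φ, hφ⟩ := h (blockLists n k s r) (card_blockLists (by omega) k s r) fun u v huv => by
    rcases (cycleGraph_adj_iff (by omega)).1 huv with rfl | rfl
    · rw [inter_comm]
      exact card_blockLists_inter_le hn k s r v
    · exact card_blockLists_inter_le hn k s r u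
  exact mul_le_of_isLbColoring_blockLists (by omega) hφ

theorem not_choosable_cycleGraph_of_lt_two_mul {p a b : ℕ} (hp : 1 ≤ p) (hba : b ≤ a)
    (hab : a < 2 * b) :
    ¬ Choosable (cycleGraph (2 * p + 1)) a b (a - b + 1) := fun hch => by
  have := mul_le_of_choosable_cycleGraph (n := 2 * p) (k := 1) (s := a - b) (r := 2 * b - a - 1)
    (by omega) (by convert hch using 1 <;> omega)
  rw [show (2 * p + 1) / 2 = p by omega, show a - b + (2 * b - a - 1) = b - 1 by omega] at this
  have : (2 * p + 1) * (b - 1) + (2 * p + 1) = (2 * p + 1) * b := by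
    rw [← mul_add_one, Nat.sub_add_cancel (by omega)]
  omega

theorem not_choosable_cycleGraph_two_mul_add {p b d : ℕ} (hp : 1 ≤ p) (hpd : p * d < b) :
    ¬ Choosable (cycleGraph (2 * p + 1)) (2 * b + d) b (b + (p + 1) * d + 1) := fun hch => by
  obtain ⟨e, rfl⟩ : ∃ e, b = p * d + 1 + e := ⟨b - (p * d + 1), by omega⟩
  have := mul_le_of_choosable_cycleGraph (n := 2 * p) (k := (2 * p + 1) * d + 2) (s := e) (r := 0)
    (by omega) (by convert hch using 1 <;> ring)
  rw [show (2 * p + 1) / 2 = p by omega] at this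
  nlinarith

end Obstruction

theorem sep_odd_cycle_general (p a b : ℕ) (hp : 1 ≤ p) (hba : b ≤ a) :
    (a < 2 * b → sep (cycleGraph (2 * p + 1)) a b = a - b) ∧
    (2 * b ≤ a → p * (a - 2 * b) ≤ b →
      sep (cycleGraph (2 * p + 1)) a b = b + (p + 1) * (a - 2 * b)) ∧
    ((2 * p + 1) * b ≤ p * a → sep (cycleGraph (2 * p + 1)) a b = a) := by
  refine ⟨fun hab => ?_, fun h2b hpd => ?_, fun hpa => ?_⟩
  · exact sep_eq_of_choosable (by omega) (choosable_cycleGraph_of_add_le (by omega) (by omega))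
      fun _ => not_choosable_cycleGraph_of_lt_two_mul hp hba hab
  · obtain ⟨d, rfl⟩ := Nat.exists_eq_add_of_le h2b
    rw [Nat.add_sub_cancel_left] at hpd ⊢
    have hm : b + (p + 1) * d ≤ 2 * b + d := by rw [add_one_mul]; omega
    exact sep_eq_of_choosable hm (choosable_cycleGraph_two_mul_add_one hp b d)
      fun hlt => not_choosable_cycleGraph_two_mul_add hp (by rw [add_one_mul] at hlt; omega)
  · obtain ⟨d, rfl⟩ := Nat.exists_eq_add_of_le (show 2 * b ≤ a by nlinarith)
    exact sep_eq_of_choosable le_rfl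
      ((choosable_cycleGraph_two_mul_add_one hp b d).of_le (by nlinarith))
      fun h => absurd h (lt_irrefl _)

theorem sep_odd_cycle (p a b : ℕ) (hp : 1 ≤ p) (hb : 1 ≤ b) (hba : b ≤ a) :
    (a < 2 * b → sep (cycleGraph (2 * p + 1)) a b = a - b) ∧
    (2 * b ≤ a → p * (a - 2 * b) ≤ b →
      sep (cycleGraph (2 * p + 1)) a b = b + (p + 1) * (a - 2 * b)) ∧
    ((2 * p + 1) * b ≤ p * a → sep (cycleGraph (2 * p + 1)) a b = a) :=
  sep_odd_cycle_general p a b hp hba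
end

section
/- Let n, a, b be integers with n ≥ 3, b ≤ a and na < 2(n+1)b, and let c = ⌊c(n,a,b)⌋. Then for every list assignment L of the path P_{n+1} such that |L_1| = |L_{n+1}| = b, |L_i| = a for 2 ≤ i ≤ n, and |L_i ∩ L_{i+1}| ≤ c for 1 ≤ i ≤ n, there exists an (L,b)-coloring of P_{n+1}. -/
open SimpleGraph Finset

/-- `⌊c(n,a,b)⌋` where `c(n,a,b) = (n-1)(a-b)/n` if `(n-1)a < (2n-1)b` and
`c(n,a,b) = ((n-1)(a-b) - 2b)/(n-2)` otherwise (here `b ≤ a ≤ 2(n+1)b/n`, so natural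
subtraction and natural division agree with the real values and the floor). -/
def cFloor (n a b : ℕ) : ℕ :=
  if (n - 1) * a < (2 * n - 1) * b then (n - 1) * (a - b) / n
  else ((n - 1) * (a - b) - 2 * b) / (n - 2)

/-!
Color greedily along the path. `x₁` receives `L₁`; each interior vertex `xᵢ` receives `b` colors
of `Lᵢ` outside `φ(xᵢ₋₁)`, chosen to meet `Lᵢ₊₁` as little as possible. If `φ(xᵢ₋₁)` meets `Lᵢ`
in `e` colors, then at least `a - e - c` colors of `Lᵢ` avoid both `φ(xᵢ₋₁)` and `Lᵢ₊₁`, so the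
overlap of `φ(xᵢ)` with `Lᵢ₊₁` is at most `e - (a - b - c)`. It starts at most `min b c`, and at
the last interior vertex the overlap `|Lₙ ∩ Lₙ₊₁|` is also at most `min b c` since `|Lₙ₊₁| = b`;
the choice of `c = ⌊c(n,a,b)⌋` is exactly what makes `2 min b c ≤ (a - b) + (n - 2)(a - b - c)`,
so `φ(xₙ)` misses `Lₙ₊₁` and `xₙ₊₁` can take all of `Lₙ₊₁`.
-/

def IsPathColoringUpTo {α : Type*} (L : ℕ → Finset α) (b k : ℕ) (φ : ℕ → Finset α) : Prop :=
  (∀ j ≤ k, φ j ⊆ L j ∧ #(φ j) = b) ∧ ∀ j < k, Disjoint (φ j) (φ (j + 1))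

theorem IsPathColoringUpTo.extend {α : Type*} {L : ℕ → Finset α} {b k : ℕ}
    {φ : ℕ → Finset α} (hφ : IsPathColoringUpTo L b k φ) {P : Finset α} (hP : P ⊆ L (k + 1))
    (hPcard : #P = b) (hdisj : Disjoint (φ k) P) :
    IsPathColoringUpTo L b (k + 1) (fun j => if j ≤ k then φ j else P) := by
  refine ⟨fun j hj => ?_, fun j hj => ?_⟩
  · by_cases hjk : j ≤ k
    · simpa [hjk] using hφ.1 j hjk
    · obtain rfl : j = k + 1 := by omega
      simp [hP, hPcard]
  · by_cases hjk : j + 1 ≤ k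
    · simpa [hjk, show j ≤ k by omega] using hφ.2 j hjk
    · obtain rfl : j = k := by omega
      simpa using hdisj

theorem IsPathColoringUpTo.isLbColoring_pathGraph {n b : ℕ} {L : Fin (n + 1) → Finset ℕ}
    {φ : ℕ → Finset ℕ} (hφ : IsPathColoringUpTo (fun j => L (Fin.ofNat (n + 1) j)) b n φ) :
    IsLbColoring (pathGraph (n + 1)) L b (fun v => φ v) := by
  refine ⟨fun v => by simpa using hφ.1 v (Nat.lt_succ_iff.1 v.isLt), fun u v huv => ?_⟩
  rw [← disjoint_iff_inter_eq_empty]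
  rcases pathGraph_adj.1 huv with h | h
  · simpa [← h] using hφ.2 u (by omega)
  · simpa [← h] using (hφ.2 v (by omega)).symm

section Greedy

variable {α : Type*} [DecidableEq α]

theorem exists_subset_card_eq_inter_card_le {b : ℕ} {S : Finset α} (A : Finset α)
    (hb : b ≤ #S) : ∃ P ⊆ S, #P = b ∧ #(P ∩ A) ≤ b - #(S \ A) := by
  obtain ⟨U, hUS, hUcard⟩ := exists_subset_card_eq (min_le_right b #(S \ A))
  obtain ⟨P, hUP, hPS, hPcard⟩ := exists_subsuperset_card_eq (hUS.trans sdiff_subset)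
    (hUcard.trans_le (min_le_left _ _)) hb
  have hPA : P ∩ A ⊆ P \ U := fun x hx =>
    mem_sdiff.2 ⟨(mem_inter.1 hx).1, fun hxU => (mem_sdiff.1 (hUS hxU)).2 (mem_inter.1 hx).2⟩
  have := (card_le_card hPA).trans_eq (card_sdiff_of_subset hUP)
  exact ⟨P, hPS, hPcard, by omega⟩

theorem IsPathColoringUpTo.exists_extend {L : ℕ → Finset α} {b k : ℕ} {φ : ℕ → Finset α}
    (hφ : IsPathColoringUpTo L b k φ) (hroom : b + #(φ k ∩ L (k + 1)) ≤ #(L (k + 1))) :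
    ∃ ψ, IsPathColoringUpTo L b (k + 1) ψ ∧
      #(ψ (k + 1) ∩ L (k + 2)) ≤
        b + #(φ k ∩ L (k + 1)) + #(L (k + 1) ∩ L (k + 2)) - #(L (k + 1)) := by
  set S := L (k + 1)
  set A := L (k + 2)
  have hpool : #(S \ φ k) = #S - #(φ k ∩ S) := card_sdiff (s := φ k) (t := S)
  obtain ⟨P, hP, hPcard, hPA⟩ :=
    exists_subset_card_eq_inter_card_le A (show b ≤ #(S \ φ k) by omega)
  have hfree : #(S \ φ k) - #(S ∩ A) ≤ #((S \ φ k) \ A) := by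
    rw [card_sdiff (s := A)]
    exact Nat.sub_le_sub_left (card_le_card fun x => by simp only [mem_inter, mem_sdiff]; tauto) _
  refine ⟨_, hφ.extend (hP.trans sdiff_subset) hPcard
    (disjoint_left.2 fun x hxφ hxP => (mem_sdiff.1 (hP hxP)).2 hxφ), ?_⟩
  simp only [show ¬k + 1 ≤ k by omega, if_false]
  omega

theorem exists_isPathColoringUpTo {L : ℕ → Finset α} {a b c : ℕ} (hbc : b + c ≤ a)
    (h0 : #(L 0) = b) :
    ∀ k, (∀ j, 0 < j → j ≤ k → #(L j) = a) → (∀ j ≤ k, #(L j ∩ L (j + 1)) ≤ c) →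
      ∃ φ, IsPathColoringUpTo L b k φ ∧ #(φ k ∩ L (k + 1)) ≤ min b c - k * (a - b - c)
  | 0, _, hsep => by
    refine ⟨fun _ => L 0, ⟨fun j hj => ?_, fun j hj => absurd hj j.not_lt_zero⟩, ?_⟩
    · obtain rfl := Nat.le_zero.1 hj
      exact ⟨Subset.rfl, h0⟩
    have : #(L 0 ∩ L 1) ≤ b := (card_le_card inter_subset_left).trans_eq h0
    have : #(L 0 ∩ L 1) ≤ c := hsep 0 le_rfl
    show #(L 0 ∩ L 1) ≤ min b c - 0 * (a - b - c)
    simp only [zero_mul, Nat.sub_zero]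
    omega
  | k + 1, hmid, hsep => by
    obtain ⟨φ, hφ, he⟩ := exists_isPathColoringUpTo hbc h0 k
      (fun j hj hjk => hmid j hj (by omega)) (fun j hj => hsep j (by omega))
    have ha : #(L (k + 1)) = a := hmid (k + 1) k.succ_pos le_rfl
    have hc' : #(L (k + 1) ∩ L (k + 2)) ≤ c := hsep (k + 1) le_rfl
    obtain ⟨ψ, hψ, hψe⟩ := hφ.exists_extend (by omega)
    rw [ha] at hψe
    refine ⟨ψ, hψ, hψe.trans ?_⟩
    rw [add_mul, one_mul]
    omega

end Greedy

theorem mul_cFloor_le_or {n a b : ℕ} (hn : 3 ≤ n) (hba : b ≤ a) :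
    n * cFloor n a b ≤ (n - 1) * (a - b) ∨
      2 * b + (n - 2) * cFloor n a b ≤ (n - 1) * (a - b) := by
  unfold cFloor
  split_ifs with hlt
  · exact .inl (Nat.mul_div_le _ _)
  · right
    obtain ⟨m, rfl⟩ : ∃ m, n = m + 3 := ⟨n - 3, by omega⟩
    obtain ⟨x, rfl⟩ : ∃ x, a = b + x := ⟨a - b, by omega⟩
    simp only [show m + 3 - 1 = m + 2 by omega, show 2 * (m + 3) - 1 = 2 * m + 5 by omega,
      show m + 3 - 2 = m + 1 by omega, Nat.add_sub_cancel_left] at hlt ⊢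
    have h2b : 2 * b ≤ (m + 2) * x := by nlinarith
    have := Nat.mul_div_le ((m + 2) * x - 2 * b) (m + 1)
    omega

theorem add_cFloor_le {n a b : ℕ} (hn : 3 ≤ n) (hba : b ≤ a) (h : n * a < 2 * (n + 1) * b) :
    b + cFloor n a b ≤ a := by
  have hc := mul_cFloor_le_or hn hba
  obtain ⟨m, rfl⟩ : ∃ m, n = m + 3 := ⟨n - 3, by omega⟩
  obtain ⟨x, rfl⟩ : ∃ x, a = b + x := ⟨a - b, by omega⟩
  generalize cFloor (m + 3) (b + x) b = c at hc ⊢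
  simp only [show m + 3 - 1 = m + 2 by omega, show m + 3 - 2 = m + 1 by omega,
    Nat.add_sub_cancel_left] at hc
  by_contra! hxc
  have hmc := Nat.mul_le_mul_left (m + 1) (show x + 1 ≤ c by omega)
  rcases hc with hc | hc <;> nlinarith

theorem two_mul_min_cFloor_le {n a b : ℕ} (hn : 3 ≤ n) (hba : b ≤ a)
    (h : n * a < 2 * (n + 1) * b) :
    2 * min b (cFloor n a b) ≤ (a - b) + (n - 2) * (a - b - cFloor n a b) := by
  have hca := add_cFloor_le hn hba h
  have hc := mul_cFloor_le_or hn hba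
  obtain ⟨m, rfl⟩ : ∃ m, n = m + 3 := ⟨n - 3, by omega⟩
  generalize cFloor (m + 3) a b = c at hc hca ⊢
  obtain ⟨y, rfl⟩ : ∃ y, a = b + c + y := ⟨a - b - c, by omega⟩
  simp only [show m + 3 - 1 = m + 2 by omega, show m + 3 - 2 = m + 1 by omega,
    show b + c + y - b = c + y by omega, Nat.add_sub_cancel_left] at hc ⊢
  rcases hc with hc | hc
  · have := min_le_right b c; nlinarith
  · have := min_le_left b c; nlinarith

theorem path_colorable_of_sep_le_cFloor (n a b : ℕ) (hn : 3 ≤ n) (hba : b ≤ a)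
    (h : n * a < 2 * (n + 1) * b) (L : Fin (n + 1) → Finset ℕ)
    (h1 : (L 0).card = b) (h2 : (L (Fin.last n)).card = b)
    (ha : ∀ i : Fin (n + 1), 0 < i.val → i.val < n → (L i).card = a)
    (hsep : ∀ u v, (pathGraph (n + 1)).Adj u v → (L u ∩ L v).card ≤ cFloor n a b) :
    ∃ φ, IsLbColoring (pathGraph (n + 1)) L b φ := by
  have hbc := add_cFloor_le hn hba h
  have hfin := two_mul_min_cFloor_le hn hba h
  set c := cFloor n a b
  obtain ⟨m, rfl⟩ : ∃ m, n = m + 2 := ⟨n - 2, by omega⟩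
  rw [Nat.add_sub_cancel] at hfin
  set M : ℕ → Finset ℕ := fun j => L (Fin.ofNat (m + 3) j)
  have hM : ∀ j (hj : j < m + 3), M j = L ⟨j, hj⟩ := fun j hj =>
    congrArg L (Fin.ext (Nat.mod_eq_of_lt hj))
  have hsepM : ∀ j ≤ m + 1, #(M j ∩ M (j + 1)) ≤ c := fun j hj => by
    rw [hM j (by omega), hM (j + 1) (by omega)]
    exact hsep _ _ (pathGraph_adj.2 (.inl rfl))
  have hmid : ∀ j, 0 < j → j ≤ m + 1 → #(M j) = a := fun j hj0 hjm => by
    rw [hM j (by omega)]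
    exact ha _ hj0 (Nat.lt_of_le_of_lt hjm (Nat.lt_succ_self _))
  have hlast : #(M (m + 2)) = b := by rw [hM _ (by omega)]; exact h2
  obtain ⟨φ, hφ, he⟩ := exists_isPathColoringUpTo hbc (by rw [hM 0 (by omega)]; exact h1) m
    (fun j hj0 hjm => hmid j hj0 (by omega)) (fun j hj => hsepM j (by omega))
  have hM' : #(M (m + 1) ∩ M (m + 2)) ≤ min b c :=
    le_min ((card_le_card inter_subset_right).trans_eq hlast) (hsepM (m + 1) le_rfl)
  have ha' := hmid (m + 1) m.succ_pos le_rfl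
  obtain ⟨ψ, hψ, hψe⟩ := hφ.exists_extend (by omega)
  have hdisj : Disjoint (ψ (m + 1)) (M (m + 2)) :=
    disjoint_iff_inter_eq_empty.2 (card_eq_zero.1 (by omega))
  exact ⟨_, (hψ.extend Subset.rfl hlast hdisj).isLbColoring_pathGraph⟩
end

section
/- Let n, a, b be integers with n ≥ 4, b ≤ a and na < 2(n+1)b, and let c = ⌊c(n,a,b)⌋ + 1. Then there exists a list assignment L of the path P_{n+1} with |L_1| = |L_{n+1}| = b, |L_i| = a for 2 ≤ i ≤ n, |L_i ∩ L_{i+1}| ≤ c for 1 ≤ i ≤ n, and L_1 = L_{n+1}, such that no (L,b)-coloring of P_{n+1} exists. -/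
open SimpleGraph Finset

namespace PNC
lemma parity_card (N : ℕ) :
    (((Finset.Ico 1 N).filter (fun j => j % 2 = 1)).card = N / 2) ∧
    (((Finset.Ico 1 N).filter (fun j => ¬ j % 2 = 1)).card = (N - 1) / 2) := by
  induction N with
  | zero => simp
  | succ N ih =>
    rcases Nat.eq_zero_or_pos N with h0 | h1
    · subst h0; simp
    · have hins : Finset.Ico 1 (N + 1) = insert N (Finset.Ico 1 N) := by
        ext x; simp [Finset.mem_Ico, Finset.mem_insert]; omega
      have hnm : N ∉ Finset.Ico 1 N := by simp
      rcases Nat.mod_two_eq_zero_or_one N with he | ho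
      · have : ¬ (N % 2 = 1) := by omega
        rw [hins, Finset.filter_insert, Finset.filter_insert, if_neg this, if_pos this,
          Finset.card_insert_of_notMem (by simp [Finset.mem_filter])]
        constructor
        · rw [ih.1]; omega
        · rw [ih.2]; omega
      · rw [hins, Finset.filter_insert, Finset.filter_insert, if_pos ho, if_neg (by omega),
          Finset.card_insert_of_notMem (by simp [Finset.mem_filter])]
        constructor
        · rw [ih.1]; omega
        · rw [ih.2]; omega




def cp (n a b : ℕ) : ℕ := cFloor n a b + 1
def kk (n a b : ℕ) : ℕ := min b (cp n a b)
def AA (n a b : ℕ) : ℕ := min (cp n a b) (a - kk n a b)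
def BB (n a b : ℕ) : ℕ := min (AA n a b) (a - AA n a b)

lemma mshift (u c w v : ℕ) (h : u + c = w) : u * v + c * v = w * v := by
  rw [← h, add_mul]

lemma star (n a b : ℕ) (hn : 4 ≤ n) (hba : b ≤ a) (h : n * a < 2 * (n + 1) * b) :
    (n - 1) * (a - b) + 1 ≤
      (n - 1) / 2 * AA n a b + (n - 2) / 2 * BB n a b + 2 * kk n a b := by
  have hb1 : 1 ≤ b := by
    rcases Nat.eq_zero_or_pos b with rfl | h'
    · simp at h
    · exact h'
  obtain ⟨d, had⟩ : ∃ d, a = b + d := ⟨a - b, by omega⟩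
  have hab : a - b = d := by omega
  rw [hab]
  have hYW : (n - 1) * b + 1 * b = n * b := mshift _ _ _ _ (by omega)
  have hVW : (2 * n - 1) * b + 1 * b = 2 * n * b := mshift _ _ _ _ (by omega)
  have hexpa : (n - 1) * a = (n - 1) * b + (n - 1) * d := by rw [had, Nat.mul_add]
  by_cases hI : (n - 1) * a < (2 * n - 1) * b
  · -- CASE I
    have hnd : (n - 1) * d + 1 ≤ n * b := by linarith
    obtain ⟨q, r, hqr, hlt⟩ : ∃ q r, (n - 1) * d = n * q + r ∧ r < n :=
      ⟨(n - 1) * d / n, (n - 1) * d % n, (Nat.div_add_mod _ _).symm,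
        Nat.mod_lt _ (by omega)⟩
    have hC : cp n a b = q + 1 := by
      simp only [cp, cFloor, if_pos hI, hab]
      rw [hqr, Nat.mul_add_div (by omega : 0 < n), Nat.div_eq_of_lt hlt]
    have hqb : q + 1 ≤ b := by
      have h1 : n * q < n * b := by omega
      exact Nat.lt_of_mul_lt_mul_left h1
    have hkk : kk n a b = q + 1 := by
      rw [kk, hC]; exact min_eq_right (by omega)
    by_cases h2 : 2 * (q + 1) ≤ a
    · -- I.1 : AA = BB = q + 1
      have hAA : AA n a b = q + 1 := by
        rw [AA, hkk, hC]; exact min_eq_left (by omega)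
      have hBB : BB n a b = q + 1 := by
        rw [BB, hAA]; exact min_eq_left (by omega)
      rw [hAA, hBB, hkk]
      have hcnt : (n - 1) / 2 + ((n - 2) / 2 + 2) = n := by omega
      have hfold : (n - 1) / 2 * (q + 1) + (n - 2) / 2 * (q + 1) + 2 * (q + 1)
          = n * (q + 1) :=
        calc (n - 1) / 2 * (q + 1) + (n - 2) / 2 * (q + 1) + 2 * (q + 1)
            = ((n - 1) / 2 + ((n - 2) / 2 + 2)) * (q + 1) := by ring
          _ = n * (q + 1) := by rw [hcnt]
      rw [hfold]
      have hnc : n * (q + 1) = n * q + n * 1 := by rw [Nat.mul_add]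
      omega
    · -- I.2 : AA = BB = a - (q+1)
      push_neg at h2
      have hCb : q + 1 ≤ b := hqb
      have hCa : q + 1 ≤ a := le_trans hCb hba
      have hAA : AA n a b = a - (q + 1) := by
        rw [AA, hkk, hC]; exact min_eq_right (by omega)
      have hBB : BB n a b = a - (q + 1) := by
        rw [BB, hAA]
        have hea : a - (a - (q + 1)) = q + 1 := by omega
        rw [hea]; exact min_eq_left (by omega)
      obtain ⟨e, hae⟩ : ∃ e, a = (q + 1) + e := ⟨a - (q + 1), by omega⟩
      have hce : a - (q + 1) = e := by omega
      rw [hAA, hBB, hce, hkk]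
      have hd2b : d + 1 ≤ 2 * b := by
        by_contra hcon
        push_neg at hcon
        have h2bd : 2 * b ≤ d := by omega
        have hmul := Nat.mul_le_mul_left (n - 1) h2bd
        have hexp2 : (n - 1) * (2 * b) = 2 * ((n - 1) * b) := by ring
        omega
      have hcnt : (n - 1) / 2 + (n - 2) / 2 = n - 2 := by omega
      have hfold : (n - 1) / 2 * e + (n - 2) / 2 * e = (n - 2) * e :=
        calc (n - 1) / 2 * e + (n - 2) / 2 * e = ((n - 1) / 2 + (n - 2) / 2) * e := by
              ring
          _ = (n - 2) * e := by rw [hcnt]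
      rw [hfold]
      have hsplit : (n - 2) * e + (n - 2) * (q + 1) = (n - 2) * a := by
        rw [hae]; ring
      have hCb' : (n - 4) * (q + 1) ≤ (n - 4) * b := Nat.mul_le_mul_left _ hCb
      have hexp1 : (n - 2) * a = (n - 2) * b + (n - 2) * d := by rw [had, Nat.mul_add]
      have hx1 : (n - 4) * (q + 1) + 2 * (q + 1) = (n - 2) * (q + 1) :=
        mshift _ _ _ _ (by omega)
      have hx2 : (n - 4) * b + 2 * b = (n - 2) * b := mshift _ _ _ _ (by omega)
      have hx3 : (n - 2) * d + 1 * d = (n - 1) * d := mshift _ _ _ _ (by omega)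
      omega
  · -- CASE II
    push_neg at hI
    have hnb : n * b ≤ (n - 1) * d := by linarith
    have hble : 1 * b ≤ (n - 1) * b := Nat.mul_le_mul_right _ (by omega)
    have h2b : 2 * b ≤ (n - 1) * d := by linarith
    obtain ⟨x, hx⟩ : ∃ x, (n - 1) * d = 2 * b + x := ⟨(n - 1) * d - 2 * b, by omega⟩
    obtain ⟨q, r, hqr, hlt⟩ : ∃ q r, x = (n - 2) * q + r ∧ r < n - 2 :=
      ⟨x / (n - 2), x % (n - 2), (Nat.div_add_mod _ _).symm, Nat.mod_lt _ (by omega)⟩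
    have hC : cp n a b = q + 1 := by
      simp only [cp, cFloor, if_neg (not_lt.mpr hI), hab]
      have hnum : (n - 1) * d - 2 * b = x := by omega
      rw [hnum, hqr, Nat.mul_add_div (by omega : 0 < n - 2), Nat.div_eq_of_lt hlt]
    have hxb : (n - 2) * b ≤ x := by
      have hc : (n - 2) * b + 2 * b = n * b := mshift _ _ _ _ (by omega)
      omega
    have hbq : b ≤ q := by
      have hmlt : (n - 2) * b < (n - 2) * (q + 1) := by
        have hex : (n - 2) * (q + 1) = (n - 2) * q + (n - 2) * 1 := by rw [Nat.mul_add]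
        omega
      have := Nat.lt_of_mul_lt_mul_left hmlt
      omega
    have hkk : kk n a b = b := by
      rw [kk, hC]; exact min_eq_left (by omega)
    have hak : a - kk n a b = d := by rw [hkk]; omega
    by_cases hcd : q + 1 ≤ d
    · have hAA : AA n a b = q + 1 := by
        rw [AA, hak, hC]; exact min_eq_left hcd
      by_cases h2 : 2 * (q + 1) ≤ a
      · -- II.1a
        have hBB : BB n a b = q + 1 := by
          rw [BB, hAA]; exact min_eq_left (by omega)
        rw [hAA, hBB, hkk]
        have hcnt : (n - 1) / 2 + (n - 2) / 2 = n - 2 := by omega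
        have hfold : (n - 1) / 2 * (q + 1) + (n - 2) / 2 * (q + 1) = (n - 2) * (q + 1) :=
          calc (n - 1) / 2 * (q + 1) + (n - 2) / 2 * (q + 1)
              = ((n - 1) / 2 + (n - 2) / 2) * (q + 1) := by ring
            _ = (n - 2) * (q + 1) := by rw [hcnt]
        rw [hfold]
        have hnc : (n - 2) * (q + 1) = (n - 2) * q + (n - 2) * 1 := by rw [Nat.mul_add]
        omega
      · -- II.1b
        push_neg at h2
        have hda : d ≤ a := by omega
        have hCa : q + 1 ≤ a := le_trans hcd hda
        have hBB : BB n a b = a - (q + 1) := by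
          rw [BB, hAA]; exact min_eq_right (by omega)
        obtain ⟨e2, hae⟩ : ∃ e2, a = (q + 1) + e2 := ⟨a - (q + 1), by omega⟩
        have hce : a - (q + 1) = e2 := by omega
        rw [hAA, hBB, hkk, hce]
        have hde : b + 1 ≤ d := by omega
        obtain ⟨f, hf⟩ : ∃ f, d = b + f := ⟨d - b, by omega⟩
        have ha2 : a = 2 * b + f := by omega
        rcases Nat.even_or_odd n with ⟨m, hm⟩ | ⟨m, hm⟩
        · -- n even, n = m + m
          have hm2 : 2 ≤ m := by omega
          have hc1 : (n - 1) / 2 = m - 1 := by omega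
          have hc2 : (n - 2) / 2 = m - 1 := by omega
          rw [hc1, hc2]
          have h' : (m + m) * a < 2 * (m + m + 1) * b := by rw [← hm]; exact h
          have hma : m * a < 2 * (m * b) + b := by linarith
          have hfold : (m - 1) * (q + 1) + (m - 1) * e2 = (m - 1) * a := by
            rw [hae]; ring
          have hx1 : (m - 1) * a + 1 * a = m * a := mshift _ _ _ _ (by omega)
          have hx2 : (n - 1) * d + 1 * d = 2 * m * d := mshift _ _ _ _ (by omega)
          have hx2' : 2 * m * d = 2 * (m * d) := by ring
          have hx3 : m * a = m * b + m * d := by rw [had, Nat.mul_add]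
          omega
        · -- n odd, n = 2 * m + 1
          have hm2 : 2 ≤ m := by omega
          have hc1 : (n - 1) / 2 = m := by omega
          have hc2 : (n - 2) / 2 = m - 1 := by omega
          rw [hc1, hc2]
          have h' : (2 * m + 1) * a < 2 * (2 * m + 1 + 1) * b := by rw [← hm]; exact h
          have h'' : (2 * m + 1) * a = 4 * (m * b) + 2 * b + 2 * (m * f) + f := by
            rw [ha2]; ring
          have hkey : 2 * (m * f) + f < 2 * b := by linarith
          have hcpf : m * f + f + 1 ≤ q + 1 := by omega
          have hfold : (m - 1) * (q + 1) + (m - 1) * e2 = (m - 1) * a := by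
            rw [hae]; ring
          have hx1 : (m - 1) * a + 1 * a = m * a := mshift _ _ _ _ (by omega)
          have hx0 : (m - 1) * (q + 1) + 1 * (q + 1) = m * (q + 1) :=
            mshift _ _ _ _ (by omega)
          have hx2 : (n - 1) * d + 1 * d = (2 * m + 1) * d := mshift _ _ _ _ (by omega)
          have hx2' : (2 * m + 1) * d = 2 * (m * d) + d := by ring
          have hx3 : m * a = m * b + m * d := by rw [had, Nat.mul_add]
          have hx4 : m * d = m * b + m * f := by rw [hf, Nat.mul_add]
          omega
    · -- II.2 : AA = d, BB = b
      push_neg at hcd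
      have hAA : AA n a b = d := by
        rw [AA, hak, hC]; exact min_eq_right (by omega)
      have hdb : b < d := by
        have h1 : (n - 1) * b < (n - 1) * d := by omega
        exact Nat.lt_of_mul_lt_mul_left h1
      have hBB : BB n a b = b := by
        rw [BB, hAA]
        have hadb : a - d = b := by omega
        rw [hadb]; exact min_eq_right (by omega)
      rw [hAA, hBB, hkk]
      have h2bd : 2 * b ≤ d := by
        have hmul := Nat.mul_le_mul_left (n - 2) (show d + 1 ≤ q + 1 by omega)
        have hex1 : (n - 2) * (d + 1) = (n - 2) * d + (n - 2) * 1 := by rw [Nat.mul_add]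
        have hex2 : (n - 2) * (q + 1) = (n - 2) * q + (n - 2) * 1 := by rw [Nat.mul_add]
        have hex3 : (n - 2) * d + 1 * d = (n - 1) * d := mshift _ _ _ _ (by omega)
        omega
      rcases Nat.even_or_odd n with ⟨m, hm⟩ | ⟨m, hm⟩
      · -- n even
        have hm2 : 2 ≤ m := by omega
        have hc1 : (n - 1) / 2 = m - 1 := by omega
        have hc2 : (n - 2) / 2 = m - 1 := by omega
        rw [hc1, hc2]
        have h' : (m + m) * a < 2 * (m + m + 1) * b := by rw [← hm]; exact h
        have hma : m * a < 2 * (m * b) + b := by linarith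
        have hx1 : (m - 1) * d + 1 * d = m * d := mshift _ _ _ _ (by omega)
        have hx1' : (m - 1) * b + 1 * b = m * b := mshift _ _ _ _ (by omega)
        have hx2 : (n - 1) * d + 1 * d = 2 * m * d := mshift _ _ _ _ (by omega)
        have hx2' : 2 * m * d = 2 * (m * d) := by ring
        have hx3 : m * a = m * b + m * d := by rw [had, Nat.mul_add]
        omega
      · -- n odd : contradiction
        exfalso
        have hm2 : 2 ≤ m := by omega
        have hmul := Nat.mul_le_mul_left (2 * m + 1) h2bd
        have hexp2 : (2 * m + 1) * (2 * b) = 4 * (m * b) + 2 * b := by ring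
        have hble2 : 1 * b ≤ m * b := Nat.mul_le_mul_right _ (by omega)
        have h' : (2 * m + 1) * a < 2 * (2 * m + 1 + 1) * b := by rw [← hm]; exact h
        have hx3 : (2 * m + 1) * a = (2 * m + 1) * b + (2 * m + 1) * d := by
          rw [had, Nat.mul_add]
        have hx4 : (2 * m + 1) * b = 2 * (m * b) + b := by ring
        have hx5 : 2 * (2 * m + 1 + 1) * b = 4 * (m * b) + 4 * b := by ring
        omega


/-- pair-block sizes on interior edges -/
def g (n a b j : ℕ) : ℕ :=
  if 1 ≤ j ∧ j ≤ n - 2 then (if j % 2 = 1 then AA n a b else BB n a b) else 0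

def off (n a b j : ℕ) : ℕ := b + (j - 1) * cp n a b

def PP (n a b j : ℕ) : Finset ℕ := Finset.Ico (off n a b j) (off n a b j + g n a b j)

def kv (n a b i : ℕ) : ℕ := if i = 1 ∨ i = n - 1 then kk n a b else 0

def mm (n a b i : ℕ) : ℕ := kv n a b i + g n a b (i - 1) + g n a b i

def MM (n a b : ℕ) : ℕ := b + n * cp n a b

def FF (n a b i : ℕ) : Finset ℕ :=
  Finset.Ico (MM n a b + i * a) (MM n a b + i * a + (a - mm n a b i))

def LL (n a b i : ℕ) : Finset ℕ :=
  if i = 0 ∨ i = n then Finset.Ico 0 b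
  else Finset.Ico 0 (kv n a b i) ∪ PP n a b (i - 1) ∪ PP n a b i ∪ FF n a b i


section basic
variable (n a b : ℕ)

lemma kk_le_b : kk n a b ≤ b := min_le_left _ _
lemma kk_le_cp : kk n a b ≤ cp n a b := min_le_right _ _
lemma AA_le_cp : AA n a b ≤ cp n a b := min_le_left _ _
lemma AA_le : AA n a b ≤ a - kk n a b := min_le_right _ _
lemma BB_le_AA : BB n a b ≤ AA n a b := min_le_left _ _
lemma BB_le : BB n a b ≤ a - AA n a b := min_le_right _ _
lemma cp_pos : 1 ≤ cp n a b := Nat.le_add_left _ _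
lemma b_le_MM : b ≤ MM n a b := Nat.le_add_right _ _

lemma g_le_AA (j : ℕ) : g n a b j ≤ AA n a b := by
  unfold g
  split
  · split
    · exact le_rfl
    · exact BB_le_AA n a b
  · exact Nat.zero_le _

lemma g_le_cp (j : ℕ) : g n a b j ≤ cp n a b :=
  le_trans (g_le_AA n a b j) (AA_le_cp n a b)

lemma g_zero {j : ℕ} (h : ¬(1 ≤ j ∧ j ≤ n - 2)) : g n a b j = 0 := if_neg h

lemma g_even_le {j : ℕ} (h : j % 2 = 0) : g n a b j ≤ BB n a b := by
  unfold g
  split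
  · rw [if_neg (by omega)]
  · exact Nat.zero_le _

lemma g_pair_le {i : ℕ} (hi : 1 ≤ i) :
    g n a b (i - 1) + g n a b i ≤ AA n a b + BB n a b := by
  rcases Nat.even_or_odd i with ⟨m, hm⟩ | ⟨m, hm⟩
  · have h1 : i % 2 = 0 := by omega
    have h2 := g_even_le n a b h1
    have h3 := g_le_AA n a b (i - 1)
    omega
  · have h1 : (i - 1) % 2 = 0 := by omega
    have h2 := g_even_le n a b h1
    have h3 := g_le_AA n a b i
    omega

lemma kab_le (hba : b ≤ a) : kk n a b ≤ a := le_trans (kk_le_b n a b) hba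

lemma mm_le_a (hn : 4 ≤ n) (hba : b ≤ a) (i : ℕ) : mm n a b i ≤ a := by
  have hk := kab_le n a b hba
  have hA := AA_le n a b
  have hB := BB_le n a b
  have hAa : AA n a b ≤ a := le_trans hA (Nat.sub_le _ _)
  have hsub1 : kk n a b + (a - kk n a b) = a := Nat.add_sub_cancel' hk
  have hsub2 : AA n a b + (a - AA n a b) = a := Nat.add_sub_cancel' hAa
  unfold mm kv
  split
  · rename_i hi
    rcases hi with h1 | h1
    · subst h1
      have hg0 : g n a b (1 - 1) = 0 := g_zero n a b (by omega)
      have := g_le_AA n a b 1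
      have hkk := kk_le_b n a b
      omega
    · have hg0 : g n a b (n - 1) = 0 := g_zero n a b (by omega)
      have := g_le_AA n a b (n - 1 - 1)
      have hkk := kk_le_b n a b
      subst h1
      omega
  · rename_i hi
    push_neg at hi
    rcases Nat.eq_zero_or_pos i with rfl | hipos
    · have hg0 : g n a b 0 = 0 := g_zero n a b (by omega)
      have hg0' : g n a b (0 - 1) = 0 := g_zero n a b (by omega)
      omega
    · have := g_pair_le n a b hipos
      have hsub1 : kk n a b + (a - kk n a b) = a := Nat.add_sub_cancel' hk
      have hsub2 : AA n a b + (a - AA n a b) = a := Nat.add_sub_cancel' hAa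
      omega

-- membership elimination lemmas
lemma mem_PP_elim {x j : ℕ} (hx : x ∈ PP n a b j) :
    1 ≤ j ∧ j ≤ n - 2 ∧ b + (j - 1) * cp n a b ≤ x ∧ x < b + j * cp n a b := by
  rw [PP, Finset.mem_Ico] at hx
  by_cases hj : 1 ≤ j ∧ j ≤ n - 2
  · refine ⟨hj.1, hj.2, hx.1, ?_⟩
    have h1 : off n a b j + g n a b j ≤ b + (j - 1) * cp n a b + cp n a b := by
      have := g_le_cp n a b j
      unfold off
      omega
    have h2 : (j - 1) * cp n a b + cp n a b = j * cp n a b := by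
      have : (j - 1) + 1 = j := by omega
      calc (j - 1) * cp n a b + cp n a b = ((j - 1) + 1) * cp n a b := by ring
        _ = j * cp n a b := by rw [this]
    omega
  · rw [g_zero n a b hj] at hx
    omega

lemma mem_PP_lower {x j : ℕ} (hx : x ∈ PP n a b j) : b ≤ x := by
  rw [PP, Finset.mem_Ico] at hx
  have : b ≤ off n a b j := Nat.le_add_right _ _
  omega

lemma mem_PP_upper {x j : ℕ} (hx : x ∈ PP n a b j) : x < MM n a b := by
  obtain ⟨h1, h2, h3, h4⟩ := mem_PP_elim n a b hx
  have : j * cp n a b ≤ n * cp n a b := Nat.mul_le_mul_right _ (by omega)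
  unfold MM
  omega

lemma PP_inj {x j j' : ℕ} (hx : x ∈ PP n a b j) (hx' : x ∈ PP n a b j') : j = j' := by
  obtain ⟨h1, h2, h3, h4⟩ := mem_PP_elim n a b hx
  obtain ⟨h1', h2', h3', h4'⟩ := mem_PP_elim n a b hx'
  by_contra hne
  rcases Nat.lt_or_ge j j' with hlt | hge
  · have : j * cp n a b ≤ (j' - 1) * cp n a b := Nat.mul_le_mul_right _ (by omega)
    omega
  · have hlt' : j' < j := by omega
    have : j' * cp n a b ≤ (j - 1) * cp n a b := Nat.mul_le_mul_right _ (by omega)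
    omega

lemma mem_FF_elim {x i : ℕ} (hx : x ∈ FF n a b i) :
    MM n a b + i * a ≤ x ∧ x < MM n a b + i * a + a := by
  rw [FF, Finset.mem_Ico] at hx
  have : a - mm n a b i ≤ a := Nat.sub_le _ _
  omega

lemma mem_FF_lower {x i : ℕ} (hx : x ∈ FF n a b i) : MM n a b ≤ x := by
  have := (mem_FF_elim n a b hx).1
  omega

lemma FF_inj {x i i' : ℕ} (hx : x ∈ FF n a b i) (hx' : x ∈ FF n a b i') : i = i' := by
  obtain ⟨h1, h2⟩ := mem_FF_elim n a b hx
  obtain ⟨h1', h2'⟩ := mem_FF_elim n a b hx'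
  by_contra hne
  rcases Nat.lt_or_ge i i' with hlt | hge
  · have e1 : i * a + a = (i + 1) * a := by ring
    have e2 : (i + 1) * a ≤ i' * a := Nat.mul_le_mul_right _ (by omega)
    omega
  · have hlt' : i' < i := by omega
    have e1 : i' * a + a = (i' + 1) * a := by ring
    have e2 : (i' + 1) * a ≤ i * a := Nat.mul_le_mul_right _ (by omega)
    omega

lemma kv_lt_b {x i : ℕ} (hx : x ∈ Finset.Ico 0 (kv n a b i)) :
    x < b ∧ (i = 1 ∨ i = n - 1) := by
  rw [Finset.mem_Ico] at hx
  have hk := kk_le_b n a b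
  unfold kv at hx
  by_cases hi : i = 1 ∨ i = n - 1
  · rw [if_pos hi] at hx
    exact ⟨by omega, hi⟩
  · rw [if_neg hi] at hx
    omega

end basic


section cards
variable (n a b : ℕ)

lemma LL_end_card (hn : 4 ≤ n) : LL n a b 0 = Finset.Ico 0 b ∧ LL n a b n = Finset.Ico 0 b := by
  constructor
  · rw [LL, if_pos (Or.inl rfl)]
  · rw [LL, if_pos (Or.inr rfl)]

lemma LL_interior (i : ℕ) (h0 : 0 < i) (h1 : i < n) :
    LL n a b i = Finset.Ico 0 (kv n a b i) ∪ PP n a b (i - 1) ∪ PP n a b i ∪ FF n a b i := by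
  rw [LL, if_neg (by omega)]

lemma LL_interior_card (hn : 4 ≤ n) (hba : b ≤ a) (i : ℕ) (h0 : 0 < i) (h1 : i < n) :
    (LL n a b i).card = a := by
  rw [LL_interior n a b i h0 h1]
  have d1 : Disjoint (Finset.Ico 0 (kv n a b i)) (PP n a b (i - 1)) := by
    rw [Finset.disjoint_left]
    intro x hx hx'
    have := (kv_lt_b n a b hx).1
    have := mem_PP_lower n a b hx'
    omega
  have d2 : Disjoint (Finset.Ico 0 (kv n a b i) ∪ PP n a b (i - 1)) (PP n a b i) := by
    rw [Finset.disjoint_left]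
    intro x hx hx'
    rcases Finset.mem_union.mp hx with hx | hx
    · have := (kv_lt_b n a b hx).1
      have := mem_PP_lower n a b hx'
      omega
    · have := PP_inj n a b hx hx'
      have := (mem_PP_elim n a b hx).1
      omega
  have d3 : Disjoint (Finset.Ico 0 (kv n a b i) ∪ PP n a b (i - 1) ∪ PP n a b i)
      (FF n a b i) := by
    rw [Finset.disjoint_left]
    intro x hx hx'
    have hMM := mem_FF_lower n a b hx'
    have hbM := b_le_MM n a b
    rcases Finset.mem_union.mp hx with hx | hx
    · rcases Finset.mem_union.mp hx with hx | hx
      · have := (kv_lt_b n a b hx).1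
        omega
      · have := mem_PP_upper n a b hx
        omega
    · have := mem_PP_upper n a b hx
      omega
  rw [Finset.card_union_of_disjoint d3, Finset.card_union_of_disjoint d2,
    Finset.card_union_of_disjoint d1]
  have c1 : (Finset.Ico 0 (kv n a b i)).card = kv n a b i := by
    rw [Nat.card_Ico]; omega
  have c2 : (PP n a b (i - 1)).card = g n a b (i - 1) := by
    rw [PP, Nat.card_Ico]; omega
  have c3 : (PP n a b i).card = g n a b i := by
    rw [PP, Nat.card_Ico]; omega
  have c4 : (FF n a b i).card = a - mm n a b i := by
    rw [FF, Nat.card_Ico]; omega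
  have hm := mm_le_a n a b hn hba i
  rw [c1, c2, c3, c4]
  unfold mm at *
  omega

-- intersections
lemma inter_end_left (hn : 4 ≤ n) :
    LL n a b 0 ∩ LL n a b 1 ⊆ Finset.Ico 0 (kk n a b) := by
  intro x hx
  rw [Finset.mem_inter] at hx
  obtain ⟨hx0, hx1⟩ := hx
  rw [(LL_end_card n a b hn).1, Finset.mem_Ico] at hx0
  rw [LL_interior n a b 1 (by omega) (by omega)] at hx1
  have hbM := b_le_MM n a b
  rcases Finset.mem_union.mp hx1 with hx1 | hx1
  · rcases Finset.mem_union.mp hx1 with hx1 | hx1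
    · rcases Finset.mem_union.mp hx1 with hx1 | hx1
      · rw [Finset.mem_Ico] at hx1 ⊢
        unfold kv at hx1
        rw [if_pos (Or.inl rfl)] at hx1
        omega
      · have := mem_PP_lower n a b hx1
        omega
    · have := mem_PP_lower n a b hx1
      omega
  · have := mem_FF_lower n a b hx1
    omega

lemma inter_end_right (hn : 4 ≤ n) :
    LL n a b (n - 1) ∩ LL n a b n ⊆ Finset.Ico 0 (kk n a b) := by
  intro x hx
  rw [Finset.mem_inter] at hx
  obtain ⟨hx1, hx0⟩ := hx
  rw [(LL_end_card n a b hn).2, Finset.mem_Ico] at hx0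
  rw [LL_interior n a b (n - 1) (by omega) (by omega)] at hx1
  have hbM := b_le_MM n a b
  rcases Finset.mem_union.mp hx1 with hx1 | hx1
  · rcases Finset.mem_union.mp hx1 with hx1 | hx1
    · rcases Finset.mem_union.mp hx1 with hx1 | hx1
      · rw [Finset.mem_Ico] at hx1 ⊢
        unfold kv at hx1
        rw [if_pos (Or.inr rfl)] at hx1
        omega
      · have := mem_PP_lower n a b hx1
        omega
    · have := mem_PP_lower n a b hx1
      omega
  · have := mem_FF_lower n a b hx1
    omega

lemma inter_interior (hn : 4 ≤ n) (hb : 1 ≤ b) (i : ℕ) (h1 : 1 ≤ i) (h2 : i ≤ n - 2) :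
    LL n a b i ∩ LL n a b (i + 1) ⊆ PP n a b i := by
  intro x hx
  rw [Finset.mem_inter] at hx
  obtain ⟨hxl, hxr⟩ := hx
  rw [LL_interior n a b i (by omega) (by omega)] at hxl
  rw [LL_interior n a b (i + 1) (by omega) (by omega)] at hxr
  have hbM := b_le_MM n a b
  -- first kill B-part and FF/PP ranges on the right as needed
  have hright : (x < b → (i + 1 = 1 ∨ i + 1 = n - 1) ∧ x < kk n a b) ∧
      (b ≤ x → x < MM n a b → (x ∈ PP n a b i ∨ x ∈ PP n a b (i + 1))) := by
    constructor
    · intro hxb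
      rcases Finset.mem_union.mp hxr with hx1 | hx1
      · rcases Finset.mem_union.mp hx1 with hx1 | hx1
        · rcases Finset.mem_union.mp hx1 with hx1 | hx1
          · have h := kv_lt_b n a b hx1
            rw [Finset.mem_Ico] at hx1
            have : kv n a b (i + 1) ≤ kk n a b := by
              unfold kv; split <;> omega
            exact ⟨h.2, by omega⟩
          · have := mem_PP_lower n a b hx1
            omega
        · have := mem_PP_lower n a b hx1
          omega
      · have := mem_FF_lower n a b hx1
        omega
    · intro hxb hxM
      rcases Finset.mem_union.mp hxr with hx1 | hx1
      · rcases Finset.mem_union.mp hx1 with hx1 | hx1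
        · rcases Finset.mem_union.mp hx1 with hx1 | hx1
          · have := (kv_lt_b n a b hx1).1
            omega
          · have hii : (i + 1) - 1 = i := by omega
            rw [hii] at hx1
            exact Or.inl hx1
        · exact Or.inr hx1
      · have := mem_FF_lower n a b hx1
        omega
  rcases Finset.mem_union.mp hxl with hx1 | hx1
  · rcases Finset.mem_union.mp hx1 with hx1 | hx1
    · rcases Finset.mem_union.mp hx1 with hx1 | hx1
      · -- B part on the left: impossible
        obtain ⟨hxb, hi⟩ := kv_lt_b n a b hx1
        have := (hright.1 hxb).1
        omega
      · -- PP (i-1) on the left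
        exfalso
        have hl := mem_PP_elim n a b hx1
        have hxb : b ≤ x := mem_PP_lower n a b hx1
        have hxM : x < MM n a b := mem_PP_upper n a b hx1
        rcases hright.2 hxb hxM with hr | hr
        · have := PP_inj n a b hx1 hr
          omega
        · have := PP_inj n a b hx1 hr
          omega
    · exact hx1
  · -- FF i on the left: impossible
    exfalso
    have hxM : MM n a b ≤ x := mem_FF_lower n a b hx1
    have hxb : b ≤ x := by omega
    rcases Finset.mem_union.mp hxr with hx2 | hx2
    · rcases Finset.mem_union.mp hx2 with hx2 | hx2
      · rcases Finset.mem_union.mp hx2 with hx2 | hx2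
        · have := (kv_lt_b n a b hx2).1
          omega
        · have := mem_PP_upper n a b hx2
          omega
      · have := mem_PP_upper n a b hx2
        omega
    · have := FF_inj n a b hx1 hx2
      omega

lemma inter_card (hn : 4 ≤ n) (hb : 1 ≤ b) (hba : b ≤ a) (i : ℕ) (hi : i < n) :
    (LL n a b i ∩ LL n a b (i + 1)).card ≤ cp n a b := by
  have hkc : kk n a b ≤ cp n a b := min_le_right _ _
  rcases Nat.eq_zero_or_pos i with rfl | hpos
  · calc (LL n a b 0 ∩ LL n a b 1).card ≤ (Finset.Ico 0 (kk n a b)).card :=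
        Finset.card_le_card (inter_end_left n a b hn)
      _ ≤ cp n a b := by rw [Nat.card_Ico]; omega
  · rcases Nat.lt_or_ge i (n - 1) with hlt | hge
    · calc (LL n a b i ∩ LL n a b (i + 1)).card ≤ (PP n a b i).card :=
          Finset.card_le_card (inter_interior n a b hn hb i hpos (by omega))
        _ ≤ cp n a b := by
          rw [PP, Nat.card_Ico]
          have := g_le_cp n a b i
          omega
    · have hieq : i = n - 1 := by omega
      subst hieq
      have hnn : n - 1 + 1 = n := by omega
      rw [hnn]
      calc (LL n a b (n - 1) ∩ LL n a b n).card ≤ (Finset.Ico 0 (kk n a b)).card :=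
          Finset.card_le_card (inter_end_right n a b hn)
        _ ≤ cp n a b := by rw [Nat.card_Ico]; omega

end cards

lemma no_coloring (n a b : ℕ) (hn : 4 ≤ n) (hba : b ≤ a) (h : n * a < 2 * (n + 1) * b) :
    ¬ ∃ φ, IsLbColoring (pathGraph (n + 1)) (fun v : Fin (n + 1) => LL n a b v.val) b φ := by
  have hb1 : 1 ≤ b := by
    rcases Nat.eq_zero_or_pos b with rfl | h'
    · simp at h
    · exact h'
  rintro ⟨φ, hsub, hdisj⟩
  have hadj : ∀ u v : Fin (n + 1), u.val + 1 = v.val → ∀ x, x ∈ φ u → x ∈ φ v → False := by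
    intro u v huv x h1 h2
    have hA : (pathGraph (n + 1)).Adj u v := pathGraph_adj.mpr (Or.inl huv)
    have he := hdisj u v hA
    have hmem : x ∈ φ u ∩ φ v := Finset.mem_inter.mpr ⟨h1, h2⟩
    rw [he] at hmem
    exact absurd hmem (Finset.notMem_empty x)
  set N₀ := MM n a b + n * a + a with hN0
  have hbN : b ≤ N₀ := by have := b_le_MM n a b; omega
  have hLT : ∀ v : Fin (n + 1), LL n a b v.val ⊆ Finset.Ico 0 N₀ := by
    intro v x hx
    rw [Finset.mem_Ico]
    refine ⟨Nat.zero_le _, ?_⟩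
    have hval : v.val ≤ n := by omega
    rw [LL] at hx
    split at hx
    · rw [Finset.mem_Ico] at hx
      omega
    · rcases Finset.mem_union.mp hx with hx | hx
      · rcases Finset.mem_union.mp hx with hx | hx
        · rcases Finset.mem_union.mp hx with hx | hx
          · have := (kv_lt_b n a b hx).1
            omega
          · have := mem_PP_upper n a b hx
            omega
        · have := mem_PP_upper n a b hx
          omega
      · have h1 := (mem_FF_elim n a b hx).2
        have h2 : v.val * a ≤ n * a := Nat.mul_le_mul_right _ hval
        omega
  -- the big sum identity
  have hsum : (n + 1) * b
      = ∑ x ∈ Finset.Ico 0 N₀, (Finset.univ.filter (fun v : Fin (n + 1) => x ∈ φ v)).card := by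
    have h1 : ∀ v : Fin (n + 1),
        (φ v).card = ∑ x ∈ Finset.Ico 0 N₀, if x ∈ φ v then 1 else 0 := by
      intro v
      have hfe : (Finset.Ico 0 N₀).filter (fun x => x ∈ φ v) = φ v := by
        apply Finset.Subset.antisymm
        · intro x hx; exact (Finset.mem_filter.mp hx).2
        · intro x hx; exact Finset.mem_filter.mpr ⟨hLT v ((hsub v).1 hx), hx⟩
      calc (φ v).card = ((Finset.Ico 0 N₀).filter (fun x => x ∈ φ v)).card := by rw [hfe]
        _ = ∑ x ∈ Finset.Ico 0 N₀, if x ∈ φ v then 1 else 0 := Finset.card_filter _ _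
    calc (n + 1) * b = ∑ _v : Fin (n + 1), b := by
          rw [Finset.sum_const, Finset.card_univ, Fintype.card_fin, smul_eq_mul]
      _ = ∑ v : Fin (n + 1), (φ v).card :=
          (Finset.sum_congr rfl (fun v _ => (hsub v).2)).symm
      _ = ∑ v : Fin (n + 1), ∑ x ∈ Finset.Ico 0 N₀, if x ∈ φ v then 1 else 0 :=
          Finset.sum_congr rfl (fun v _ => h1 v)
      _ = ∑ x ∈ Finset.Ico 0 N₀, ∑ v : Fin (n + 1), if x ∈ φ v then 1 else 0 :=
          Finset.sum_comm
      _ = ∑ x ∈ Finset.Ico 0 N₀,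
            (Finset.univ.filter (fun v : Fin (n + 1) => x ∈ φ v)).card :=
          Finset.sum_congr rfl (fun x _ => (Finset.card_filter _ _).symm)
  have hmemL : ∀ (x : ℕ) (v : Fin (n + 1)),
      v ∈ Finset.univ.filter (fun v : Fin (n + 1) => x ∈ φ v) → x ∈ LL n a b v.val := by
    intro x v hv
    exact (hsub v).1 (Finset.mem_filter.mp hv).2
  have hphimem : ∀ (x : ℕ) (v : Fin (n + 1)),
      v ∈ Finset.univ.filter (fun v : Fin (n + 1) => x ∈ φ v) → x ∈ φ v := by
    intro x v hv; exact (Finset.mem_filter.mp hv).2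
  -- bound for B colors
  have hbound1 : ∀ x, x < b →
      (Finset.univ.filter (fun v : Fin (n + 1) => x ∈ φ v)).card ≤ 2 := by
    intro x hxb
    set S := Finset.univ.filter (fun v : Fin (n + 1) => x ∈ φ v) with hS
    have hvals : ∀ v ∈ S, v.val = 0 ∨ v.val = 1 ∨ v.val = n - 1 ∨ v.val = n := by
      intro v hv
      have hL := hmemL x v hv
      rw [LL] at hL
      split at hL
      · rename_i hc; omega
      · rcases Finset.mem_union.mp hL with hx' | hx'
        · rcases Finset.mem_union.mp hx' with hx' | hx'
          · rcases Finset.mem_union.mp hx' with hx' | hx'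
            · have := (kv_lt_b n a b hx').2
              omega
            · have := mem_PP_lower n a b hx'
              omega
          · have := mem_PP_lower n a b hx'
            omega
        · have := mem_FF_lower n a b hx'
          have := b_le_MM n a b
          omega
    have hsplit := Finset.card_filter_add_card_filter_not
      (s := S) (p := fun v => v.val ≤ 1)
    have hc1 : (S.filter (fun v => v.val ≤ 1)).card ≤ 1 := by
      rw [Finset.card_le_one]
      intro u hu w hw
      obtain ⟨hu1, hu2⟩ := Finset.mem_filter.mp hu
      obtain ⟨hw1, hw2⟩ := Finset.mem_filter.mp hw
      by_contra hne
      have hvne : u.val ≠ w.val := fun hh => hne (Fin.val_injective hh)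
      have hor : u.val + 1 = w.val ∨ w.val + 1 = u.val := by omega
      rcases hor with h' | h'
      · exact hadj u w h' x (hphimem x u hu1) (hphimem x w hw1)
      · exact hadj w u h' x (hphimem x w hw1) (hphimem x u hu1)
    have hc2 : (S.filter (fun v => ¬ v.val ≤ 1)).card ≤ 1 := by
      rw [Finset.card_le_one]
      intro u hu w hw
      obtain ⟨hu1, hu2⟩ := Finset.mem_filter.mp hu
      obtain ⟨hw1, hw2⟩ := Finset.mem_filter.mp hw
      have hu3 := hvals u hu1
      have hw3 := hvals w hw1
      by_contra hne
      have hvne : u.val ≠ w.val := fun hh => hne (Fin.val_injective hh)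
      have hor : u.val + 1 = w.val ∨ w.val + 1 = u.val := by omega
      rcases hor with h' | h'
      · exact hadj u w h' x (hphimem x u hu1) (hphimem x w hw1)
      · exact hadj w u h' x (hphimem x w hw1) (hphimem x u hu1)
    omega
  -- the pair/filler union
  set PF := ((Finset.Ico 1 (n - 1)).biUnion (PP n a b)) ∪
      ((Finset.Ico 1 n).biUnion (FF n a b)) with hPFdef
  have hbound2 : ∀ x, b ≤ x →
      (Finset.univ.filter (fun v : Fin (n + 1) => x ∈ φ v)).card
        ≤ if x ∈ PF then 1 else 0 := by
    intro x hxb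
    set S := Finset.univ.filter (fun v : Fin (n + 1) => x ∈ φ v) with hS
    have hloc : ∀ v ∈ S,
        (x ∈ PP n a b (v.val - 1) ∨ x ∈ PP n a b v.val ∨ x ∈ FF n a b v.val)
          ∧ 1 ≤ v.val ∧ v.val ≤ n - 1 := by
      intro v hv
      have hL := hmemL x v hv
      rw [LL] at hL
      split at hL
      · rw [Finset.mem_Ico] at hL
        omega
      · rename_i hc
        push_neg at hc
        have hvb : 1 ≤ v.val ∧ v.val ≤ n - 1 := by
          have : v.val ≤ n := by omega
          omega
        refine ⟨?_, hvb⟩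
        rcases Finset.mem_union.mp hL with hx' | hx'
        · rcases Finset.mem_union.mp hx' with hx' | hx'
          · rcases Finset.mem_union.mp hx' with hx' | hx'
            · have := (kv_lt_b n a b hx').1
              omega
            · exact Or.inl hx'
          · exact Or.inr (Or.inl hx')
        · exact Or.inr (Or.inr hx')
    by_cases hPF : x ∈ PF
    · rw [if_pos hPF]
      rw [Finset.card_le_one]
      intro u hu w hw
      obtain ⟨hu1, hu2, hu3⟩ := hloc u hu
      obtain ⟨hw1, hw2, hw3⟩ := hloc w hw
      have key : u.val = w.val ∨ u.val + 1 = w.val ∨ w.val + 1 = u.val := by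
        rcases hu1 with hu' | hu' | hu'
        · rcases hw1 with hw' | hw' | hw'
          · have := PP_inj n a b hu' hw'
            have := (mem_PP_elim n a b hu').1
            omega
          · have := PP_inj n a b hu' hw'
            have := (mem_PP_elim n a b hu').1
            omega
          · have := mem_PP_upper n a b hu'
            have := mem_FF_lower n a b hw'
            omega
        · rcases hw1 with hw' | hw' | hw'
          · have := PP_inj n a b hu' hw'
            have := (mem_PP_elim n a b hw').1
            omega
          · have := PP_inj n a b hu' hw'
            omega
          · have := mem_PP_upper n a b hu'
            have := mem_FF_lower n a b hw'
            omega
        · rcases hw1 with hw' | hw' | hw'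
          · have := mem_PP_upper n a b hw'
            have := mem_FF_lower n a b hu'
            omega
          · have := mem_PP_upper n a b hw'
            have := mem_FF_lower n a b hu'
            omega
          · have := FF_inj n a b hu' hw'
            omega
      rcases key with h' | h' | h'
      · exact Fin.val_injective h'
      · exact absurd (hadj u w h' x (hphimem x u hu) (hphimem x w hw)) not_false
      · exact absurd (hadj w u h' x (hphimem x w hw) (hphimem x u hu)) not_false
    · rw [if_neg hPF]
      rw [Nat.le_zero, Finset.card_eq_zero]
      rw [Finset.eq_empty_iff_forall_notMem]
      intro v hv
      obtain ⟨h1, h2, h3⟩ := hloc v hv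
      apply hPF
      rcases h1 with h' | h' | h'
      · have he := mem_PP_elim n a b h'
        exact Finset.mem_union_left _
          (Finset.mem_biUnion.mpr ⟨v.val - 1, Finset.mem_Ico.mpr ⟨he.1, by omega⟩, h'⟩)
      · have he := mem_PP_elim n a b h'
        exact Finset.mem_union_left _
          (Finset.mem_biUnion.mpr ⟨v.val, Finset.mem_Ico.mpr ⟨he.1, by omega⟩, h'⟩)
      · exact Finset.mem_union_right _
          (Finset.mem_biUnion.mpr ⟨v.val, Finset.mem_Ico.mpr ⟨h2, by omega⟩, h'⟩)
  -- cardinality of PF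
  have hPPdisj : ∀ j ∈ Finset.Ico 1 (n - 1), ∀ j' ∈ Finset.Ico 1 (n - 1), j ≠ j' →
      Disjoint (PP n a b j) (PP n a b j') := by
    intro j _ j' _ hne
    rw [Finset.disjoint_left]
    intro x hx hx'
    exact hne (PP_inj n a b hx hx')
  have hFFdisj : ∀ i ∈ Finset.Ico 1 n, ∀ i' ∈ Finset.Ico 1 n, i ≠ i' →
      Disjoint (FF n a b i) (FF n a b i') := by
    intro i _ i' _ hne
    rw [Finset.disjoint_left]
    intro x hx hx'
    exact hne (FF_inj n a b hx hx')
  have hPFcard : PF.card = (∑ j ∈ Finset.Ico 1 (n - 1), g n a b j)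
      + ∑ i ∈ Finset.Ico 1 n, (a - mm n a b i) := by
    rw [hPFdef]
    rw [Finset.card_union_of_disjoint]
    · rw [Finset.card_biUnion hPPdisj, Finset.card_biUnion hFFdisj]
      congr 1
      · exact Finset.sum_congr rfl (fun j _ => by rw [PP, Nat.card_Ico]; omega)
      · exact Finset.sum_congr rfl (fun i _ => by rw [FF, Nat.card_Ico]; omega)
    · rw [Finset.disjoint_left]
      intro x hx hx'
      obtain ⟨j, _, hj⟩ := Finset.mem_biUnion.mp hx
      obtain ⟨i, _, hi⟩ := Finset.mem_biUnion.mp hx'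
      have := mem_PP_upper n a b hj
      have := mem_FF_lower n a b hi
      omega
  -- sum splits
  have hsplitT : (∑ x ∈ Finset.Ico 0 b,
        (Finset.univ.filter (fun v : Fin (n + 1) => x ∈ φ v)).card)
      + ∑ x ∈ Finset.Ico b N₀,
        (Finset.univ.filter (fun v : Fin (n + 1) => x ∈ φ v)).card
      = ∑ x ∈ Finset.Ico 0 N₀,
        (Finset.univ.filter (fun v : Fin (n + 1) => x ∈ φ v)).card :=
    Finset.sum_Ico_consecutive _ (Nat.zero_le b) hbN
  have hb2 : (∑ x ∈ Finset.Ico 0 b,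
      (Finset.univ.filter (fun v : Fin (n + 1) => x ∈ φ v)).card) ≤ 2 * b := by
    calc (∑ x ∈ Finset.Ico 0 b,
        (Finset.univ.filter (fun v : Fin (n + 1) => x ∈ φ v)).card)
        ≤ ∑ _x ∈ Finset.Ico 0 b, 2 :=
          Finset.sum_le_sum (fun x hx => hbound1 x (by
            have := Finset.mem_Ico.mp hx; omega))
      _ = 2 * b := by rw [Finset.sum_const, Nat.card_Ico, smul_eq_mul]; omega
  have hb3 : (∑ x ∈ Finset.Ico b N₀,
      (Finset.univ.filter (fun v : Fin (n + 1) => x ∈ φ v)).card) ≤ PF.card := by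
    calc (∑ x ∈ Finset.Ico b N₀,
        (Finset.univ.filter (fun v : Fin (n + 1) => x ∈ φ v)).card)
        ≤ ∑ x ∈ Finset.Ico b N₀, if x ∈ PF then 1 else 0 :=
          Finset.sum_le_sum (fun x hx => hbound2 x (Finset.mem_Ico.mp hx).1)
      _ = ((Finset.Ico b N₀).filter (fun x => x ∈ PF)).card :=
          (Finset.card_filter _ _).symm
      _ ≤ PF.card := Finset.card_le_card (fun x hx => (Finset.mem_filter.mp hx).2)
  -- compute the g-sum
  have hGsum : ∑ j ∈ Finset.Ico 1 (n - 1), g n a b j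
      = (n - 1) / 2 * AA n a b + (n - 2) / 2 * BB n a b := by
    have hcongr : ∀ j ∈ Finset.Ico 1 (n - 1),
        g n a b j = if j % 2 = 1 then AA n a b else BB n a b := by
      intro j hj
      obtain ⟨hj1, hj2⟩ := Finset.mem_Ico.mp hj
      rw [g, if_pos ⟨hj1, by omega⟩]
    rw [Finset.sum_congr rfl hcongr, Finset.sum_ite, Finset.sum_const, Finset.sum_const,
      (parity_card (n - 1)).1, (parity_card (n - 1)).2, smul_eq_mul, smul_eq_mul]
    have : n - 1 - 1 = n - 2 := by omega
    rw [this]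
  -- compute the mm-sum
  have hkvsum : ∑ i ∈ Finset.Ico 1 n, kv n a b i = 2 * kk n a b := by
    have h1 : ∑ i ∈ Finset.Ico 1 n, kv n a b i
        = ∑ i ∈ (Finset.Ico 1 n).filter (fun i => i = 1 ∨ i = n - 1), kk n a b := by
      rw [Finset.sum_filter]
      exact Finset.sum_congr rfl (fun i _ => by rw [kv])
    have h2 : (Finset.Ico 1 n).filter (fun i => i = 1 ∨ i = n - 1) = {1, n - 1} := by
      ext y
      simp only [Finset.mem_filter, Finset.mem_Ico, Finset.mem_insert, Finset.mem_singleton]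
      omega
    rw [h1, h2, Finset.sum_pair (by omega : (1 : ℕ) ≠ n - 1)]
    ring
  have hgshift : ∑ i ∈ Finset.Ico 1 n, g n a b (i - 1)
      = ∑ j ∈ Finset.Ico 1 (n - 1), g n a b j := by
    rw [Finset.sum_Ico_eq_sum_range]
    have h1 : ∀ i ∈ Finset.range (n - 1), g n a b (1 + i - 1) = g n a b i := by
      intro i _
      congr 1
      omega
    rw [Finset.sum_congr rfl h1]
    have h2 : Finset.range (n - 1) = insert 0 (Finset.Ico 1 (n - 1)) := by
      ext y
      simp only [Finset.mem_range, Finset.mem_insert, Finset.mem_Ico]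
      omega
    rw [h2, Finset.sum_insert (by simp), g_zero n a b (by omega)]
    omega
  have hgshift2 : ∑ i ∈ Finset.Ico 1 n, g n a b i
      = ∑ j ∈ Finset.Ico 1 (n - 1), g n a b j := by
    have h2 : Finset.Ico 1 n = insert (n - 1) (Finset.Ico 1 (n - 1)) := by
      ext y
      simp only [Finset.mem_insert, Finset.mem_Ico]
      omega
    rw [h2, Finset.sum_insert (by simp), g_zero n a b (by omega)]
    omega
  have hmmsum : ∑ i ∈ Finset.Ico 1 n, mm n a b i
      = 2 * kk n a b + 2 * ∑ j ∈ Finset.Ico 1 (n - 1), g n a b j := by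
    have h1 : ∀ i ∈ Finset.Ico 1 n, mm n a b i
        = kv n a b i + (g n a b (i - 1) + g n a b i) := by
      intro i _
      rw [mm]
      ring
    rw [Finset.sum_congr rfl h1, Finset.sum_add_distrib, Finset.sum_add_distrib,
      hkvsum, hgshift, hgshift2]
    ring
  have hFsum : (∑ i ∈ Finset.Ico 1 n, (a - mm n a b i))
      + ∑ i ∈ Finset.Ico 1 n, mm n a b i = (n - 1) * a := by
    rw [← Finset.sum_add_distrib]
    have h1 : ∀ i ∈ Finset.Ico 1 n, (a - mm n a b i) + mm n a b i = a := by
      intro i _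
      have := mm_le_a n a b hn hba i
      omega
    rw [Finset.sum_congr rfl h1, Finset.sum_const, Nat.card_Ico, smul_eq_mul]
  -- final contradiction
  have hstar := star n a b hn hba h
  have hmul1 : (n - 1) * (a - b) + (n - 1) * b = (n - 1) * a := by
    rw [← Nat.mul_add, Nat.sub_add_cancel hba]
  have hmul2 : (n - 1) * b + 2 * b = (n + 1) * b := mshift _ _ _ _ (by omega)
  omega


end PNC

theorem path_not_colorable_eq_ends (n a b : ℕ) (hn : 4 ≤ n) (hba : b ≤ a)
    (h : n * a < 2 * (n + 1) * b) :
    ∃ L : Fin (n + 1) → Finset ℕ,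
      (L 0).card = b ∧ (L (Fin.last n)).card = b ∧
      (∀ i : Fin (n + 1), 0 < i.val → i.val < n → (L i).card = a) ∧
      (∀ u v, (pathGraph (n + 1)).Adj u v → (L u ∩ L v).card ≤ cFloor n a b + 1) ∧
      L 0 = L (Fin.last n) ∧
      ¬ ∃ φ, IsLbColoring (pathGraph (n + 1)) L b φ := by
  have hb1 : 1 ≤ b := by
    rcases Nat.eq_zero_or_pos b with rfl | h'
    · simp at h
    · exact h'
  refine ⟨fun v => PNC.LL n a b v.val, ?_, ?_, ?_, ?_, ?_, ?_⟩
  · show (PNC.LL n a b (0 : Fin (n + 1)).val).card = b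
    rw [Fin.val_zero, (PNC.LL_end_card n a b hn).1, Nat.card_Ico]
    omega
  · show (PNC.LL n a b (Fin.last n).val).card = b
    rw [Fin.val_last, (PNC.LL_end_card n a b hn).2, Nat.card_Ico]
    omega
  · intro i h0 h1
    exact PNC.LL_interior_card n a b hn hba i.val h0 h1
  · intro u v hadj
    rw [SimpleGraph.pathGraph_adj] at hadj
    have key : ∀ w z : Fin (n + 1), w.val + 1 = z.val →
        ((PNC.LL n a b w.val) ∩ (PNC.LL n a b z.val)).card ≤ cFloor n a b + 1 := by
      intro w z hwz
      have hlt : w.val < n := by have := z.isLt; omega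
      have hc := PNC.inter_card n a b hn hb1 hba w.val hlt
      rw [show z.val = w.val + 1 from hwz.symm]
      simpa [PNC.cp] using hc
    rcases hadj with h' | h'
    · exact key u v h'
    · rw [Finset.inter_comm]; exact key v u h'
  · show PNC.LL n a b (0 : Fin (n + 1)).val = PNC.LL n a b (Fin.last n).val
    rw [Fin.val_zero, Fin.val_last, (PNC.LL_end_card n a b hn).1,
      (PNC.LL_end_card n a b hn).2]
  · exact PNC.no_coloring n a b hn hba h
end

section
/- Let n, a, b be integers with n ≥ 4, b ≤ a and na < 2(n+1)b, and let c = ⌊c(n,a,b)⌋ + 1. Then there exists a list assignment L of the path P_{n+1} with |L_1| = |L_{n+1}| = b, |L_i| = a for 2 ≤ i ≤ n, |L_i ∩ L_{i+1}| ≤ c for 1 ≤ i ≤ n, and L_1 ∩ L_{n+1} = ∅, such that no (L,b)-coloring of P_{n+1} exists. -/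
open SimpleGraph Finset

lemma sum_mod_two (N : ℕ) : ∑ i ∈ Finset.range N, i % 2 = N / 2 := by
  induction N with
  | zero => simp
  | succ n ih => rw [Finset.sum_range_succ, ih]; omega

lemma key2b (m b c D P Q R : ℕ)
    (hPQ : P = Q + c)
    (hD : D + 2*b + R = 2*P + (m+3))
    (hk : 2*(P + c) + (m+4) < 2*R + 4*b) :
    D + 1 ≤ Q + (m+3)/2 := by omega

lemma exists_interface (n a b : ℕ) (hn : 4 ≤ n) (hba : b ≤ a) (h : n * a < 2 * (n + 1) * b) :
    ∃ s : ℕ → ℕ, s 0 ≤ b ∧ s (n-1) ≤ b ∧ (∀ i, 1 ≤ i → i ≤ n - 1 → s (i-1) + s i ≤ a) ∧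
      (∀ i, s i ≤ cFloor n a b + 1) ∧ (n-1)*(a-b) + 1 ≤ ∑ i ∈ Finset.range n, s i := by
  obtain ⟨m, rfl⟩ : ∃ m, n = m + 4 := ⟨n - 4, by omega⟩
  obtain ⟨E, rfl⟩ : ∃ E, a = b + E := ⟨a - b, by omega⟩
  have hb1 : 1 ≤ b := by
    rcases Nat.eq_zero_or_pos b with rfl | h1
    · simp at h
    · exact h1
  have en1 : m + 4 - 1 = m + 3 := by omega
  have en2 : m + 4 - 2 = m + 2 := by omega
  have en3 : 2 * (m + 4) - 1 = 2*m + 7 := by omega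
  have eE : b + E - b = E := by omega
  simp only [en1, eE]
  rcases Nat.eq_zero_or_pos E with rfl | hE1
  · -- a = b case
    refine ⟨fun i => if i = 0 then 1 else 0, ?_, ?_, ?_, ?_, ?_⟩
    · simpa using hb1
    · simp
    · intro i h1i h2i
      simp only []
      split_ifs <;> omega
    · intro i
      simp only []
      split_ifs <;> omega
    · have e0 : (0:ℕ) = 0 := rfl
      rw [Nat.mul_zero]
      have h1 : (if (0:ℕ) = 0 then 1 else 0) ≤ ∑ i ∈ Finset.range (m+4), (if i = 0 then 1 else 0) :=
        Finset.single_le_sum (f := fun i => if i = 0 then (1:ℕ) else 0)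
          (fun i _ => Nat.zero_le _) (Finset.mem_range.mpr (by omega))
      simpa using h1
  · by_cases hcase : (m+3)*(b+E) < (2*m+7)*b
    · -- case 1
      have hc : cFloor (m+4) (b+E) b = (m+3)*E/(m+4) := by
        simp only [cFloor, en1, en2, en3, eE]
        rw [if_pos hcase]
      have hdm := Nat.div_add_mod ((m+3)*E) (m+4)
      have hr : (m+3)*E % (m+4) < m + 4 := Nat.mod_lt _ (by omega)
      have h1 : (m+3)*b + (m+3)*E = (m+3)*(b+E) := by ring
      have h2 : (2*m+7)*b = (m+3)*b + (m+4)*b := by ring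
      have hlt : (m+3)*E < (m+4)*b := by omega
      have hcb : (m+3)*E/(m+4) < b :=
        Nat.lt_of_mul_lt_mul_left (a := m+4) (by omega)
      have h3 : (m+3)*E + E = (m+4)*E := by ring
      have hcE : (m+3)*E/(m+4) < E :=
        Nat.lt_of_mul_lt_mul_left (a := m+4) (by omega)
      refine ⟨fun _ => (m+3)*E/(m+4) + 1, by simp only []; omega, by simp only []; omega,
        ?_, ?_, ?_⟩
      · intro i h1i h2i
        simp only []
        omega
      · intro i
        rw [hc]
      · rw [Finset.sum_const, Finset.card_range, smul_eq_mul]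
        have h4 : (m+4)*((m+3)*E/(m+4) + 1) = (m+4)*((m+3)*E/(m+4)) + (m+4) := by ring
        omega
    · -- case 2
      have h1 : (m+3)*b + (m+3)*E = (m+3)*(b+E) := by ring
      have h2 : (2*m+7)*b = (m+3)*b + (m+4)*b := by ring
      have hge : (m+4)*b ≤ (m+3)*E := by omega
      have h3 : (m+4)*(b+E) = (m+4)*b + (m+4)*E := by ring
      have h4 : 2*(m+4+1)*b = (m+4)*b + (m+6)*b := by ring
      have hh : (m+4)*E < (m+6)*b := by omega
      have h5 : (m+4)*b = m*b + 4*b := by ring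
      obtain ⟨D, hD⟩ : ∃ D, (m+3)*E = D + 2*b := ⟨(m+3)*E - 2*b, by omega⟩
      have hcfl : cFloor (m+4) (b+E) b = D/(m+2) := by
        simp only [cFloor, en1, en2, en3, eE]
        rw [if_neg hcase, show (m+3)*E - 2*b = D from by omega]
      obtain ⟨c, r, hcr, hr, hcd⟩ :
          ∃ c r, D = (m+2)*c + r ∧ r < m+2 ∧ c = D/(m+2) :=
        ⟨D/(m+2), D%(m+2), (Nat.div_add_mod D (m+2)).symm, Nat.mod_lt _ (by omega), rfl⟩
      have h6 : (m+4)*b = (m+2)*b + 2*b := by ring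
      have h7 : (m+2)*(c+1) = (m+2)*c + (m+2) := by ring
      have hbc : b < c + 1 :=
        Nat.lt_of_mul_lt_mul_left (a := m+2) (by omega)
      have e1 : (m+2)*(2*c) = 2*((m+2)*c) := by ring
      have e2 : (m+2)*(b+E) = (m+2)*b + (m+2)*E := by ring
      have e3 : 2*((m+3)*E) = (m+4)*E + (m+2)*E := by ring
      have e4 : (m+6)*b = (m+2)*b + 4*b := by ring
      have h2c : 2*c < b + E :=
        Nat.lt_of_mul_lt_mul_left (a := m+2) (by omega)
      by_cases hsub : 2*(c+1) ≤ b + E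
      · -- subcase 2a
        refine ⟨fun i => if i = 0 ∨ i = m+3 then b else c+1, ?_, ?_, ?_, ?_, ?_⟩
        · simp
        · simp
        · intro i h1i h2i
          simp only []
          split_ifs <;> omega
        · intro i
          rw [hcfl, ← hcd]
          simp only []
          split_ifs <;> omega
        · rw [show (m:ℕ)+4 = (m+3)+1 from by omega, Finset.sum_range_succ,
            Finset.sum_range_succ']
          have emid : ∀ i, i ∈ Finset.range (m+2) →
              (fun i => if i = 0 ∨ i = m+3 then b else c+1) (i+1) = c+1 := by
            intro i hi
            rw [Finset.mem_range] at hi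
            simp only []
            rw [if_neg (by omega)]
          rw [Finset.sum_congr rfl emid, Finset.sum_const, Finset.card_range, smul_eq_mul]
          simp only [true_or, or_true, if_true, eq_self_iff_true]
          omega
      · -- subcase 2b
        have ha2 : b + E = 2*c + 1 := by omega
        have hEb : E + b = 2*c + 1 := by omega
        have hDeq : D + 2*b + (m+3)*b = 2*((m+3)*c) + (m+3) := by
          calc D + 2*b + (m+3)*b = (m+3)*E + (m+3)*b := by omega
            _ = (m+3)*(E + b) := by ring
            _ = (m+3)*(2*c+1) := by rw [hEb]
            _ = 2*((m+3)*c) + (m+3) := by ring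
        have hkk : 2*((m+3)*c + c) + (m+4) < 2*((m+3)*b) + 4*b := by
          have c1 : 2*((m+3)*c + c) + (m+4) = (m+4)*(2*c+1) := by ring
          have c2 : (m+4)*(2*c+1) = (m+4)*(E+b) := by rw [hEb]
          have c3 : (m+4)*(E+b) = (m+4)*E + (m+4)*b := by ring
          have c4 : (m+6)*b + (m+4)*b = 2*((m+3)*b) + 4*b := by ring
          omega
        have final := key2b m b c D ((m+3)*c) ((m+2)*c) ((m+3)*b) (by ring) hDeq hkk
        refine ⟨fun i => if i = 0 ∨ i = m+3 then b else c + i % 2, ?_, ?_, ?_, ?_, ?_⟩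
        · simp
        · simp
        · intro i h1i h2i
          simp only []
          split_ifs <;> omega
        · intro i
          rw [hcfl, ← hcd]
          simp only []
          split_ifs <;> omega
        · rw [show (m:ℕ)+4 = (m+3)+1 from by omega, Finset.sum_range_succ,
            Finset.sum_range_succ']
          have emid : ∀ i, i ∈ Finset.range (m+2) →
              (fun i => if i = 0 ∨ i = m+3 then b else c + i % 2) (i+1) = c + (i+1) % 2 := by
            intro i hi
            rw [Finset.mem_range] at hi
            simp only []
            rw [if_neg (by omega)]
          rw [Finset.sum_congr rfl emid, Finset.sum_add_distrib, Finset.sum_const,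
            Finset.card_range, smul_eq_mul]
          have hmod : ∑ i ∈ Finset.range (m+2), (i+1) % 2 = (m+2+1)/2 := by
            have h1m := sum_mod_two (m+2+1)
            rw [Finset.sum_range_succ'] at h1m
            simpa using h1m
          rw [hmod]
          simp only [true_or, or_true, if_true, eq_self_iff_true]
          omega

lemma construction (n a b K : ℕ) (hn : 4 ≤ n) (hba : b ≤ a) (s : ℕ → ℕ)
    (hs0 : s 0 ≤ b) (hsn : s (n-1) ≤ b)
    (hpair : ∀ i, 1 ≤ i → i ≤ n - 1 → s (i-1) + s i ≤ a)
    (hcap : ∀ i, s i ≤ K)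
    (hsum : (n-1)*(a-b) + 1 ≤ ∑ i ∈ Finset.range n, s i) :
    ∃ L : Fin (n + 1) → Finset ℕ,
      (L 0).card = b ∧ (L (Fin.last n)).card = b ∧
      (∀ i : Fin (n + 1), 0 < i.val → i.val < n → (L i).card = a) ∧
      (∀ u v, (pathGraph (n + 1)).Adj u v → (L u ∩ L v).card ≤ K) ∧
      L 0 ∩ L (Fin.last n) = ∅ ∧
      ¬ ∃ φ, IsLbColoring (pathGraph (n + 1)) L b φ := by
  set M := a + 1 with hM
  have hsA : ∀ i, i < n → s i ≤ a := by
    intro i hi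
    rcases Nat.eq_zero_or_pos i with h0 | h0
    · subst h0; exact le_trans hs0 hba
    · have := hpair i h0 (by omega); omega
  set p : ℕ → ℕ := fun i =>
    if i = 0 then b - s 0 else if i = n then b - s (n-1) else a - (s (i-1) + s i) with hp
  have hpA : ∀ i, p i ≤ a := by
    intro i; simp only [hp]; split_ifs <;> omega
  set blk : ℕ → ℕ → Finset ℕ := fun k l => Finset.Ico (k*M) (k*M + l) with hblk
  have blk_card : ∀ k l, (blk k l).card = l := by
    intro k l; simp [hblk]
  have blk_div : ∀ k l x, l ≤ M → x ∈ blk k l → x / M = k := by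
    intro k l x hl hx
    simp only [hblk, Finset.mem_Ico] at hx
    have h2 : x < (k+1)*M := by
      have : (k+1)*M = k*M + M := by ring
      omega
    exact Nat.div_eq_of_lt_le hx.1 h2
  set L0 : ℕ → Finset ℕ := fun i =>
    blk (2*i+1) (p i) ∪ ((if i < n then blk (2*i+2) (s i) else ∅) ∪
      (if 0 < i then blk (2*i) (s (i-1)) else ∅)) with hL0
  -- membership facts
  have mem_bounds : ∀ i x, i ≤ n → x ∈ L0 i → 2*i ≤ x/M ∧ x/M ≤ 2*i + 2 := by
    intro i x hi hx
    simp only [hL0, Finset.mem_union] at hx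
    rcases hx with hx | hx | hx
    · have := blk_div _ _ _ (by have := hpA i; omega) hx; omega
    · by_cases hin : i < n
      · rw [if_pos hin] at hx
        have := blk_div _ _ _ (by have := hsA i hin; omega) hx; omega
      · rw [if_neg hin] at hx; simp at hx
    · by_cases hi0 : 0 < i
      · rw [if_pos hi0] at hx
        have := blk_div _ _ _ (by have := hsA (i-1) (by omega); omega) hx; omega
      · rw [if_neg hi0] at hx; simp at hx
  have mem_right : ∀ i x, i ≤ n → x ∈ L0 i → x / M = 2*i+2 → x ∈ blk (2*i+2) (s i) := by
    intro i x hi hx hdiv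
    simp only [hL0, Finset.mem_union] at hx
    rcases hx with hx | hx | hx
    · have := blk_div _ _ _ (by have := hpA i; omega) hx; omega
    · by_cases hin : i < n
      · rwa [if_pos hin] at hx
      · rw [if_neg hin] at hx; simp at hx
    · by_cases hi0 : 0 < i
      · rw [if_pos hi0] at hx
        have := blk_div _ _ _ (by have := hsA (i-1) (by omega); omega) hx; omega
      · rw [if_neg hi0] at hx; simp at hx
  have inter_succ : ∀ i, i + 1 ≤ n → L0 i ∩ L0 (i+1) = blk (2*i+2) (s i) := by
    intro i hi
    apply Finset.Subset.antisymm
    · intro x hx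
      rw [Finset.mem_inter] at hx
      have h1 := mem_bounds i x (by omega) hx.1
      have h2 := mem_bounds (i+1) x (by omega) hx.2
      exact mem_right i x (by omega) hx.1 (by omega)
    · intro x hx
      rw [Finset.mem_inter]
      constructor
      · simp only [hL0, Finset.mem_union]
        right; left; rw [if_pos (by omega)]; exact hx
      · simp only [hL0, Finset.mem_union]
        right; right; rw [if_pos (by omega)]
        have e1 : 2*(i+1) = 2*i+2 := by ring
        have e2 : i+1-1 = i := rfl
        rw [e1, e2]; exact hx
  have inter_far : ∀ i j, i + 2 ≤ j → j ≤ n → L0 i ∩ L0 j = ∅ := by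
    intro i j hij hj
    rw [Finset.eq_empty_iff_forall_notMem]
    intro x hx
    rw [Finset.mem_inter] at hx
    have h1 := mem_bounds i x (by omega) hx.1
    have h2 := mem_bounds j x (by omega) hx.2
    omega
  -- cardinalities
  have blk_disj : ∀ k l k' l', l ≤ M → l' ≤ M → k ≠ k' → Disjoint (blk k l) (blk k' l') := by
    intro k l k' l' hl hl' hkk
    rw [Finset.disjoint_left]
    intro x hx hx'
    exact hkk ((blk_div _ _ _ hl hx).symm.trans (blk_div _ _ _ hl' hx'))
  have cardL0 : ∀ i, i ≤ n → (L0 i).card =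
      p i + ((if i < n then s i else 0) + (if 0 < i then s (i-1) else 0)) := by
    intro i hi
    simp only [hL0]
    have d1 : Disjoint (blk (2*i+1) (p i))
        ((if i < n then blk (2*i+2) (s i) else ∅) ∪ (if 0 < i then blk (2*i) (s (i-1)) else ∅)) := by
      rw [Finset.disjoint_union_right]
      constructor
      · split_ifs with hc
        · exact blk_disj _ _ _ _ (by have := hpA i; omega) (by have := hsA i hc; omega) (by omega)
        · simp
      · split_ifs with hc
        · exact blk_disj _ _ _ _ (by have := hpA i; omega) (by have := hsA (i-1) (by omega); omega) (by omega)
        · simp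
    have d2 : Disjoint (if i < n then blk (2*i+2) (s i) else ∅)
        (if 0 < i then blk (2*i) (s (i-1)) else ∅) := by
      split_ifs with hc hc'
      · exact blk_disj _ _ _ _ (by have := hsA i hc; omega) (by have := hsA (i-1) (by omega); omega) (by omega)
      · simp
      · simp
      · simp
    rw [Finset.card_union_of_disjoint d1, Finset.card_union_of_disjoint d2, blk_card]
    congr 1
    congr 1
    · split_ifs with hc
      · exact blk_card _ _
      · simp
    · split_ifs with hc
      · exact blk_card _ _
      · simp
  have hp0 : p 0 = b - s 0 := by
    simp only [hp]
    simp
  have hpn : p n = b - s (n-1) := by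
    simp only [hp]
    rw [if_neg (show ¬ n = 0 by omega)]
    simp
  have hpmid : ∀ i, 0 < i → i < n → p i = a - (s (i-1) + s i) := by
    intro i h0 hilt
    simp only [hp]
    rw [if_neg (show ¬ i = 0 by omega), if_neg (show ¬ i = n by omega)]
  have cardL0_0 : (L0 0).card = b := by
    rw [cardL0 0 (by omega), hp0, if_pos (show 0 < n by omega),
      if_neg (show ¬ (0:ℕ) < 0 by omega)]
    omega
  have cardL0_n : (L0 n).card = b := by
    rw [cardL0 n (by omega), hpn, if_neg (show ¬ n < n by omega),
      if_pos (show 0 < n by omega)]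
    omega
  have cardL0_mid : ∀ i, 0 < i → i < n → (L0 i).card = a := by
    intro i h0 hilt
    rw [cardL0 i (by omega), hpmid i h0 hilt, if_pos hilt, if_pos h0]
    have := hpair i (by omega) (by omega)
    omega
  refine ⟨fun i => L0 i.val, ?_, ?_, ?_, ?_, ?_, ?_⟩
  · simpa using cardL0_0
  · simpa using cardL0_n
  · intro i h0 hlt; exact cardL0_mid i.val h0 hlt
  · intro u v hadj
    rw [pathGraph_adj] at hadj
    rcases hadj with hadj | hadj
    · have hun : u.val + 1 ≤ n := by omega
      have : L0 u.val ∩ L0 v.val = blk (2*u.val+2) (s u.val) := by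
        rw [← hadj]; exact inter_succ u.val hun
      simp only [this, blk_card]; exact hcap _
    · have hvn : v.val + 1 ≤ n := by omega
      have : L0 v.val ∩ L0 u.val = blk (2*v.val+2) (s v.val) := by
        rw [← hadj]; exact inter_succ v.val hvn
      rw [Finset.inter_comm]
      simp only [this, blk_card]; exact hcap _
  · simpa using inter_far 0 n (by omega) (by omega)
  · rintro ⟨φ, hprop, hdis⟩
    set ψ : ℕ → Finset ℕ := fun k => φ ⟨k % (n+1), Nat.mod_lt _ (by omega)⟩ with hψ
    have ψeq : ∀ k (hk : k ≤ n), ψ k = φ ⟨k, by omega⟩ := by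
      intro k hk
      simp only [hψ]
      congr 1
      exact Fin.ext (Nat.mod_eq_of_lt (by omega))
    have ψ_sub : ∀ k, k ≤ n → ψ k ⊆ L0 k := by
      intro k hk; rw [ψeq k hk]; exact (hprop _).1
    have ψ_card : ∀ k, (ψ k).card = b := fun k => (hprop _).2
    have ψ_dis : ∀ k, k < n → ψ k ∩ ψ (k+1) = ∅ := by
      intro k hk
      rw [ψeq k (by omega), ψeq (k+1) (by omega)]
      exact hdis _ _ (by rw [pathGraph_adj]; left; rfl)
    have hψ0 : ψ 0 = L0 0 := by
      rw [ψeq 0 (by omega)]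
      apply Finset.eq_of_subset_of_card_le
      · exact (hprop _).1
      · rw [(hprop _).2]
        exact le_of_eq cardL0_0
    have hψn : ψ n = L0 n := by
      rw [ψeq n (by omega)]
      apply Finset.eq_of_subset_of_card_le
      · exact (hprop _).1
      · rw [(hprop _).2]
        exact le_of_eq cardL0_n
    have claim : ∀ k, k ≤ n - 1 →
        (∑ i ∈ Finset.range (k+1), s i) + k*b ≤ (ψ k ∩ L0 (k+1)).card + k*a := by
      intro k
      induction k with
      | zero =>
        intro _
        rw [Finset.sum_range_one, hψ0, inter_succ 0 (by omega), blk_card]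
        omega
      | succ k ih =>
        intro hk
        have ihk := ih (by omega)
        have hAL : ψ k ∩ L0 (k+1) ⊆ L0 (k+1) := Finset.inter_subset_right
        have hBL : L0 (k+1) ∩ L0 (k+1+1) ⊆ L0 (k+1) := Finset.inter_subset_left
        have hCL : ψ (k+1) ⊆ L0 (k+1) := ψ_sub (k+1) (by omega)
        have hAC : Disjoint (ψ k ∩ L0 (k+1)) (ψ (k+1)) := by
          have : Disjoint (ψ k) (ψ (k+1)) :=
            Finset.disjoint_iff_inter_eq_empty.mpr (ψ_dis k (by omega))
          exact this.mono Finset.inter_subset_left (le_refl _)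
        have hAB : Disjoint (ψ k ∩ L0 (k+1)) (L0 (k+1) ∩ L0 (k+1+1)) := by
          have : Disjoint (L0 k) (L0 (k+1+1)) :=
            Finset.disjoint_iff_inter_eq_empty.mpr (inter_far k (k+1+1) (by omega) (by omega))
          exact this.mono (Finset.inter_subset_left.trans (ψ_sub k (by omega)))
            Finset.inter_subset_right
        have hABC : ((ψ k ∩ L0 (k+1)) ∪ ((L0 (k+1) ∩ L0 (k+1+1)) ∪ ψ (k+1))).card
            = (ψ k ∩ L0 (k+1)).card + ((L0 (k+1) ∩ L0 (k+1+1)) ∪ ψ (k+1)).card :=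
          Finset.card_union_of_disjoint (Finset.disjoint_union_right.mpr ⟨hAB, hAC⟩)
        have hBC : ((L0 (k+1) ∩ L0 (k+1+1)) ∪ ψ (k+1)).card
              + ((L0 (k+1) ∩ L0 (k+1+1)) ∩ ψ (k+1)).card
            = (L0 (k+1) ∩ L0 (k+1+1)).card + (ψ (k+1)).card :=
          Finset.card_union_add_card_inter _ _
        have hle : (ψ k ∩ L0 (k+1)).card + ((L0 (k+1) ∩ L0 (k+1+1)) ∪ ψ (k+1)).card ≤ a := by
          rw [← hABC]
          calc ((ψ k ∩ L0 (k+1)) ∪ ((L0 (k+1) ∩ L0 (k+1+1)) ∪ ψ (k+1))).card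
              ≤ (L0 (k+1)).card :=
                Finset.card_le_card (Finset.union_subset hAL (Finset.union_subset hBL hCL))
            _ = a := cardL0_mid (k+1) (by omega) (by omega)
        have hBCsub : ((L0 (k+1) ∩ L0 (k+1+1)) ∩ ψ (k+1)).card
            ≤ (ψ (k+1) ∩ L0 (k+1+1)).card := by
          apply Finset.card_le_card
          intro x hx
          rw [Finset.mem_inter] at hx ⊢
          exact ⟨hx.2, Finset.inter_subset_right hx.1⟩
        have hBcard : (L0 (k+1) ∩ L0 (k+1+1)).card = s (k+1) := by
          rw [inter_succ (k+1) (by omega), blk_card]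
        have hCcard : (ψ (k+1)).card = b := ψ_card (k+1)
        rw [Finset.sum_range_succ]
        have e1 : (k+1)*b = k*b + b := by ring
        have e2 : (k+1)*a = k*a + a := by ring
        rw [e1, e2]
        omega
    have hcl := claim (n-1) (le_refl _)
    have en : n - 1 + 1 = n := by omega
    rw [en] at hcl
    have hzero : (ψ (n-1) ∩ L0 n).card = 0 := by
      rw [← hψn]
      have := ψ_dis (n-1) (by omega)
      rw [en] at this
      rw [this]
      simp
    rw [hzero] at hcl
    have e3 : (n-1)*(a-b) + (n-1)*b = (n-1)*a := by
      rw [← Nat.left_distrib, Nat.sub_add_cancel hba]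
    omega

theorem path_not_colorable_disjoint_ends (n a b : ℕ) (hn : 4 ≤ n) (hba : b ≤ a)
    (h : n * a < 2 * (n + 1) * b) :
    ∃ L : Fin (n + 1) → Finset ℕ,
      (L 0).card = b ∧ (L (Fin.last n)).card = b ∧
      (∀ i : Fin (n + 1), 0 < i.val → i.val < n → (L i).card = a) ∧
      (∀ u v, (pathGraph (n + 1)).Adj u v → (L u ∩ L v).card ≤ cFloor n a b + 1) ∧
      L 0 ∩ L (Fin.last n) = ∅ ∧
      ¬ ∃ φ, IsLbColoring (pathGraph (n + 1)) L b φ := by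
  obtain ⟨s, h1, h2, h3, h4, h5⟩ := exists_interface n a b hn hba h
  exact construction n a b (cFloor n a b + 1) hn hba s h1 h2 h3 h4 h5
end

section
/- For all integers a ≥ b ≥ 1, the free-separation number of the triangle C_3 is: fsep(C_3, a, b) = ⌊2(a−b)/3⌋ if 4a < 7b; fsep(C_3, a, b) = 2a − 3b if 7b ≤ 4a and a < 3b; and fsep(C_3, a, b) = a if 3b ≤ a. -/
open SimpleGraph Finset

/-! Once vertex `v` is coloured by `C`, the other two vertices `u`, `w` need disjoint `b`-sets in
`L u \ C` and `L w \ C`; by Hall's condition for two sets these exist iff each of the two keeps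
`b` colours and their union keeps `2b`. Since `|L u ∩ C|, |L w ∩ C| ≤ min b c`,
`|L u ∩ L w| ≤ c` and `|(L u ∪ L w) ∩ C| ≤ min b (2c)`, this holds whenever
`2b + c + min b (2c) ≤ 2a`, and lists made of intervals attain all these bounds at once. So the
triangle is `(a,b,c)`-free-choosable exactly when `2b + c + min b (2c) ≤ 2a`, and `fsep` is the
largest `c ≤ a` with this property. -/

section

variable {α : Type*} [DecidableEq α]

theorem exists_disjoint_subsets_card_eq {A B : Finset α} {b : ℕ} (hA : b ≤ #A)
    (hB : b ≤ #B) (hAB : 2 * b ≤ #(A ∪ B)) :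
    ∃ S ⊆ A, ∃ T ⊆ B, Disjoint S T ∧ #S = b ∧ #T = b := by
  -- Put as much of `A \ B` as possible into `S`, so that `S` uses few colours of `B`.
  obtain ⟨D, hD, hDcard⟩ := exists_subset_card_eq (min_le_right b #(A \ B))
  obtain ⟨S, hDS, hSA, hS⟩ := exists_subsuperset_card_eq (hD.trans sdiff_subset) (by omega) hA
  have hBS : #(B ∩ S) ≤ #(S \ D) :=
    card_le_card fun x hx => mem_sdiff.2
      ⟨(mem_inter.1 hx).2, fun hxD => (mem_sdiff.1 (hD hxD)).2 (mem_inter.1 hx).1⟩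
  have hBS' : b ≤ #(B \ S) := by
    have := card_sdiff_add_card_inter B S
    have := card_sdiff_add_card A B
    rw [card_sdiff_of_subset hDS] at hBS
    omega
  obtain ⟨T, hTBS, hT⟩ := exists_subset_card_eq hBS'
  exact ⟨S, hSA, T, hTBS.trans sdiff_subset, disjoint_sdiff.mono_right hTBS, hS, hT⟩

theorem exists_disjoint_subsets_sdiff_card_eq {A B C : Finset α} {a b c : ℕ} (hA : #A = a)
    (hB : #B = a) (hC : #C = b) (hAC : #(A ∩ C) ≤ c) (hBC : #(B ∩ C) ≤ c)
    (hAB : #(A ∩ B) ≤ c) (h : 2 * b + c + min b (2 * c) ≤ 2 * a) :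
    ∃ S ⊆ A \ C, ∃ T ⊆ B \ C, Disjoint S T ∧ #S = b ∧ #T = b := by
  have hAC' : #(A ∩ C) ≤ b := hC ▸ card_le_card inter_subset_right
  have hBC' : #(B ∩ C) ≤ b := hC ▸ card_le_card inter_subset_right
  have hABC : #((A ∪ B) ∩ C) ≤ min b (2 * c) := by
    refine le_min (hC ▸ card_le_card inter_subset_right) ?_
    rw [union_inter_distrib_right]
    exact (card_union_le _ _).trans (by omega)
  apply exists_disjoint_subsets_card_eq
  · have := card_sdiff_add_card_inter A C
    omega
  · have := card_sdiff_add_card_inter B C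
    omega
  · have := card_sdiff_add_card_inter (A ∪ B) C
    have := card_union_add_card_inter A B
    rw [← union_sdiff_distrib]
    omega

end

theorem freeChoosable_cycleGraph_three_of_le {a b c : ℕ}
    (h : 2 * b + c + min b (2 * c) ≤ 2 * a) : FreeChoosable (cycleGraph 3) a b c := by
  intro L hL hsep v C hCL hC
  have hadj : ∀ i j : Fin 3, i ≠ j → (cycleGraph 3).Adj (v + i) (v + j) := by
    intro i j hij
    rw [cycleGraph_three_eq_top]
    simpa using hij
  have hsepC : ∀ i, i ≠ 0 → #(L (v + i) ∩ C) ≤ c := fun i hi =>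
    (card_le_card (inter_subset_inter_left hCL)).trans (by simpa using hsep _ _ (hadj i 0 hi))
  obtain ⟨S, hS, T, hT, hST, hSb, hTb⟩ := exists_disjoint_subsets_sdiff_card_eq (hL (v + 1))
    (hL (v + 2)) hC (hsepC 1 (by decide)) (hsepC 2 (by decide)) (hsep _ _ (hadj 1 2 (by decide))) h
  let ψ : Fin 3 → Finset ℕ := ![C, S, T]
  have hψL : ∀ i, ψ i ⊆ L (v + i) ∧ #(ψ i) = b := by
    intro i
    fin_cases i
    · simpa using ⟨hCL, hC⟩
    · exact ⟨hS.trans sdiff_subset, hSb⟩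
    · exact ⟨hT.trans sdiff_subset, hTb⟩
  have hψ : Pairwise (Function.onFun Disjoint ψ) := by
    have hCS : Disjoint C S := disjoint_sdiff.mono_right hS
    have hCT : Disjoint C T := disjoint_sdiff.mono_right hT
    intro i j hij
    fin_cases i <;> fin_cases j <;> first
      | exact absurd rfl hij
      | simp [ψ, Function.onFun, hCS, hCT, hST, hCS.symm, hCT.symm, hST.symm]
  refine ⟨fun x => ψ (x - v), ⟨fun x => by simpa using hψL (x - v), fun x y hxy => ?_⟩,
    by simp [ψ]⟩
  exact disjoint_iff_inter_eq_empty.1 (hψ (by simpa using hxy.ne))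

theorem IsLbColoring.two_mul_le_card_sdiff {V : Type*} {G : SimpleGraph V} {L φ : V → Finset ℕ}
    {b : ℕ} (hφ : IsLbColoring G L b φ) {u v w : V} (huw : G.Adj u w) (hvu : G.Adj v u)
    (hvw : G.Adj v w) : 2 * b ≤ #((L u ∪ L w) \ φ v) := by
  have hdisj : ∀ {x y}, G.Adj x y → Disjoint (φ x) (φ y) := fun hxy =>
    disjoint_iff_inter_eq_empty.2 (hφ.2 _ _ hxy)
  calc 2 * b = #(φ u ∪ φ w) := by
        rw [card_union_of_disjoint (hdisj huw), (hφ.1 u).2, (hφ.1 w).2, two_mul]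
    _ ≤ #((L u ∪ L w) \ φ v) := by
      rw [union_sdiff_distrib]
      exact card_le_card (union_subset_union (subset_sdiff.2 ⟨(hφ.1 u).1, (hdisj hvu).symm⟩)
        (subset_sdiff.2 ⟨(hφ.1 w).1, (hdisj hvw).symm⟩))

theorem not_freeChoosable_cycleGraph_three_of_lt {a b c : ℕ} (hba : b ≤ a) (hca : c ≤ a)
    (h : 2 * a < 2 * b + c + min b (2 * c)) : ¬ FreeChoosable (cycleGraph 3) a b c := by
  intro hfree
  set k := min b c
  set m := min b (2 * c)
  /- Precolour vertex `0` by the top `b` colours `C = [a - b, a)` of `L₀`. The lists `L₁` and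
  `L₂` meet `C` in `k` colours each, `2k - m` of them shared, and share `c + m - 2k` further
  colours outside `L₀`; after removing `C` they leave only `2a - c - m < 2b` colours. -/
  set L₀ := Ico 0 a
  set L₁ := Ico (a - k) (2 * a - k)
  set L₂ := Ico (a - m) (a - m + k) ∪ Ico (2 * a + k - c - m) (3 * a - c - m)
  have hL₂ : #L₂ = a := by
    rw [card_union_of_disjoint (disjoint_left.2 fun x hx hx' => by
      simp only [mem_Ico] at hx hx'
      omega)]
    simp only [Nat.card_Ico]
    omega
  have h01 : #(L₀ ∩ L₁) ≤ c := by
    refine (card_le_card (t := Ico (a - k) a) fun x => ?_).trans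
      (by simp only [Nat.card_Ico]; omega)
    simp only [L₀, L₁, mem_inter, mem_Ico]
    omega
  have h02 : #(L₀ ∩ L₂) ≤ c := by
    refine (card_le_card (t := Ico (a - m) (a - m + k)) fun x => ?_).trans
      (by simp only [Nat.card_Ico]; omega)
    simp only [L₀, L₂, mem_inter, mem_union, mem_Ico]
    omega
  have h12 : #(L₁ ∩ L₂) ≤ c := by
    refine (card_le_card (t := Ico (a - k) (a - m + k) ∪ Ico (2 * a + k - c - m) (2 * a - k))
      fun x => ?_).trans ((card_union_le _ _).trans (by simp only [Nat.card_Ico]; omega))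
    simp only [L₁, L₂, mem_inter, mem_union, mem_Ico]
    omega
  let L : Fin 3 → Finset ℕ := ![L₀, L₁, L₂]
  have hL : ∀ v, #(L v) = a := by
    intro v
    fin_cases v
    · exact (Nat.card_Ico 0 a).trans (Nat.sub_zero a)
    · exact (Nat.card_Ico _ _).trans (by omega)
    · exact hL₂
  have hsep : ∀ u v, (cycleGraph 3).Adj u v → #(L u ∩ L v) ≤ c := by
    intro u v huv
    fin_cases u <;> fin_cases v <;>
      first | exact absurd huv (by decide) | assumption | (rw [inter_comm]; assumption)
  obtain ⟨φ, hφ, hφ0⟩ := hfree L hL hsep 0 (Ico (a - b) a)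
    (Ico_subset_Ico_left (Nat.zero_le _)) ((Nat.card_Ico _ _).trans (by omega))
  have h2b := hφ.two_mul_le_card_sdiff (u := 1) (w := 2) (v := 0)
    (by decide) (by decide) (by decide)
  have hsub : (L 1 ∪ L 2) \ φ 0 ⊆ Ico a (3 * a - c - m) := by
    intro x
    simp only [L, L₁, L₂, hφ0, Matrix.cons_val_one, Matrix.cons_val_zero, Matrix.cons_val,
      mem_sdiff, mem_union, mem_Ico]
    omega
  have := (card_le_card hsub).trans_eq (Nat.card_Ico _ _)
  omega

theorem freeChoosable_cycleGraph_three_iff {a b c : ℕ} (hba : b ≤ a) (hca : c ≤ a) :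
    FreeChoosable (cycleGraph 3) a b c ↔ 2 * b + c + min b (2 * c) ≤ 2 * a :=
  ⟨fun hfree => not_lt.1 fun h => not_freeChoosable_cycleGraph_three_of_lt hba hca h hfree,
    freeChoosable_cycleGraph_three_of_le⟩

theorem fsep_eq_of_forall_freeChoosable_iff {V : Type*} {G : SimpleGraph V} {a b m : ℕ}
    (hm : m ≤ a) (h : ∀ c ≤ a, FreeChoosable G a b c ↔ c ≤ m) : fsep G a b = m := by
  have : {c | c ≤ a ∧ FreeChoosable G a b c} = Set.Iic m := Set.ext fun c =>
    ⟨fun ⟨hc, hfree⟩ => (h c hc).1 hfree,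
      fun hc => ⟨hc.trans hm, (h c (hc.trans hm)).2 hc⟩⟩
  rw [fsep, this, csSup_Iic]

theorem fsep_triangle_general (a b : ℕ) (hba : b ≤ a) :
    (4 * a < 7 * b → fsep (cycleGraph 3) a b = 2 * (a - b) / 3) ∧
    (7 * b ≤ 4 * a → a < 3 * b → fsep (cycleGraph 3) a b = 2 * a - 3 * b) ∧
    (3 * b ≤ a → fsep (cycleGraph 3) a b = a) := by
  have hfsep : ∀ m ≤ a, (∀ c ≤ a, 2 * b + c + min b (2 * c) ≤ 2 * a ↔ c ≤ m) →
      fsep (cycleGraph 3) a b = m := fun m hm h =>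
    fsep_eq_of_forall_freeChoosable_iff hm fun c hc =>
      (freeChoosable_cycleGraph_three_iff hba hc).trans (h c hc)
  refine ⟨fun h => hfsep _ (by omega) fun c _ => ?_, fun h h' => hfsep _ (by omega) fun c _ => ?_,
    fun h => hfsep _ le_rfl fun c hc => ?_⟩ <;> omega

theorem fsep_triangle (a b : ℕ) (hb : 1 ≤ b) (hba : b ≤ a) :
    (4 * a < 7 * b → fsep (cycleGraph 3) a b = 2 * (a - b) / 3) ∧
    (7 * b ≤ 4 * a → a < 3 * b → fsep (cycleGraph 3) a b = 2 * a - 3 * b) ∧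
    (3 * b ≤ a → fsep (cycleGraph 3) a b = a) :=
  fsep_triangle_general a b hba
end

section
/- Let a, b, c be nonnegative integers, let G be a simple graph, let x be a vertex of G, and let A, B be sets of vertices with A ∪ B = V(G), A ∩ B = {x}, and no edge of G joining a vertex of A \ {x} to a vertex of B \ {x}. If the induced subgraphs G[A] and G[B] are both (a,b,c)-free-choosable, then G is (a,b,c)-free-choosable. -/
open SimpleGraph Finset

lemma glue_aux {V : Type*} (G : SimpleGraph V) (a b c : ℕ)
    (x : V) (A B : Set V) (hUnion : A ∪ B = Set.univ) (hInter : A ∩ B = {x})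
    (hNoEdge : ∀ u ∈ A, ∀ v ∈ B, u ≠ x → v ≠ x → ¬ G.Adj u v)
    (hA : FreeChoosable (G.induce A) a b c) (hB : FreeChoosable (G.induce B) a b c)
    (L : V → Finset ℕ) (hL : ∀ v, (L v).card = a)
    (hsep : ∀ u v, G.Adj u v → (L u ∩ L v).card ≤ c)
    (v₀ : V) (hv₀ : v₀ ∈ A) (C : Finset ℕ) (hC : C ⊆ L v₀) (hCb : C.card = b) :
    ∃ φ, IsLbColoring G L b φ ∧ φ v₀ = C := by
  classical
  have hx : x ∈ A ∩ B := hInter.symm.subset rfl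
  have hxA : x ∈ A := hx.1
  have hxB : x ∈ B := hx.2
  have memB : ∀ v, v ∉ A → v ∈ B := by
    intro v hv
    have : v ∈ A ∪ B := hUnion.symm ▸ Set.mem_univ v
    exact this.resolve_left hv
  have hadjA : ∀ (u v : A), (G.induce A).Adj u v ↔ G.Adj u v := by
    intro u v; simp
  have hadjB : ∀ (u v : B), (G.induce B).Adj u v ↔ G.Adj u v := by
    intro u v; simp
  obtain ⟨φA, hφA, hφAv₀⟩ := hA (fun v => L v) (fun v => hL v)
    (fun u v h => hsep u v ((hadjA u v).1 h)) ⟨v₀, hv₀⟩ C hC hCb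
  obtain ⟨φB, hφB, hφBx⟩ := hB (fun v => L v) (fun v => hL v)
    (fun u v h => hsep u v ((hadjB u v).1 h)) ⟨x, hxB⟩ (φA ⟨x, hxA⟩)
    (hφA.1 ⟨x, hxA⟩).1 (hφA.1 ⟨x, hxA⟩).2
  refine ⟨fun v => if h : v ∈ A then φA ⟨v, h⟩ else φB ⟨v, memB v h⟩, ⟨?_, ?_⟩, ?_⟩
  · intro v
    by_cases h : v ∈ A
    · simp only [dif_pos h]; exact hφA.1 ⟨v, h⟩
    · simp only [dif_neg h]; exact hφB.1 ⟨v, memB v h⟩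
  · -- agreement lemma
    have hBagree : ∀ (v : V) (h : v ∈ B),
        (if h' : v ∈ A then φA ⟨v, h'⟩ else φB ⟨v, memB v h'⟩) = φB ⟨v, h⟩ := by
      intro v h
      by_cases h' : v ∈ A
      · have hvx : v = x := hInter.subset ⟨h', h⟩
        subst hvx
        simp only [dif_pos h']
        exact hφBx.symm
      · simp only [dif_neg h']
    intro u v hadj
    by_cases hu : u ∈ A
    · by_cases hv : v ∈ A
      · simp only [dif_pos hu, dif_pos hv]
        exact hφA.2 ⟨u, hu⟩ ⟨v, hv⟩ ((hadjA _ _).2 hadj)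
      · have hvB : v ∈ B := memB v hv
        have hvx : v ≠ x := fun e => hv (e ▸ hxA)
        by_cases hux : u = x
        · beta_reduce
          rw [hBagree u (hux ▸ hxB), hBagree v hvB]
          exact hφB.2 _ _ ((hadjB _ _).2 hadj)
        · exact absurd hadj (hNoEdge u hu v hvB hux hvx)
    · have huB : u ∈ B := memB u hu
      have hux : u ≠ x := fun e => hu (e ▸ hxA)
      by_cases hv : v ∈ A
      · by_cases hvx : v = x
        · beta_reduce
          rw [hBagree u huB, hBagree v (hvx ▸ hxB)]
          exact hφB.2 _ _ ((hadjB _ _).2 hadj)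
        · exact absurd hadj fun h => hNoEdge v hv u huB hvx hux h.symm
      · beta_reduce
        rw [hBagree u huB, hBagree v (memB v hv)]
        exact hφB.2 _ _ ((hadjB _ _).2 hadj)
  · simp only [dif_pos hv₀]; exact hφAv₀

theorem freeChoosable_of_cut_vertex {V : Type*} (G : SimpleGraph V) (a b c : ℕ)
    (x : V) (A B : Set V) (hUnion : A ∪ B = Set.univ) (hInter : A ∩ B = {x})
    (hNoEdge : ∀ u ∈ A, ∀ v ∈ B, u ≠ x → v ≠ x → ¬ G.Adj u v)
    (hA : FreeChoosable (G.induce A) a b c) (hB : FreeChoosable (G.induce B) a b c) :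
    FreeChoosable G a b c := by
  intro L hL hsep v₀ C hC hCb
  have hv₀ : v₀ ∈ A ∪ B := hUnion.symm ▸ Set.mem_univ v₀
  rcases hv₀ with h | h
  · exact glue_aux G a b c x A B hUnion hInter hNoEdge hA hB L hL hsep v₀ h C hC hCb
  · exact glue_aux G a b c x B A (Set.union_comm A B ▸ hUnion)
      (Set.inter_comm A B ▸ hInter)
      (fun u hu v hv hux hvx hadj => hNoEdge v hv u hu hvx hux hadj.symm)
      hB hA L hL hsep v₀ h C hC hCb
end
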